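/- arXiv:2003.01439 — 12 statements merged into one kernel-verified Lean document; each statement's English description precedes it below -/
import Mathlib

section
/- Let β : ℕ → ℕ → ℝ be such that β j j = 0 for every j ∈ ℕ. Then there exists a family of real numbers α : ℕ → ℝ satisfying α k ≤ α j + β k j for all j, k ∈ ℕ if and only if for every m ≥ 1 and every finite sequence of indices i_1, …, i_m ∈ ℕ one has β i_1 i_2 + β i_2 i_3 + ⋯ + β i_{m-1} i_m + β i_m i_1 ≥ 0. -/
/-- Lemma 2.2 of the paper (existence part): the system of inequalities
`α k ≤ α j + β k j` has a solution iff all cyclic sums of `β` are nonnegative. -/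
theorem stmt_0 (β : ℕ → ℕ → ℝ) (hβ : ∀ j, β j j = 0) :
    (∃ α : ℕ → ℝ, ∀ j k : ℕ, α k ≤ α j + β k j) ↔
    (∀ m : ℕ, 1 ≤ m → ∀ i : ℕ → ℕ,
      0 ≤ ∑ r ∈ Finset.range m, β (i r) (i ((r + 1) % m))) := by
  constructor
  · rintro ⟨α, hα⟩ m hm i
    obtain ⟨n, rfl⟩ : ∃ n, m = n + 1 := ⟨m - 1, by omega⟩
    have h1 : ∑ r ∈ Finset.range (n+1), α (i ((r+1) % (n+1)))
        = ∑ r ∈ Finset.range (n+1), α (i r) := by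
      rw [← Fin.sum_univ_eq_sum_range (fun r => α (i ((r+1) % (n+1)))),
          ← Fin.sum_univ_eq_sum_range (fun r => α (i r))]
      rw [← Equiv.sum_comp (finRotate (n+1)) (fun r : Fin (n+1) => α (i r.val))]
      refine Finset.sum_congr rfl fun r _ => ?_
      congr 1
      simp [finRotate_succ_apply, Fin.add_def, Nat.mod_add_mod]
    have h2 : ∀ r ∈ Finset.range (n+1),
        α (i r) - α (i ((r+1) % (n+1))) ≤ β (i r) (i ((r+1) % (n+1))) := by
      intro r _
      have := hα (i ((r+1) % (n+1))) (i r)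
      linarith
    have h3 := Finset.sum_le_sum h2
    rw [Finset.sum_sub_distrib, h1] at h3
    linarith
  · intro hcyc
    set S : ℕ → Set ℝ := fun k => { s | ∃ n : ℕ, ∃ p : ℕ → ℕ, p 0 = 0 ∧ p n = k ∧
      s = ∑ t ∈ Finset.range n, β (p (t+1)) (p t) } with hS
    have hne : ∀ k, (S k).Nonempty := by
      intro k
      exact ⟨β k 0, 1, fun t => if t = 0 then 0 else k, by simp, by simp, by simp⟩
    have hlb : ∀ k, ∀ s ∈ S k, -β 0 k ≤ s := by
      rintro k s ⟨n, p, hp0, hpn, rfl⟩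
      have h := hcyc (n+1) (by omega) (fun r => p ((n + 1 - r) % (n+1)))
      rw [Finset.sum_range_succ'] at h
      have e0 : β (p ((n + 1 - 0) % (n+1))) (p ((n + 1 - ((0+1) % (n+1))) % (n+1)))
          = β 0 k := by
        rcases Nat.eq_zero_or_pos n with hn | hn
        · subst hn; simp_all
        · have h1 : (n + 1) % (n+1) = 0 := Nat.mod_self _
          have h2 : (1 : ℕ) % (n+1) = 1 := Nat.mod_eq_of_lt (by omega)
          have h3 : (n + 1 - 1) % (n+1) = n := by
            rw [Nat.mod_eq_of_lt] <;> omega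
          simp only [Nat.sub_zero, h1, h2, h3, hp0, hpn]
      have e1 : ∑ r ∈ Finset.range n,
          β (p ((n + 1 - (r+1)) % (n+1))) (p ((n + 1 - ((r+1+1) % (n+1))) % (n+1)))
          = ∑ t ∈ Finset.range n, β (p (t+1)) (p t) := by
        rw [← Finset.sum_range_reflect (fun t => β (p (t+1)) (p t)) n]
        refine Finset.sum_congr rfl fun r hr => ?_
        rw [Finset.mem_range] at hr
        have ha : (n + 1 - (r+1)) % (n+1) = n - r := by
          rw [Nat.mod_eq_of_lt] <;> omega
        rcases Nat.lt_or_ge (r+1) n with hrn | hrn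
        · have hb : (r+1+1) % (n+1) = r + 2 := Nat.mod_eq_of_lt (by omega)
          have hc : (n + 1 - (r+2)) % (n+1) = n - 1 - r := by
            rw [Nat.mod_eq_of_lt] <;> omega
          have hd : n - 1 - r + 1 = n - r := by omega
          rw [ha, hb, hc, hd]
        · have hr1 : r + 1 = n := by omega
          have hb : (r+1+1) % (n+1) = 0 := by rw [hr1]; exact Nat.mod_self _
          have hc : (n + 1 - 0) % (n+1) = 0 := by simp
          have hd : n - 1 - r = 0 := by omega
          have he : n - r = 1 := by omega
          rw [ha, hb, hc, hd, he, hp0]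
      simp only [e0, e1] at h
      linarith
    have hbdd : ∀ k, BddBelow (S k) := fun k => ⟨-β 0 k, fun s hs => hlb k s hs⟩
    refine ⟨fun k => sInf (S k), fun j k => ?_⟩
    have hstep : ∀ s ∈ S j, sInf (S k) - β k j ≤ s := by
      rintro s ⟨n, p, hp0, hpn, rfl⟩
      have hmem : (∑ t ∈ Finset.range n, β (p (t+1)) (p t)) + β k j ∈ S k := by
        refine ⟨n+1, fun t => if t ≤ n then p t else k, by simp [hp0], by simp, ?_⟩
        rw [Finset.sum_range_succ]
        congr 1
        · refine Finset.sum_congr rfl fun t ht => ?_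
          rw [Finset.mem_range] at ht
          simp only [if_pos (by omega : t + 1 ≤ n), if_pos (by omega : t ≤ n)]
        · simp [hpn]
      have := csInf_le (hbdd k) hmem
      linarith
    have := le_csInf (hne j) hstep
    linarith
end

section
/- Let β : ℕ → ℕ → ℝ satisfy β j j = 0 for all j ∈ ℕ and suppose all cyclic sums of β are nonnegative, i.e. β i_1 i_2 + β i_2 i_3 + ⋯ + β i_{m-1} i_m + β i_m i_1 ≥ 0 for every finite sequence i_1, …, i_m in ℕ. Then the following are equivalent: (a) any two families α, α' : ℕ → ℝ, each satisfying α k ≤ α j + β k j for all j, k (respectively α' k ≤ α' j + β k j for all j, k), differ by an additive constant, i.e. there is c ∈ ℝ with α j = α' j + c for all j; (b) for every pair of distinct j, k ∈ ℕ and every ε > 0 there is a finite sequence i_1, …, i_m in ℕ containing both j and k such that β i_1 i_2 + β i_2 i_3 + ⋯ + β i_{m-1} i_m + β i_m i_1 ≤ ε. -/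
open Finset

open Finset

private lemma mod_succ_eq (a m : ℕ) : (a % m + 1) % m = (a + 1) % m := by
  simp [Nat.add_mod]

/-- telescoping along a path -/
private lemma tele (β : ℕ → ℕ → ℝ) (α : ℕ → ℝ)
    (hα : ∀ j k : ℕ, α k ≤ α j + β k j) (p : ℕ → ℕ) :
    ∀ n, α (p 0) ≤ α (p n) + ∑ t ∈ range n, β (p t) (p (t+1)) := by
  intro n
  induction n with
  | zero => simp
  | succ n ih =>
    rw [Finset.sum_range_succ]
    have := hα (p (n+1)) (p n)
    linarith

private lemma rot_aux (g : ℕ → ℝ) (m : ℕ) (hg : g m = g 0) :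
    ∑ t ∈ range m, g (t+1) = ∑ t ∈ range m, g t := by
  have h1 := Finset.sum_range_succ' g m
  have h2 := Finset.sum_range_succ g m
  rw [hg] at h2
  linarith

private lemma rot (g : ℕ → ℝ) (m : ℕ) (hg : ∀ a, g a = g (a % m)) :
    ∀ r, ∑ t ∈ range m, g (r + t) = ∑ t ∈ range m, g t := by
  intro r
  induction r with
  | zero => simp
  | succ r ih =>
    have e1 : ∑ t ∈ range m, g (r + 1 + t) = ∑ t ∈ range m, (fun u => g (r + u)) (t + 1) := by
      apply Finset.sum_congr rfl; intro t _
      congr 1; omega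
    rw [e1, rot_aux (fun u => g (r + u)) m ?_, ih]
    show g (r + m) = g (r + 0)
    rw [hg (r + m), hg (r + 0), Nat.add_mod_right]
    norm_num
private lemma cycle_bound (β : ℕ → ℕ → ℝ) (α α' : ℕ → ℝ)
    (hα : ∀ j k : ℕ, α k ≤ α j + β k j) (hα' : ∀ j k : ℕ, α' k ≤ α' j + β k j)
    (m : ℕ) (hm : 1 ≤ m) (i : ℕ → ℕ) (r s : ℕ) (hr : r < m) (hs : s < m) :
    (α (i r) - α (i s)) + (α' (i s) - α' (i r)) ≤
      ∑ t ∈ range m, β (i t) (i ((t + 1) % m)) := by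
  set g : ℕ → ℝ := fun u => β (i (u % m)) (i ((u + 1) % m)) with hgdef
  have hgmod : ∀ a, g a = g (a % m) := by
    intro a
    simp only [hgdef]
    rw [Nat.mod_mod_of_dvd a dvd_rfl, mod_succ_eq]
  set p : ℕ → ℕ := fun t => i ((r + t) % m) with hpdef
  have hterm : ∀ t, β (p t) (p (t + 1)) = g (r + t) := by
    intro t
    simp only [hpdef, hgdef]
    congr 2
  have hcycsum : ∑ t ∈ range m, β (i t) (i ((t + 1) % m)) = ∑ t ∈ range m, g t := by
    apply Finset.sum_congr rfl; intro t ht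
    rw [Finset.mem_range] at ht
    simp only [hgdef]
    rw [Nat.mod_eq_of_lt ht]
  have hpsum : ∑ t ∈ range m, β (p t) (p (t + 1)) = ∑ t ∈ range m, g t := by
    rw [Finset.sum_congr rfl (fun t _ => hterm t)]
    exact rot g m hgmod r
  have hp0 : p 0 = i r := by simp only [hpdef]; rw [Nat.add_zero, Nat.mod_eq_of_lt hr]
  have hpm : p m = i r := by
    simp only [hpdef]; rw [Nat.add_mod_right, Nat.mod_eq_of_lt hr]
  set t0 : ℕ := if r ≤ s then s - r else s + m - r with ht0def
  have ht0m : t0 ≤ m := by simp only [ht0def]; split <;> omega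
  have hpt0 : p t0 = i s := by
    simp only [hpdef, ht0def]
    split
    · have : r + (s - r) = s := by omega
      rw [this, Nat.mod_eq_of_lt hs]
    · have : r + (s + m - r) = s + m := by omega
      rw [this, Nat.add_mod_right, Nat.mod_eq_of_lt hs]
  have hsplit : ∑ t ∈ range t0, β (p t) (p (t + 1)) + ∑ t ∈ Ico t0 m, β (p t) (p (t + 1))
      = ∑ t ∈ range m, β (p t) (p (t + 1)) :=
    Finset.sum_range_add_sum_Ico _ ht0m
  have h1 : α (i r) - α (i s) ≤ ∑ t ∈ range t0, β (p t) (p (t + 1)) := by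
    have := tele β α hα p t0
    rw [hp0, hpt0] at this
    linarith
  have h2 : α' (i s) - α' (i r) ≤ ∑ t ∈ Ico t0 m, β (p t) (p (t + 1)) := by
    have := tele β α' hα' (fun t => p (t0 + t)) (m - t0)
    have e0 : t0 + 0 = t0 := rfl
    have em : t0 + (m - t0) = m := by omega
    rw [e0, em, hpt0, hpm] at this
    have esum : ∑ t ∈ range (m - t0), β (p (t0 + t)) (p (t0 + (t + 1)))
        = ∑ t ∈ Ico t0 m, β (p t) (p (t + 1)) := by
      rw [Finset.sum_Ico_eq_sum_range]
      rfl
    rw [esum] at this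
    linarith [this]
  rw [hcycsum, ← hpsum, ← hsplit]
  linarith

private def pset (β : ℕ → ℕ → ℝ) (x y : ℕ) : Set ℝ :=
  {s | ∃ n, ∃ p : ℕ → ℕ, p 0 = x ∧ p n = y ∧ s = ∑ t ∈ Finset.range n, β (p t) (p (t+1))}

private lemma pset_nonempty (β : ℕ → ℕ → ℝ) (x y : ℕ) : (pset β x y).Nonempty := by
  refine ⟨β x y, 1, fun t => if t = 0 then x else y, by simp, by simp, ?_⟩
  simp [Finset.sum_range_one]

private lemma pset_bdd (β : ℕ → ℕ → ℝ)
    (hcyc : ∀ m : ℕ, 1 ≤ m → ∀ i : ℕ → ℕ,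
      0 ≤ ∑ r ∈ Finset.range m, β (i r) (i ((r + 1) % m)))
    (x y : ℕ) : BddBelow (pset β x y) := by
  refine ⟨-β y x, ?_⟩
  rintro s ⟨n, p, h0, hn, hs⟩
  have h := hcyc (n + 1) (by omega) p
  rw [Finset.sum_range_succ] at h
  have e1 : ∑ r ∈ range n, β (p r) (p ((r + 1) % (n + 1)))
      = ∑ r ∈ range n, β (p r) (p (r + 1)) := by
    apply Finset.sum_congr rfl; intro r hr
    rw [Finset.mem_range] at hr
    rw [Nat.mod_eq_of_lt (by omega)]
  rw [e1, Nat.mod_self, h0, hn] at h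
  rw [hs]
  linarith

private noncomputable def gam (β : ℕ → ℕ → ℝ) (x y : ℕ) : ℝ := sInf (pset β x y)

private lemma gam_le (β : ℕ → ℕ → ℝ)
    (hcyc : ∀ m : ℕ, 1 ≤ m → ∀ i : ℕ → ℕ,
      0 ≤ ∑ r ∈ Finset.range m, β (i r) (i ((r + 1) % m)))
    {x y : ℕ} {s : ℝ} (hs : s ∈ pset β x y) : gam β x y ≤ s :=
  csInf_le (pset_bdd β hcyc x y) hs

private lemma gam_self (β : ℕ → ℕ → ℝ)
    (hcyc : ∀ m : ℕ, 1 ≤ m → ∀ i : ℕ → ℕ,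
      0 ≤ ∑ r ∈ Finset.range m, β (i r) (i ((r + 1) % m)))
    (j : ℕ) : gam β j j ≤ 0 :=
  gam_le β hcyc ⟨0, fun _ => j, rfl, rfl, by simp⟩

private lemma gam_prepend (β : ℕ → ℕ → ℝ)
    (hcyc : ∀ m : ℕ, 1 ≤ m → ∀ i : ℕ → ℕ,
      0 ≤ ∑ r ∈ Finset.range m, β (i r) (i ((r + 1) % m)))
    (k x b : ℕ) : gam β k b ≤ β k x + gam β x b := by
  have key : ∀ s ∈ pset β x b, gam β k b ≤ β k x + s := by
    rintro s ⟨n, p, h0, hn, hs⟩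
    apply gam_le β hcyc
    refine ⟨n + 1, fun t => if t = 0 then k else p (t - 1), by simp, by simp [hn], ?_⟩
    rw [hs, Finset.sum_range_succ']
    simp only [Nat.succ_ne_zero, if_false, if_pos rfl, Nat.add_sub_cancel, Nat.add_eq_zero,
      and_false, one_ne_zero, reduceIte, h0]
    ring
  have h2 : gam β k b - β k x ≤ gam β x b :=
    le_csInf (pset_nonempty β x b) (fun s hs => by linarith [key s hs])
  linarith

private lemma gam_append (β : ℕ → ℕ → ℝ)
    (hcyc : ∀ m : ℕ, 1 ≤ m → ∀ i : ℕ → ℕ,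
      0 ≤ ∑ r ∈ Finset.range m, β (i r) (i ((r + 1) % m)))
    (b k x : ℕ) : gam β b x ≤ gam β b k + β k x := by
  have key : ∀ s ∈ pset β b k, gam β b x ≤ s + β k x := by
    rintro s ⟨n, p, h0, hn, hs⟩
    apply gam_le β hcyc
    refine ⟨n + 1, fun t => if t ≤ n then p t else x, by simp [h0], by simp, ?_⟩
    rw [Finset.sum_range_succ]
    have e : ∀ t ∈ range n, β (if t ≤ n then p t else x) (if t + 1 ≤ n then p (t+1) else x)
        = β (p t) (p (t+1)) := by
      intro t ht
      rw [Finset.mem_range] at ht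
      rcases Nat.lt_or_ge (t+1) n with h | h
      · rw [if_pos (by omega), if_pos (by omega)]
      · have : t + 1 = n := by omega
        rw [if_pos (by omega), if_pos (by omega)]
    rw [Finset.sum_congr rfl e, hs]
    simp [hn]
  have h2 : gam β b x - β k x ≤ gam β b k :=
    le_csInf (pset_nonempty β b k) (fun s hs => by linarith [key s hs])
  linarith

private lemma concat_cycle (β : ℕ → ℕ → ℝ) (n1 n2 : ℕ) (h1 : 1 ≤ n1) (h2 : 1 ≤ n2)
    (p1 p2 : ℕ → ℕ) (he1 : p1 n1 = p2 0) (he2 : p2 n2 = p1 0) :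
    ∑ t ∈ range (n1 + n2),
        β ((fun u => if u < n1 then p1 u else p2 (u - n1)) t)
          ((fun u => if u < n1 then p1 u else p2 (u - n1)) ((t + 1) % (n1 + n2)))
      = ∑ t ∈ range n1, β (p1 t) (p1 (t+1)) + ∑ t ∈ range n2, β (p2 t) (p2 (t+1)) := by
  set i : ℕ → ℕ := fun u => if u < n1 then p1 u else p2 (u - n1) with hidef
  rw [← Finset.sum_range_add_sum_Ico (fun t => β (i t) (i ((t + 1) % (n1 + n2))))
    (show n1 ≤ n1 + n2 by omega)]
  congr 1
  · apply Finset.sum_congr rfl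
    intro t ht
    rw [Finset.mem_range] at ht
    have hit : i t = p1 t := if_pos ht
    have hmod : (t + 1) % (n1 + n2) = t + 1 := Nat.mod_eq_of_lt (by omega)
    rw [hit, hmod]
    rcases Nat.lt_or_ge (t + 1) n1 with h | h
    · rw [show i (t+1) = p1 (t+1) from if_pos h]
    · have ht1 : t + 1 = n1 := by omega
      have : i (t + 1) = p2 (t + 1 - n1) := if_neg (by omega)
      rw [this, ht1, Nat.sub_self, ← he1]
  · rw [Finset.sum_Ico_eq_sum_range, show n1 + n2 - n1 = n2 by omega]
    apply Finset.sum_congr rfl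
    intro t ht
    rw [Finset.mem_range] at ht
    have hit : i (n1 + t) = p2 t := by
      rw [show i (n1 + t) = p2 (n1 + t - n1) from if_neg (by omega)]
      congr 1; omega
    rw [hit]
    rcases Nat.lt_or_ge (t + 1) n2 with h | h
    · have hmod : (n1 + t + 1) % (n1 + n2) = n1 + t + 1 := Nat.mod_eq_of_lt (by omega)
      rw [hmod, show i (n1 + t + 1) = p2 (n1 + t + 1 - n1) from if_neg (by omega)]
      congr 2; omega
    · have ht1 : t + 1 = n2 := by omega
      have hmod : (n1 + t + 1) % (n1 + n2) = 0 := by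
        rw [show n1 + t + 1 = n1 + n2 by omega, Nat.mod_self]
      rw [hmod, show i 0 = p1 0 from if_pos (by omega), ← he2, ht1]

/-- Lemma 2.2 of the paper (uniqueness part): under nonnegativity of all cyclic sums,
solutions of `α k ≤ α j + β k j` are unique up to an additive constant iff every pair of
distinct indices lies on a cycle of arbitrarily small sum. -/
theorem stmt_1 (β : ℕ → ℕ → ℝ) (hβ : ∀ j, β j j = 0)
    (hcyc : ∀ m : ℕ, 1 ≤ m → ∀ i : ℕ → ℕ,
      0 ≤ ∑ r ∈ Finset.range m, β (i r) (i ((r + 1) % m))) :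
    (∀ α α' : ℕ → ℝ, (∀ j k : ℕ, α k ≤ α j + β k j) →
        (∀ j k : ℕ, α' k ≤ α' j + β k j) →
        ∃ c : ℝ, ∀ j : ℕ, α j = α' j + c) ↔
    (∀ j k : ℕ, j ≠ k → ∀ ε : ℝ, 0 < ε →
      ∃ (m : ℕ) (i : ℕ → ℕ), 1 ≤ m ∧ (∃ r < m, i r = j) ∧ (∃ r < m, i r = k) ∧
        ∑ r ∈ Finset.range m, β (i r) (i ((r + 1) % m)) ≤ ε) := by
  constructor
  · -- uniqueness → small cycles through every pair
    intro huniq j k hjk ε hε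
    have hsolα : ∀ j' k' : ℕ, gam β k' j ≤ gam β j' j + β k' j' := fun j' k' => by
      have := gam_prepend β hcyc k' j' j; linarith
    have hsolα' : ∀ j' k' : ℕ, -gam β j k' ≤ -gam β j j' + β k' j' := fun j' k' => by
      have := gam_append β hcyc j k' j'; linarith
    obtain ⟨c, hc⟩ := huniq (fun x => gam β x j) (fun x => -gam β j x) hsolα hsolα'
    have hcj := hc j
    have hck := hc k
    have hjj := gam_self β hcyc j
    have hsum : gam β k j + gam β j k ≤ 0 := by linarith
    obtain ⟨s1, hs1mem, hs1⟩ := Real.lt_sInf_add_pos (pset_nonempty β k j) (half_pos hε)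
    obtain ⟨s2, hs2mem, hs2⟩ := Real.lt_sInf_add_pos (pset_nonempty β j k) (half_pos hε)
    obtain ⟨n1, p1, hp10, hp1n, hs1e⟩ := hs1mem
    obtain ⟨n2, p2, hp20, hp2n, hs2e⟩ := hs2mem
    have hn1 : 1 ≤ n1 := by
      by_contra hcon
      have hz : n1 = 0 := by omega
      subst hz
      apply hjk
      rw [← hp1n, hp10]
    have hn2 : 1 ≤ n2 := by
      by_contra hcon
      have hz : n2 = 0 := by omega
      subst hz
      apply hjk
      rw [← hp20, hp2n]
    refine ⟨n1 + n2, fun u => if u < n1 then p1 u else p2 (u - n1), by omega,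
      ⟨n1, by omega, ?_⟩, ⟨0, by omega, ?_⟩, ?_⟩
    · simp [hp20]
    · simp [show 0 < n1 from hn1, hp10]
    · rw [concat_cycle β n1 n2 hn1 hn2 p1 p2 (by rw [hp1n, hp20]) (by rw [hp2n, hp10]),
        ← hs1e, ← hs2e]
      have e1 : gam β k j = sInf (pset β k j) := rfl
      have e2 : gam β j k = sInf (pset β j k) := rfl
      linarith
  · -- small cycles → uniqueness up to constant
    intro hb α α' hα hα'
    refine ⟨α 0 - α' 0, fun j => ?_⟩
    rcases eq_or_ne j 0 with h | h
    · subst h; ring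
    have key : ∀ ε : ℝ, 0 < ε →
        (α j - α' j) - (α 0 - α' 0) ≤ ε ∧ (α 0 - α' 0) - (α j - α' j) ≤ ε := by
      intro ε hε
      obtain ⟨m, i, hm, ⟨r, hr, hrj⟩, ⟨s, hs, hs0⟩, hsum⟩ := hb j 0 h ε hε
      have h1 := cycle_bound β α α' hα hα' m hm i r s hr hs
      have h2 := cycle_bound β α α' hα hα' m hm i s r hs hr
      rw [hrj, hs0] at h1 h2
      constructor <;> linarith
    have hle : (α j - α' j) - (α 0 - α' 0) ≤ 0 :=
      le_of_forall_pos_le_add (fun ε hε => by linarith [(key ε hε).1])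
    have hge : (α 0 - α' 0) - (α j - α' j) ≤ 0 :=
      le_of_forall_pos_le_add (fun ε hε => by linarith [(key ε hε).2])
    linarith
end

section
/- Let n ∈ ℕ and let β : {1,…,n} → {1,…,n} → ℝ be such that β j j = 0 for every j. Then there exist real numbers α_1, …, α_n satisfying α k ≤ α j + β k j for all j, k ∈ {1,…,n} if and only if for every finite sequence of indices i_1, …, i_m ∈ {1,…,n} (repetitions allowed) one has β i_1 i_2 + β i_2 i_3 + ⋯ + β i_{m-1} i_m + β i_m i_1 ≥ 0. -/
/-!
Necessity is telescoping: summing `α (i r) ≤ α (i (r+1)) + β (i r) (i (r+1))` around a cycle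
gives `0 ≤` the cyclic sum. For sufficiency, read `β k j` as the length of an edge `k → j` and
let `α k` be the infimum of the lengths of all finite walks starting at `k`. Prepending the edge
`k → j` to a walk from `j` gives `α k ≤ β k j + α j`. The infimum is finite because a walk longer
than `n` revisits a vertex, and cutting out the closed subwalk, whose length is a cyclic sum, does
not increase the length; so every walk is at least as long as some walk with at most `n` edges.
-/

open Finset

variable {ι : Type*}

def CyclicSumsNonneg (β : ι → ι → ℝ) : Prop :=
  ∀ m : ℕ, 1 ≤ m → ∀ i : ℕ → ι, 0 ≤ ∑ r ∈ range m, β (i r) (i ((r + 1) % m))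

def walkWeight (β : ι → ι → ℝ) (v : ℕ → ι) (m : ℕ) : ℝ :=
  ∑ r ∈ range m, β (v r) (v (r + 1))

theorem sum_range_comp_succ_mod {M : Type*} [AddCommMonoid M] (f : ℕ → M) (m : ℕ) :
    ∑ r ∈ range m, f ((r + 1) % m) = ∑ r ∈ range m, f r := by
  rcases m with _ | t
  · rfl
  rw [sum_range_succ, sum_range_succ' f, Nat.mod_self]
  congr 1
  exact sum_congr rfl fun r hr => by rw [Nat.mod_eq_of_lt (by simp at hr; omega)]

theorem cyclicSumsNonneg_of_potential {β : ι → ι → ℝ} {α : ι → ℝ}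
    (hα : ∀ j k, α k ≤ α j + β k j) : CyclicSumsNonneg β := by
  intro m _ i
  calc (0 : ℝ) = ∑ r ∈ range m, (α (i r) - α (i ((r + 1) % m))) := by
        rw [sum_sub_distrib, sum_range_comp_succ_mod (fun r => α (i r)), sub_self]
    _ ≤ _ := sum_le_sum fun r _ => by linarith [hα (i ((r + 1) % m)) (i r)]

section Walks

variable {β : ι → ι → ℝ}

theorem walkWeight_congr {v w : ℕ → ι} {m : ℕ} (h : ∀ r ≤ m, v r = w r) :
    walkWeight β v m = walkWeight β w m :=
  sum_congr rfl fun r hr => by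
    rw [mem_range] at hr
    rw [h r hr.le, h (r + 1) hr]

theorem walkWeight_add (v : ℕ → ι) (a c : ℕ) :
    walkWeight β v (a + c) = walkWeight β v a + walkWeight β (fun r => v (a + r)) c := by
  simp only [walkWeight, sum_range_add, add_assoc]

theorem walkWeight_cons (k : ι) (v : ℕ → ι) (m : ℕ) :
    walkWeight β (fun r => Nat.casesOn r k v) (m + 1) = β k (v 0) + walkWeight β v m := by
  rw [walkWeight, sum_range_succ', add_comm]
  rfl

theorem mul_le_walkWeight {c : ℝ} (hc : ∀ i j, c ≤ β i j) (v : ℕ → ι) (m : ℕ) :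
    m * c ≤ walkWeight β v m := by
  simpa [walkWeight] using card_nsmul_le_sum (range m) _ c fun r _ => hc (v r) (v (r + 1))

theorem walkWeight_cycle_nonneg (hβ : CyclicSumsNonneg β) {v : ℕ → ι} {a b : ℕ}
    (hab : a < b) (hv : v a = v b) : 0 ≤ walkWeight β (fun r => v (a + r)) (b - a) := by
  refine (hβ (b - a) (by omega) fun r => v (a + r)).trans_eq (sum_congr rfl fun r hr => ?_)
  rw [mem_range] at hr
  rcases (show r + 1 < b - a ∨ r + 1 = b - a by omega) with hlt | heq
  · rw [Nat.mod_eq_of_lt hlt]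
  · rw [heq, Nat.mod_self, add_zero, hv, ← heq]
    congr 2
    omega

/-- Cutting the closed subwalk `v a, …, v b` out of the walk `v 0, …, v m`. -/
theorem walkWeight_eraseCycle_le (hβ : CyclicSumsNonneg β) {v : ℕ → ι} {a b m : ℕ}
    (hab : a < b) (hbm : b ≤ m) (hv : v a = v b) :
    walkWeight β (fun r => if r ≤ a then v r else v (r + (b - a))) (m - (b - a))
      ≤ walkWeight β v m := by
  have hcut : walkWeight β (fun r => if r ≤ a then v r else v (r + (b - a))) (m - (b - a))
      = walkWeight β v a + walkWeight β (fun r => v (b + r)) (m - b) := by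
    rw [show m - (b - a) = a + (m - b) by omega, walkWeight_add]
    congr 1
    · exact walkWeight_congr fun r hr => if_pos hr
    · refine walkWeight_congr fun r _ => ?_
      rcases r with _ | r
      · simpa using hv
      · rw [if_neg (by omega)]
        congr 1
        omega
  have hsplit_b : walkWeight β v b
      = walkWeight β v a + walkWeight β (fun r => v (a + r)) (b - a) := by
    rw [← walkWeight_add, Nat.add_sub_cancel' hab.le]
  have hsplit_m : walkWeight β v m
      = walkWeight β v b + walkWeight β (fun r => v (b + r)) (m - b) := by
    rw [← walkWeight_add, Nat.add_sub_cancel' hbm]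
  linarith [walkWeight_cycle_nonneg hβ hab hv]

theorem exists_lt_le_apply_eq_of_card_lt [Fintype ι] (v : ℕ → ι) {m : ℕ}
    (hm : Fintype.card ι < m + 1) : ∃ a b, a < b ∧ b ≤ m ∧ v a = v b := by
  obtain ⟨a, b, hne, heq⟩ := Fintype.exists_ne_map_eq_of_card_lt (fun r : Fin (m + 1) => v r)
    (by simpa using hm)
  rcases lt_or_gt_of_ne hne with hlt | hlt
  · exact ⟨a, b, hlt, b.is_le, heq⟩
  · exact ⟨b, a, hlt, a.is_le, heq.symm⟩

theorem card_mul_le_walkWeight [Fintype ι] (hβ : CyclicSumsNonneg β) {c : ℝ} (hc0 : c ≤ 0)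
    (hc : ∀ i j, c ≤ β i j) (v : ℕ → ι) (m : ℕ) :
    Fintype.card ι * c ≤ walkWeight β v m := by
  induction m using Nat.strong_induction_on generalizing v with
  | _ m ih =>
    by_cases hm : m ≤ Fintype.card ι
    · exact (mul_le_mul_of_nonpos_right (by exact_mod_cast hm) hc0).trans
        (mul_le_walkWeight hc v m)
    obtain ⟨a, b, hab, hbm, hv⟩ := exists_lt_le_apply_eq_of_card_lt v (m := m) (by omega)
    exact (ih _ (by omega) _).trans (walkWeight_eraseCycle_le hβ hab hbm hv)

theorem exists_forall_le_walkWeight [Finite ι] (hβ : CyclicSumsNonneg β) :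
    ∃ C, ∀ v m, C ≤ walkWeight β v m := by
  have := Fintype.ofFinite ι
  obtain ⟨c, hc⟩ := (Set.finite_range (Function.uncurry β)).bddBelow
  exact ⟨Fintype.card ι * min c 0, card_mul_le_walkWeight hβ (min_le_right c 0)
    (fun i j => (min_le_left c 0).trans (hc ⟨(i, j), rfl⟩))⟩

end Walks

noncomputable def minWalkWeight (β : ι → ι → ℝ) (k : ι) : ℝ :=
  ⨅ p : {p : (ℕ → ι) × ℕ // p.1 0 = k}, walkWeight β p.1.1 p.1.2

theorem minWalkWeight_le_add [Finite ι] {β : ι → ι → ℝ} (hβ : CyclicSumsNonneg β) (j k : ι) :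
    minWalkWeight β k ≤ minWalkWeight β j + β k j := by
  obtain ⟨C, hC⟩ := exists_forall_le_walkWeight hβ
  have hbdd : BddBelow (Set.range fun p : {p : (ℕ → ι) × ℕ // p.1 0 = k} =>
      walkWeight β p.1.1 p.1.2) := ⟨C, by rintro _ ⟨p, rfl⟩; exact hC _ _⟩
  have : Nonempty {p : (ℕ → ι) × ℕ // p.1 0 = j} := ⟨⟨(fun _ => j, 0), rfl⟩⟩
  rw [← sub_le_iff_le_add, minWalkWeight]
  refine le_ciInf ?_
  rintro ⟨⟨v, m⟩, rfl⟩
  rw [sub_le_iff_le_add, add_comm, ← walkWeight_cons]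
  exact ciInf_le hbdd ⟨(fun r => Nat.casesOn r k v, m + 1), rfl⟩

theorem stmt_2_general (n : ℕ) (β : Fin n → Fin n → ℝ) :
    (∃ α : Fin n → ℝ, ∀ j k : Fin n, α k ≤ α j + β k j) ↔
    (∀ m : ℕ, 1 ≤ m → ∀ i : ℕ → Fin n,
      0 ≤ ∑ r ∈ Finset.range m, β (i r) (i ((r + 1) % m))) :=
  ⟨fun ⟨_, hα⟩ => cyclicSumsNonneg_of_potential hα,
    fun hβ => ⟨minWalkWeight β, minWalkWeight_le_add hβ⟩⟩

/-- Lemma 2.3 of the paper (existence part, finite index set): the system of inequalities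
`α k ≤ α j + β k j` on `{1,…,n}` has a solution iff all cyclic sums of `β` are nonnegative. -/
theorem stmt_2 (n : ℕ) (β : Fin n → Fin n → ℝ) (hβ : ∀ j, β j j = 0) :
    (∃ α : Fin n → ℝ, ∀ j k : Fin n, α k ≤ α j + β k j) ↔
    (∀ m : ℕ, 1 ≤ m → ∀ i : ℕ → Fin n,
      0 ≤ ∑ r ∈ Finset.range m, β (i r) (i ((r + 1) % m))) :=
  stmt_2_general n β
end

section
/- Let M be a metric space and let (x_n, y_n)_{n∈ℕ} be pairs of distinct points of M. The following are equivalent: (a) for every σ : ℕ → {−1, 1} there exists a 1-Lipschitz function f : M → ℝ with f(x_n) − f(y_n) = σ(n)·d(x_n, y_n) for every n ∈ ℕ; (b) for every choice of points u_k, v_k ∈ M (k ∈ ℕ) with {u_k, v_k} = {x_k, y_k} for every k, and for every finite sequence of indices i_1, …, i_m in ℕ, one has d(u_{i_1},v_{i_1}) + d(u_{i_2},v_{i_2}) + ⋯ + d(u_{i_m},v_{i_m}) ≤ d(u_{i_1},v_{i_2}) + d(u_{i_2},v_{i_3}) + ⋯ + d(u_{i_{m-1}},v_{i_m}) + d(u_{i_m},v_{i_1}).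 -/
/-!
Orient each pair so that it must be normed as `f u_n - f v_n = d(u_n, v_n)`. Condition (b) is then
the `d`-cyclical monotonicity of the pairs `(u_n, v_n)`, as in optimal transport for the cost `d`.
It is necessary because summing `f u - f v ≤ d(u, v)` around a cycle telescopes. It is sufficient
by Rockafellar's construction: fix a base point `p₀` and let `f p` be the infimum, over chains
`p₀ → u_{i_m} ⇝ v_{i_m} → u_{i_{m-1}} ⇝ ⋯ ⇝ v_{i_0} → p`, of the length of the jumps `→` minus the
lengths of the pairs `⇝`. Cyclical monotonicity keeps `f p ≥ -d(p, p₀)`, the triangle inequality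
makes `f` 1-Lipschitz, and extending a chain ending at `u_n` by the pair `n` gives
`f v_n ≤ f u_n - d(u_n, v_n)`.
-/

open Finset

lemma sum_range_succ_mod_succ {β : Type*} [AddCommMonoid β] (F : ℕ → ℕ → β) (m : ℕ) :
    ∑ r ∈ range (m + 1), F r ((r + 1) % (m + 1)) = ∑ r ∈ range m, F r (r + 1) + F m 0 := by
  rw [sum_range_succ, Nat.mod_self]
  congr 1
  exact sum_congr rfl fun r hr => by
    rw [Nat.mod_eq_of_lt (Nat.succ_lt_succ (mem_range.mp hr))]

section CyclicallyMonotone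

variable {M : Type*} [PseudoMetricSpace M]

def DistCyclicallyMonotone (u v : ℕ → M) : Prop :=
  ∀ m : ℕ, 1 ≤ m → ∀ i : ℕ → ℕ,
    ∑ r ∈ range m, dist (u (i r)) (v (i r)) ≤ ∑ r ∈ range m, dist (u (i r)) (v (i ((r + 1) % m)))

lemma distCyclicallyMonotone_of_lipschitzWith {u v : ℕ → M} {f : M → ℝ} (hf : LipschitzWith 1 f)
    (hfuv : ∀ n, f (u n) - f (v n) = dist (u n) (v n)) : DistCyclicallyMonotone u v := by
  rintro _ hm i
  obtain ⟨m, rfl⟩ := Nat.exists_eq_add_of_le' hm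
  have hshift : ∑ r ∈ range (m + 1), f (v (i ((r + 1) % (m + 1)))) =
      ∑ r ∈ range (m + 1), f (v (i r)) := by
    rw [sum_range_succ_mod_succ (fun _ s => f (v (i s))), sum_range_succ']
  calc ∑ r ∈ range (m + 1), dist (u (i r)) (v (i r))
      = ∑ r ∈ range (m + 1), (f (u (i r)) - f (v (i ((r + 1) % (m + 1))))) := by
        simp only [← hfuv, sum_sub_distrib, hshift]
    _ ≤ ∑ r ∈ range (m + 1), dist (u (i r)) (v (i ((r + 1) % (m + 1)))) := by
        gcongr with r
        simpa [sub_le_iff_le_add, add_comm] using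
          hf.le_add_mul (u (i r)) (v (i ((r + 1) % (m + 1))))

variable (u v : ℕ → M) (p₀ : M)

noncomputable def chainCost (m : ℕ) (i : ℕ → ℕ) (p : M) : ℝ :=
  dist p₀ (u (i m)) + ∑ r ∈ range m, dist (v (i (r + 1))) (u (i r)) + dist (v (i 0)) p
    - ∑ r ∈ range (m + 1), dist (u (i r)) (v (i r))

noncomputable def chainPotential (p : M) : ℝ :=
  ⨅ c : ℕ × (ℕ → ℕ), chainCost u v p₀ c.1 c.2 p

lemma chainCost_le_add_dist (m : ℕ) (i : ℕ → ℕ) (p q : M) :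
    chainCost u v p₀ m i p ≤ chainCost u v p₀ m i q + dist q p := by
  unfold chainCost
  linarith [dist_triangle (v (i 0)) q p]

lemma chainCost_cons (m n : ℕ) (i : ℕ → ℕ) (p : M) :
    chainCost u v p₀ (m + 1) (fun r => r.casesOn n i) p =
      chainCost u v p₀ m i (u n) - dist (u n) (v n) + dist (v n) p := by
  simp only [chainCost, sum_range_succ' _ m, sum_range_succ' _ (m + 1), Nat.rec_zero]
  ring

variable {u v}

lemma neg_dist_le_chainCost (h : DistCyclicallyMonotone u v) (m : ℕ) (i : ℕ → ℕ) (p : M) :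
    -dist p p₀ ≤ chainCost u v p₀ m i p := by
  have hcycle := h (m + 1) m.succ_pos i
  rw [sum_range_succ_mod_succ (fun r s => dist (u (i r)) (v (i s)))] at hcycle
  have hsum : ∑ r ∈ range m, dist (u (i r)) (v (i (r + 1))) =
      ∑ r ∈ range m, dist (v (i (r + 1))) (u (i r)) :=
    sum_congr rfl fun r _ => dist_comm _ _
  unfold chainCost
  linarith [dist_triangle4 (u (i m)) p₀ p (v (i 0)), dist_comm (u (i m)) p₀,
    dist_comm p (v (i 0)), dist_comm p₀ p]

lemma bddBelow_range_chainCost (h : DistCyclicallyMonotone u v) (p : M) :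
    BddBelow (Set.range fun c : ℕ × (ℕ → ℕ) => chainCost u v p₀ c.1 c.2 p) :=
  ⟨-dist p p₀, Set.forall_mem_range.mpr fun c => neg_dist_le_chainCost p₀ h c.1 c.2 p⟩

lemma chainPotential_le_chainCost (h : DistCyclicallyMonotone u v) (m : ℕ) (i : ℕ → ℕ) (p : M) :
    chainPotential u v p₀ p ≤ chainCost u v p₀ m i p :=
  ciInf_le (bddBelow_range_chainCost p₀ h p) (m, i)

lemma chainPotential_le_add_dist (h : DistCyclicallyMonotone u v) (p q : M) :
    chainPotential u v p₀ p ≤ chainPotential u v p₀ q + dist p q := by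
  rw [← sub_le_iff_le_add]
  refine le_ciInf fun c => ?_
  linarith [chainPotential_le_chainCost p₀ h c.1 c.2 p, chainCost_le_add_dist u v p₀ c.1 c.2 p q,
    dist_comm p q]

lemma lipschitzWith_chainPotential (h : DistCyclicallyMonotone u v) :
    LipschitzWith 1 (chainPotential u v p₀) :=
  LipschitzWith.of_le_add (chainPotential_le_add_dist p₀ h)

lemma chainPotential_sub_eq_dist (h : DistCyclicallyMonotone u v) (n : ℕ) :
    chainPotential u v p₀ (u n) - chainPotential u v p₀ (v n) = dist (u n) (v n) := by
  have hle := chainPotential_le_add_dist p₀ h (u n) (v n)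
  have hge : chainPotential u v p₀ (v n) + dist (u n) (v n) ≤ chainPotential u v p₀ (u n) := by
    refine le_ciInf fun c => ?_
    have hcons := chainPotential_le_chainCost p₀ h (c.1 + 1) (fun r => r.casesOn n c.2) (v n)
    rw [chainCost_cons, dist_self] at hcons
    linarith
  linarith

variable (u v)

theorem distCyclicallyMonotone_iff_exists_lipschitzWith :
    DistCyclicallyMonotone u v ↔
      ∃ f : M → ℝ, LipschitzWith 1 f ∧ ∀ n, f (u n) - f (v n) = dist (u n) (v n) :=
  ⟨fun h => ⟨chainPotential u v (u 0), lipschitzWith_chainPotential _ h,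
      chainPotential_sub_eq_dist _ h⟩,
    fun ⟨_, hf, hfuv⟩ => distCyclicallyMonotone_of_lipschitzWith hf hfuv⟩

end CyclicallyMonotone

theorem stmt_6_general {M : Type*} [MetricSpace M] (x y : ℕ → M) :
    (∀ σ : ℕ → ℝ, (∀ n, σ n = 1 ∨ σ n = -1) →
      ∃ f : M → ℝ, LipschitzWith 1 f ∧
        ∀ n : ℕ, f (x n) - f (y n) = σ n * dist (x n) (y n)) ↔
    (∀ u v : ℕ → M,
      (∀ k : ℕ, (u k = x k ∧ v k = y k) ∨ (u k = y k ∧ v k = x k)) →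
      ∀ m : ℕ, 1 ≤ m → ∀ i : ℕ → ℕ,
        ∑ r ∈ Finset.range m, dist (u (i r)) (v (i r)) ≤
          ∑ r ∈ Finset.range m, dist (u (i r)) (v (i ((r + 1) % m)))) := by
  classical
  constructor
  · intro ha u v huv
    obtain ⟨f, hf, hfσ⟩ := ha (fun n => if u n = x n ∧ v n = y n then 1 else -1)
      fun n => by split_ifs <;> simp
    refine (distCyclicallyMonotone_iff_exists_lipschitzWith u v).mpr ⟨f, hf, fun n => ?_⟩
    have hn := hfσ n
    by_cases hfwd : u n = x n ∧ v n = y n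
    · simpa [hfwd] using hn
    · obtain ⟨hu, hv⟩ := (huv n).resolve_left hfwd
      rw [if_neg hfwd] at hn
      rw [hu, hv, dist_comm]
      linarith
  · intro hb σ hσ
    let u : ℕ → M := fun n => if σ n = 1 then x n else y n
    let v : ℕ → M := fun n => if σ n = 1 then y n else x n
    obtain ⟨f, hf, hfuv⟩ := (distCyclicallyMonotone_iff_exists_lipschitzWith u v).mp
      (hb u v fun k => by by_cases hk : σ k = 1 <;> simp [u, v, hk])
    refine ⟨f, hf, fun n => ?_⟩
    have hn := hfuv n
    rcases hσ n with hs | hs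
    · simpa [u, v, hs] using hn
    · simp only [u, v, hs, show (-1 : ℝ) ≠ 1 by norm_num, if_false] at hn
      rw [hs, dist_comm]
      linarith

/-- Corollary 2.5 (ii)⇔(iii) of the paper: every sequence of signs can be simultaneously
normed by a single 1-Lipschitz real function iff every reordering of the pairs is
cyclically monotone. -/
theorem stmt_6 {M : Type*} [MetricSpace M] (x y : ℕ → M) (hxy : ∀ n : ℕ, x n ≠ y n) :
    (∀ σ : ℕ → ℝ, (∀ n, σ n = 1 ∨ σ n = -1) →
      ∃ f : M → ℝ, LipschitzWith 1 f ∧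
        ∀ n : ℕ, f (x n) - f (y n) = σ n * dist (x n) (y n)) ↔
    (∀ u v : ℕ → M,
      (∀ k : ℕ, (u k = x k ∧ v k = y k) ∨ (u k = y k ∧ v k = x k)) →
      ∀ m : ℕ, 1 ≤ m → ∀ i : ℕ → ℕ,
        ∑ r ∈ Finset.range m, dist (u (i r)) (v (i r)) ≤
          ∑ r ∈ Finset.range m, dist (u (i r)) (v (i ((r + 1) % m)))) :=
  stmt_6_general x y
end

section
/- Let M be a metric space with a distinguished point 0, let (x_n, y_n)_{n∈ℕ} be pairs of distinct points of M, and let f : M → ℝ be 1-Lipschitz with f(0) = 0 and f(x_n) − f(y_n) = d(x_n, y_n) for every n. Then f is the unique such function — i.e., every 1-Lipschitz g : M → ℝ with g(0) = 0 and g(x_n) − g(y_n) = d(x_n, y_n) for all n equals f — if and only if for every ε > 0 the following two conditions hold: (i) for every pair of distinct j, k ∈ ℕ there is a finite sequence i_1, …, i_m in ℕ containing both j and k such that d(x_{i_1},y_{i_1}) + d(x_{i_2},y_{i_2}) + ⋯ + d(x_{i_m},y_{i_m}) > d(x_{i_1},y_{i_2}) + d(x_{i_2},y_{i_3}) + ⋯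 + d(x_{i_m},y_{i_1}) − ε; (ii) for every x ∈ M there are points s, t ∈ {x_1, y_1, x_2, y_2, …} with d(s,x) + d(t,x) < d(s,t) + ε and f(t) − f(s) > d(t,s) − ε. -/
noncomputable def cc {M : Type*} [MetricSpace M] (x y : ℕ → M) (φ : M → ℝ) (n m : ℕ) : ℝ :=
  dist (x n) (y m) - (φ (x n) - φ (y m))

noncomputable def csum {M : Type*} [MetricSpace M] (x y : ℕ → M) (f : M → ℝ)
    (i : ℕ → ℕ) (L : ℕ) : ℝ :=
  ∑ t ∈ Finset.range L, cc x y f (i t) (i (t+1))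

theorem lip_sub {M : Type*} [MetricSpace M] {f : M → ℝ} (hf : LipschitzWith 1 f) (a b : M) :
    f a - f b ≤ dist a b := by
  have := hf.dist_le_mul a b
  rw [NNReal.coe_one, one_mul, Real.dist_eq] at this
  exact (abs_le.1 this).2

theorem lip_neg {M : Type*} [MetricSpace M] {f : M → ℝ} (hf : LipschitzWith 1 f) :
    LipschitzWith 1 (fun q => -f q) := by
  apply LipschitzWith.of_dist_le_mul
  intro a b
  have := hf.dist_le_mul a b
  rw [Real.dist_eq] at this ⊢
  rw [show -f a - -f b = -(f a - f b) by ring, abs_neg]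
  exact this

theorem cc_nonneg {M : Type*} [MetricSpace M] {x y : ℕ → M} {φ : M → ℝ}
    (hφ : LipschitzWith 1 φ) (n m : ℕ) : 0 ≤ cc x y φ n m :=
  sub_nonneg.2 (lip_sub hφ _ _)

theorem csum_nonneg {M : Type*} [MetricSpace M] {x y : ℕ → M} {f : M → ℝ}
    (hf : LipschitzWith 1 f) (i : ℕ → ℕ) (L : ℕ) : 0 ≤ csum x y f i L :=
  Finset.sum_nonneg fun t _ => cc_nonneg hf _ _

theorem my_sum_range_add (F : ℕ → ℝ) (A B : ℕ) :
    ∑ t ∈ Finset.range (A+B), F t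
      = (∑ t ∈ Finset.range A, F t) + ∑ t ∈ Finset.range B, F (A + t) := by
  induction B with
  | zero => simp
  | succ B ih =>
      rw [← Nat.add_assoc, Finset.sum_range_succ, Finset.sum_range_succ, ih]
      ring

theorem sum_cyc_reindex (m : ℕ) (hm : 0 < m) (F : ℕ → ℝ) :
    ∑ r ∈ Finset.range m, F ((r+1)%m) = ∑ r ∈ Finset.range m, F r := by
  obtain ⟨n, rfl⟩ : ∃ n, m = n + 1 := ⟨m - 1, by omega⟩
  rw [Finset.sum_range_succ, Finset.sum_range_succ' (fun r => F r) n, Nat.mod_self]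
  congr 1
  exact Finset.sum_congr rfl fun r hr => by
    rw [Nat.mod_eq_of_lt (by simp only [Finset.mem_range] at hr; omega)]

theorem cyc_identity {M : Type*} [MetricSpace M] (x y : ℕ → M) (φ : M → ℝ)
    (hφn : ∀ n, φ (x n) - φ (y n) = dist (x n) (y n)) (m : ℕ) (hm : 0 < m) (i : ℕ → ℕ) :
    ∑ r ∈ Finset.range m, cc x y φ (i r) (i ((r+1)%m)) =
      (∑ r ∈ Finset.range m, dist (x (i r)) (y (i ((r+1)%m)))) -
        ∑ r ∈ Finset.range m, dist (x (i r)) (y (i r)) := by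
  unfold cc
  rw [Finset.sum_sub_distrib, Finset.sum_sub_distrib]
  have h1 : ∑ r ∈ Finset.range m, φ (y (i ((r+1)%m))) = ∑ r ∈ Finset.range m, φ (y (i r)) :=
    sum_cyc_reindex m hm (fun r => φ (y (i r)))
  have h2 : ∑ r ∈ Finset.range m, (φ (x (i r)) - φ (y (i r)))
      = ∑ r ∈ Finset.range m, dist (x (i r)) (y (i r)) :=
    Finset.sum_congr rfl fun r _ => hφn (i r)
  rw [Finset.sum_sub_distrib] at h2
  linarith

/-- Master construction with explicit formula. -/
theorem master {M : Type*} [MetricSpace M] (z : M) (x y : ℕ → M) (f : M → ℝ)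
    (hfn : ∀ n, f (x n) - f (y n) = dist (x n) (y n))
    (u : ℕ → ℝ)
    (hu1 : ∀ n m, u n - u m ≤ cc x y f n m)
    (hu2x : ∀ n, u n ≤ dist (x n) z - f (x n))
    (hu2y : ∀ n, u n ≤ dist (y n) z - f (y n))
    (hu3x : ∀ n, -(dist (x n) z + f (x n)) ≤ u n)
    (hu3y : ∀ n, -(dist (y n) z + f (y n)) ≤ u n) :
    ∃ g : M → ℝ, LipschitzWith 1 g ∧ g z = 0 ∧
      (∀ n, g (x n) = f (x n) + u n) ∧ (∀ n, g (y n) = f (y n) + u n) ∧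
      (∀ q, g q = min (dist z q)
        (⨅ n, min (f (x n) + u n + dist (x n) q) (f (y n) + u n + dist (y n) q))) := by
  classical
  set T : ℕ → M → ℝ := fun n q =>
    min (f (x n) + u n + dist (x n) q) (f (y n) + u n + dist (y n) q) with hT
  set g : M → ℝ := fun q => min (dist z q) (⨅ n, T n q) with hg
  -- lower bound for T
  have hlb : ∀ n q, -dist z q ≤ T n q := by
    intro n q
    apply le_min
    · have h1 := hu3x n
      have h2 : dist (x n) z ≤ dist (x n) q + dist q z := dist_triangle _ _ _
      have := dist_comm z q
      nlinarith [dist_comm q z]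
    · have h1 := hu3y n
      have h2 : dist (y n) z ≤ dist (y n) q + dist q z := dist_triangle _ _ _
      nlinarith [dist_comm q z]
  have hbdd : ∀ q, BddBelow (Set.range fun n => T n q) := fun q =>
    ⟨-dist z q, by rintro _ ⟨n, rfl⟩; exact hlb n q⟩
  have hginf : ∀ q n, g q ≤ T n q := fun q n =>
    (min_le_right _ _).trans (ciInf_le (hbdd q) n)
  have hglb : ∀ q, -dist z q ≤ g q := fun q =>
    le_min (by linarith [dist_nonneg (x := z) (y := q)]) (le_ciInf fun n => hlb n q)
  -- values
  have hx : ∀ m, g (x m) = f (x m) + u m := by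
    intro m
    apply le_antisymm
    · calc g (x m) ≤ T m (x m) := hginf _ m
        _ ≤ f (x m) + u m + dist (x m) (x m) := min_le_left _ _
        _ = f (x m) + u m := by simp
    · apply le_min
      · have := hu2x m; rw [dist_comm]; linarith
      · apply le_ciInf
        intro n
        apply le_min
        · -- f (x m) + u m ≤ f (x n) + u n + dist (x n) (x m)
          have h1 := hu1 m n
          have h2 : dist (x m) (y n) ≤ dist (x m) (x n) + dist (x n) (y n) :=
            dist_triangle _ _ _
          have h3 := hfn n
          simp only [cc] at h1
          rw [dist_comm (x n) (x m)]
          linarith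
        · have h1 := hu1 m n
          simp only [cc] at h1
          rw [dist_comm (y n) (x m)]
          linarith
  have hy : ∀ m, g (y m) = f (y m) + u m := by
    intro m
    apply le_antisymm
    · calc g (y m) ≤ T m (y m) := hginf _ m
        _ ≤ f (y m) + u m + dist (y m) (y m) := min_le_right _ _
        _ = f (y m) + u m := by simp
    · apply le_min
      · have := hu2y m; rw [dist_comm]; linarith
      · apply le_ciInf
        intro n
        have h1 := hu1 m n
        simp only [cc] at h1
        have h3 := hfn n
        have h4 := hfn m
        apply le_min
        · have h2 : dist (x m) (y n) ≤ dist (x m) (y m) + dist (y m) (x n) + dist (x n) (y n) :=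
            (dist_triangle _ (y m) _).trans (by linarith [dist_triangle (y m) (x n) (y n)])
          rw [dist_comm (x n) (y m)]
          linarith
        · have h2 : dist (x m) (y n) ≤ dist (x m) (y m) + dist (y m) (y n) :=
            dist_triangle _ _ _
          rw [dist_comm (y n) (y m)]
          linarith
  -- g z = 0
  have hz : g z = 0 := by
    apply le_antisymm
    · exact (min_le_left _ _).trans_eq (by simp)
    · have := hglb z; simpa using this
  -- Lipschitz
  have hlip : ∀ q q', g q ≤ g q' + dist q q' := by
    intro q q'
    have h1 : g q - dist q q' ≤ dist z q' := by
      have : g q ≤ dist z q := min_le_left _ _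
      have h2 : dist z q ≤ dist z q' + dist q' q := dist_triangle _ _ _
      rw [dist_comm q' q] at h2
      linarith
    have h2 : ∀ n, g q - dist q q' ≤ T n q' := by
      intro n
      have h3 : g q ≤ T n q := hginf q n
      have h4 : T n q ≤ T n q' + dist q q' := by
        simp only [hT]
        rw [← min_add_add_right]
        refine min_le_min ?_ ?_
        · linarith [dist_triangle (x n) q' q, dist_comm q' q]
        · linarith [dist_triangle (y n) q' q, dist_comm q' q]
      linarith
    have : g q - dist q q' ≤ g q' := le_min h1 (le_ciInf h2)
    linarith
  refine ⟨g, ?_, hz, hx, hy, fun q => rfl⟩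
  apply LipschitzWith.of_dist_le_mul
  intro q q'
  rw [NNReal.coe_one, one_mul, Real.dist_eq, abs_sub_le_iff]
  constructor
  · linarith [hlip q q']
  · linarith [hlip q' q, dist_comm q q']


noncomputable def aa {M : Type*} [MetricSpace M] (z : M) (x y : ℕ → M) (f : M → ℝ) (n : ℕ) : ℝ :=
  min (dist (x n) z - f (x n)) (dist (y n) z - f (y n))

noncomputable def bb {M : Type*} [MetricSpace M] (z : M) (x y : ℕ → M) (f : M → ℝ) (n : ℕ) : ℝ :=
  min (dist (x n) z + f (x n)) (dist (y n) z + f (y n))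

theorem bridge {M : Type*} [MetricSpace M] (z : M) (x y : ℕ → M) (f : M → ℝ)
    (hfn : ∀ n, f (x n) - f (y n) = dist (x n) (y n)) (m m' : ℕ) :
    cc x y f m m' ≤ aa z x y f m + bb z x y f m' := by
  have h1 : dist (x m) (y m') ≤ dist (x m) z + dist z (y m') := dist_triangle _ _ _
  have h2 : dist z (y m') ≤ dist z (x m') + dist (x m') (y m') := dist_triangle _ _ _
  have h3 : dist (x m) (y m') ≤ dist (x m) (y m) + dist (y m) (y m') := dist_triangle _ _ _
  have h4 : dist (y m) (y m') ≤ dist (y m) z + dist z (y m') := dist_triangle _ _ _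
  have c1 : dist z (x m') = dist (x m') z := dist_comm _ _
  have c2 : dist z (y m') = dist (y m') z := dist_comm _ _
  have e1 := hfn m
  have e2 := hfn m'
  unfold cc aa bb
  rcases min_cases (dist (x m) z - f (x m)) (dist (y m) z - f (y m)) with ⟨hm, _⟩ | ⟨hm, _⟩ <;>
    rcases min_cases (dist (x m') z + f (x m')) (dist (y m') z + f (y m')) with
      ⟨hm', _⟩ | ⟨hm', _⟩ <;> rw [hm, hm'] <;> linarith

theorem key_chains {M : Type*} [MetricSpace M] (z : M) (x y : ℕ → M) (f : M → ℝ)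
    (hf : LipschitzWith 1 f) (hf0 : f z = 0)
    (hfn : ∀ n, f (x n) - f (y n) = dist (x n) (y n))
    (master : ∀ u : ℕ → ℝ, (∀ n m, u n - u m ≤ cc x y f n m) →
      (∀ n, u n ≤ dist (x n) z - f (x n)) → (∀ n, u n ≤ dist (y n) z - f (y n)) →
      (∀ n, -(dist (x n) z + f (x n)) ≤ u n) → (∀ n, -(dist (y n) z + f (y n)) ≤ u n) →
      ∀ n, u n = 0)
    {δ : ℝ} (hδ : 0 < δ) :
    (∀ j, ∃ (L : ℕ) (i : ℕ → ℕ), i 0 = j ∧ csum x y f i L + aa z x y f (i L) < δ) ∧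
    (∀ k, ∃ (L : ℕ) (i : ℕ → ℕ), i L = k ∧ bb z x y f (i 0) + csum x y f i L < δ) := by
  classical
  have hcnn : ∀ n m, 0 ≤ cc x y f n m := cc_nonneg hf
  have hsnn : ∀ i L, 0 ≤ csum x y f i L := fun i L =>
    Finset.sum_nonneg fun t _ => hcnn _ _
  have hfb : ∀ a : M, -dist a z ≤ f a := by
    intro a
    have := lip_sub hf z a
    rw [hf0, dist_comm] at this
    linarith
  have hfb' : ∀ a : M, f a ≤ dist a z := by
    intro a
    have := lip_sub hf a z
    rw [hf0] at this
    linarith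
  have haann : ∀ n, 0 ≤ aa z x y f n := fun n =>
    le_min (by linarith [hfb' (x n)]) (by linarith [hfb' (y n)])
  have hbbnn : ∀ n, 0 ≤ bb z x y f n := fun n =>
    le_min (by linarith [hfb (x n)]) (by linarith [hfb (y n)])
  set A : ℕ → Set ℝ := fun n =>
    {r | ∃ (L : ℕ) (i : ℕ → ℕ), i 0 = n ∧ r = csum x y f i L + aa z x y f (i L)} with hA
  set B : ℕ → Set ℝ := fun n =>
    {r | ∃ (L : ℕ) (i : ℕ → ℕ), i L = n ∧ r = bb z x y f (i 0) + csum x y f i L} with hB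
  have hAne : ∀ n, (A n).Nonempty := fun n =>
    ⟨aa z x y f n, 0, fun _ => n, rfl, by simp [csum]⟩
  have hBne : ∀ n, (B n).Nonempty := fun n =>
    ⟨bb z x y f n, 0, fun _ => n, rfl, by simp [csum]⟩
  have hAbdd : ∀ n, BddBelow (A n) := by
    rintro n
    refine ⟨0, ?_⟩
    rintro r ⟨L, i, -, rfl⟩
    have := hsnn i L
    have := haann (i L)
    linarith
  have hBbdd : ∀ n, BddBelow (B n) := by
    rintro n
    refine ⟨0, ?_⟩
    rintro r ⟨L, i, -, rfl⟩
    have := hsnn i L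
    have := hbbnn (i 0)
    linarith
  set u : ℕ → ℝ := fun n => sInf (A n) with hu
  set w : ℕ → ℝ := fun n => sInf (B n) with hw
  have hunn : ∀ n, 0 ≤ u n := fun n => le_csInf (hAne n)
    (by rintro r ⟨L, i, -, rfl⟩; have := hsnn i L; have := haann (i L); linarith)
  have hwnn : ∀ n, 0 ≤ w n := fun n => le_csInf (hBne n)
    (by rintro r ⟨L, i, -, rfl⟩; have := hsnn i L; have := hbbnn (i 0); linarith)
  have huaa : ∀ n, u n ≤ aa z x y f n := fun n =>
    csInf_le (hAbdd n) ⟨0, fun _ => n, rfl, by simp [csum]⟩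
  have hwbb : ∀ n, w n ≤ bb z x y f n := fun n =>
    csInf_le (hBbdd n) ⟨0, fun _ => n, rfl, by simp [csum]⟩
  -- prepend step for u
  have hu1 : ∀ n m, u n - u m ≤ cc x y f n m := by
    intro n m
    rw [sub_le_iff_le_add]
    have : u n ≤ cc x y f n m + sInf (A m) := by
      rw [← sub_le_iff_le_add']  -- u n - cc ≤ sInf (A m)
      apply le_csInf (hAne m)
      rintro r ⟨L, i, hi0, rfl⟩
      rw [sub_le_iff_le_add']
      set i' : ℕ → ℕ := fun t => if t = 0 then n else i (t-1) with hi'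
      have hmem : cc x y f n m + (csum x y f i L + aa z x y f (i L)) ∈ A n := by
        refine ⟨L+1, i', by simp [hi'], ?_⟩
        have hend : i' (L+1) = i L := by simp [hi']
        have hsum : csum x y f i' (L+1) = cc x y f n m + csum x y f i L := by
          unfold csum
          rw [Finset.sum_range_succ' (fun t => cc x y f (i' t) (i' (t+1))) L]
          have h0 : cc x y f (i' 0) (i' 1) = cc x y f n m := by simp [hi', hi0]
          have hrest : ∀ t ∈ Finset.range L,
              cc x y f (i' (t+1)) (i' (t+1+1)) = cc x y f (i t) (i (t+1)) := by
            intro t _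
            simp [hi']
          rw [Finset.sum_congr rfl hrest, h0]
          ring
        rw [hend, hsum]
        ring
      exact csInf_le (hAbdd n) hmem
    exact this
  -- append step for w
  have hw1 : ∀ n m, w m ≤ cc x y f n m + w n := by
    intro n m
    rw [← sub_le_iff_le_add']
    apply le_csInf (hBne n)
    rintro r ⟨L, i, hiL, rfl⟩
    rw [sub_le_iff_le_add']
    set i' : ℕ → ℕ := fun t => if t ≤ L then i t else m with hi'
    have hmem : cc x y f n m + (bb z x y f (i 0) + csum x y f i L) ∈ B m := by
      refine ⟨L+1, i', by simp [hi'], ?_⟩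
      have h0 : i' 0 = i 0 := by simp [hi']
      have hsum : csum x y f i' (L+1) = csum x y f i L + cc x y f n m := by
        unfold csum
        rw [Finset.sum_range_succ]
        have hlast : cc x y f (i' L) (i' (L+1)) = cc x y f n m := by
          have : i' L = i L := by simp [hi']
          have h2 : i' (L+1) = m := by simp [hi']
          rw [this, h2, hiL]
        have hrest : ∀ t ∈ Finset.range L,
            cc x y f (i' t) (i' (t+1)) = cc x y f (i t) (i (t+1)) := by
          intro t ht
          simp only [Finset.mem_range] at ht
          have e1 : i' t = i t := by simp [hi', Nat.le_of_lt ht]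
          have e2 : i' (t+1) = i (t+1) := by simp [hi']; intro h; omega
          rw [e1, e2]
        rw [Finset.sum_congr rfl hrest, hlast]
      rw [h0, hsum]
      ring
    exact csInf_le (hBbdd m) hmem
  -- u admissible ⇒ u = 0
  have hu0 : ∀ n, u n = 0 := by
    apply master u hu1
    · exact fun n => (huaa n).trans (min_le_left _ _)
    · exact fun n => (huaa n).trans (min_le_right _ _)
    · intro n
      have := hbbnn n
      have h2 := hunn n
      have : -(dist (x n) z + f (x n)) ≤ 0 := by
        have := hfb (x n); linarith
      linarith
    · intro n
      have h2 := hunn n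
      have : -(dist (y n) z + f (y n)) ≤ 0 := by
        have := hfb (y n); linarith
      linarith
  have hw0 : ∀ n, w n = 0 := by
    have := master (fun n => -(w n)) ?_ ?_ ?_ ?_ ?_
    · intro n; have := this n; linarith
    · intro n m
      have := hw1 n m
      linarith
    · intro n
      have h1 := hwnn n
      have := haann n
      have : (0:ℝ) ≤ dist (x n) z - f (x n) := le_trans this (by exact le_refl _) |>.trans (min_le_left _ _) |>.trans (le_refl _)
      linarith
    · intro n
      have h1 := hwnn n
      have : (0:ℝ) ≤ dist (y n) z - f (y n) := (haann n).trans (min_le_right _ _)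
      linarith
    · intro n
      have := (hwbb n).trans (min_le_left _ _)
      linarith
    · intro n
      have := (hwbb n).trans (min_le_right _ _)
      linarith
  constructor
  · intro j
    have : sInf (A j) < δ := by rw [show sInf (A j) = u j from rfl, hu0 j]; exact hδ
    obtain ⟨r, ⟨L, i, hi0, rfl⟩, hr⟩ := exists_lt_of_csInf_lt (hAne j) this
    exact ⟨L, i, hi0, hr⟩
  · intro k
    have : sInf (B k) < δ := by rw [show sInf (B k) = w k from rfl, hw0 k]; exact hδ
    obtain ⟨r, ⟨L, i, hiL, rfl⟩, hr⟩ := exists_lt_of_csInf_lt (hBne k) this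
    exact ⟨L, i, hiL, hr⟩

theorem sum_mod_window (E : ℕ → ℝ) (hE : ∀ r, 0 ≤ E r) (m a q₀ : ℕ) (hq : q₀ ≤ m) :
    ∑ u ∈ Finset.range q₀, E ((a+u)%m) ≤ ∑ r ∈ Finset.range m, E r := by
  rcases Nat.eq_zero_or_pos m with rfl | hm
  · interval_cases q₀; simp
  have hinj : ∀ u ∈ Finset.range q₀, ∀ u' ∈ Finset.range q₀,
      (a+u)%m = (a+u')%m → u = u' := by
    intro u hu u' hu'
    simp only [Finset.mem_range] at hu hu'
    intro h
    have : u ≡ u' [MOD m] := Nat.ModEq.add_left_cancel' a h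
    have := this.eq_of_lt_of_lt (by omega) (by omega)
    exact this
  rw [← Finset.sum_image hinj]
  apply Finset.sum_le_sum_of_subset_of_nonneg
  · intro r hr
    simp only [Finset.mem_image, Finset.mem_range] at hr ⊢
    obtain ⟨u, -, rfl⟩ := hr
    exact Nat.mod_lt _ hm
  · exact fun r _ _ => hE r

theorem backward_dir {M : Type*} [MetricSpace M] (z : M) (x y : ℕ → M) (f : M → ℝ)
    (hf : LipschitzWith 1 f) (hf0 : f z = 0)
    (hfn : ∀ n : ℕ, f (x n) - f (y n) = dist (x n) (y n))
    (cond : ∀ ε : ℝ, 0 < ε →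
      (∀ j k : ℕ, j ≠ k →
        ∃ (m : ℕ) (i : ℕ → ℕ), 1 ≤ m ∧ (∃ r < m, i r = j) ∧ (∃ r < m, i r = k) ∧
          (∑ r ∈ Finset.range m, dist (x (i r)) (y (i ((r + 1) % m)))) - ε <
            ∑ r ∈ Finset.range m, dist (x (i r)) (y (i r))) ∧
      (∀ p : M, ∃ s ∈ Set.range x ∪ Set.range y, ∃ t ∈ Set.range x ∪ Set.range y,
        dist s p + dist t p < dist s t + ε ∧ dist t s - ε < f t - f s)) :
    ∀ g : M → ℝ, LipschitzWith 1 g → g z = 0 →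
      (∀ n : ℕ, g (x n) - g (y n) = dist (x n) (y n)) → g = f := by
  intro g hg hg0 hgn
  set D : M → ℝ := fun q => g q - f q with hD
  have hDxy : ∀ n, D (x n) = D (y n) := by
    intro n
    have h1 := hfn n
    have h2 := hgn n
    simp only [hD]
    linarith
  have claim1 : ∀ j k, D (x j) = D (x k) := by
    intro j k
    rcases eq_or_ne j k with rfl | hjk
    · rfl
    have key : ∀ ε : ℝ, 0 < ε → |D (x j) - D (x k)| ≤ 2*ε := by
      intro ε hε
      obtain ⟨m, i, hm, ⟨a, ha, haj⟩, ⟨b, hb, hbk⟩, hcyc⟩ := (cond ε hε).1 j k hjk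
      have hm' : 0 < m := hm
      have hfsum : ∑ r ∈ Finset.range m, cc x y f (i r) (i ((r+1)%m)) < ε := by
        rw [cyc_identity x y f hfn m hm' i]; linarith
      have hgsum : ∑ r ∈ Finset.range m, cc x y g (i r) (i ((r+1)%m)) < ε := by
        rw [cyc_identity x y g hgn m hm' i]; linarith
      set e : ℕ → ℝ := fun r =>
        cc x y f (i r) (i ((r+1)%m)) - cc x y g (i r) (i ((r+1)%m)) with he
      set E : ℕ → ℝ := fun r =>
        cc x y f (i r) (i ((r+1)%m)) + cc x y g (i r) (i ((r+1)%m)) with hE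
      have hEnn : ∀ r, 0 ≤ E r := fun r =>
        add_nonneg (cc_nonneg (x:=x) (y:=y) hf _ _) (cc_nonneg (x:=x) (y:=y) hg _ _)
      have habs : ∀ r, |e r| ≤ E r := by
        intro r
        have := cc_nonneg (x:=x) (y:=y) hf (i r) (i ((r+1)%m))
        have := cc_nonneg (x:=x) (y:=y) hg (i r) (i ((r+1)%m))
        rw [abs_le]
        constructor <;> simp only [he, hE] <;> linarith
      have hEsum : ∑ r ∈ Finset.range m, E r < 2*ε := by
        simp only [hE]
        rw [Finset.sum_add_distrib]
        linarith
      have hstep : ∀ r, D (x (i r)) - D (x (i ((r+1)%m))) = e r := by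
        intro r
        have h1 := hDxy (i ((r+1)%m))
        simp only [he, cc, hD] at *
        linarith
      have tel : ∀ q : ℕ, D (x (i (a % m))) - D (x (i ((a+q)%m)))
          = ∑ u ∈ Finset.range q, e ((a+u)%m) := by
        intro q
        induction q with
        | zero => simp
        | succ q ih =>
            rw [Finset.sum_range_succ, ← ih]
            have hmods : ((a+q)%m + 1) % m = (a + (q+1))%m := by
              have h : ((a+q)%m + 1) % m = ((a+q) + 1) % m :=
                Nat.ModEq.add_right 1 (Nat.mod_modEq (a+q) m)
              rw [← Nat.add_assoc]
              exact h
            have := hstep ((a+q)%m)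
            rw [hmods] at this
            linarith
      -- choose q₀ with (a + q₀) % m = b
      obtain ⟨q₀, hq₀le, hq₀⟩ : ∃ q₀, q₀ ≤ m ∧ (a + q₀) % m = b := by
        rcases le_or_gt a b with h | h
        · exact ⟨b - a, by omega, by
            have : a + (b - a) = b := by omega
            rw [this, Nat.mod_eq_of_lt hb]⟩
        · refine ⟨b + m - a, by omega, ?_⟩
          have : a + (b + m - a) = b + m := by omega
          rw [this, Nat.add_mod_right, Nat.mod_eq_of_lt hb]
      have := tel q₀
      rw [hq₀, Nat.mod_eq_of_lt ha, haj, hbk] at this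
      rw [this]
      calc |∑ u ∈ Finset.range q₀, e ((a+u)%m)|
          ≤ ∑ u ∈ Finset.range q₀, |e ((a+u)%m)| := Finset.abs_sum_le_sum_abs _ _
        _ ≤ ∑ u ∈ Finset.range q₀, E ((a+u)%m) :=
            Finset.sum_le_sum fun u _ => habs _
        _ ≤ ∑ r ∈ Finset.range m, E r := sum_mod_window E hEnn m a q₀ hq₀le
        _ ≤ 2*ε := le_of_lt hEsum
    have : |D (x j) - D (x k)| ≤ 0 := by
      by_contra h
      push_neg at h
      have := key (|D (x j) - D (x k)|/4) (by linarith)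
      linarith
    have := abs_nonpos_iff.1 this
    linarith [abs_nonneg (D (x j) - D (x k)), sub_eq_zero.1 this]
  -- value of D on the union set
  have hDS : ∀ s ∈ Set.range x ∪ Set.range y, D s = D (x 0) := by
    rintro s (⟨n, rfl⟩ | ⟨n, rfl⟩)
    · exact claim1 n 0
    · rw [← hDxy n]; exact claim1 n 0
  -- claim 2 : D (x 0) = 0
  have claim2 : D (x 0) = 0 := by
    have key : ∀ ε : ℝ, 0 < ε → |D (x 0)| ≤ 2*ε := by
      intro ε hε
      obtain ⟨s, hs, t, ht, h1, h2⟩ := (cond ε hε).2 z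
      have hfs : f s - f z ≤ dist s z := lip_sub hf _ _
      have hft : f t - f z ≤ dist t z := lip_sub hf _ _
      have hfs2 : f z - f s ≤ dist s z := by
        have := lip_sub hf z s; rwa [dist_comm] at this
      have hgs : g s - g z ≤ dist s z := lip_sub hg _ _
      have hgt : g t - g z ≤ dist t z := lip_sub hg _ _
      have hgs2 : g z - g s ≤ dist s z := by
        have := lip_sub hg z s; rwa [dist_comm] at this
      have hgst : g t - g s = f t - f s := by
        have e1 := hDS s hs
        have e2 := hDS t ht
        simp only [hD] at e1 e2
        linarith
      have hds : dist s t = dist t s := dist_comm _ _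
      -- f z = 0, g z = 0
      rw [hf0] at hfs hft hfs2
      rw [hg0] at hgs hgt hgs2
      -- bounds : -dist s z ≤ f s < -dist s z + 2ε ; same for g s
      have hfup : f s + dist s z < 2*ε := by linarith
      have hgup : g s + dist s z < 2*ε := by linarith
      have e1 := hDS s hs
      simp only [hD] at e1
      simp only [hD]
      rw [abs_le]
      constructor <;> linarith
    have : |D (x 0)| ≤ 0 := by
      by_contra h
      push_neg at h
      have := key (|D (x 0)|/4) (by linarith)
      linarith
    have h0 := abs_nonpos_iff.1 this
    linarith [h0]
  funext p
  have key : ∀ ε : ℝ, 0 < ε → |g p - f p| ≤ 2*ε := by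
    intro ε hε
    obtain ⟨s, hs, t, ht, h1, h2⟩ := (cond ε hε).2 p
    have hgst : g t - g s = f t - f s := by
      have e1 := hDS s hs
      have e2 := hDS t ht
      simp only [hD] at e1 e2
      linarith
    have hgsv : g s = f s := by
      have e1 := hDS s hs
      have e2 : g (x 0) - f (x 0) = 0 := by simpa [hD] using claim2
      simp only [hD] at e1
      linarith
    have hfsp : f p - f s ≤ dist s p := by
      have := lip_sub hf p s; rwa [dist_comm] at this
    have hftp : f t - f p ≤ dist t p := lip_sub hf _ _
    have hgsp : g p - g s ≤ dist s p := by
      have := lip_sub hg p s; rwa [dist_comm] at this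
    have hgtp : g t - g p ≤ dist t p := lip_sub hg _ _
    have hds : dist s t = dist t s := dist_comm _ _
    rw [abs_le]
    constructor <;> linarith
  have : |g p - f p| ≤ 0 := by
    by_contra h
    push_neg at h
    have := key (|g p - f p|/4) (by linarith)
    linarith
  have := abs_nonpos_iff.1 this
  linarith
theorem forward_dir {M : Type*} [MetricSpace M] (z : M) (x y : ℕ → M) (f : M → ℝ)
    (hf : LipschitzWith 1 f) (hf0 : f z = 0)
    (hfn : ∀ n : ℕ, f (x n) - f (y n) = dist (x n) (y n))
    (H : ∀ g : M → ℝ, LipschitzWith 1 g → g z = 0 →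
        (∀ n : ℕ, g (x n) - g (y n) = dist (x n) (y n)) → g = f) :
    ∀ ε : ℝ, 0 < ε →
      (∀ j k : ℕ, j ≠ k →
        ∃ (m : ℕ) (i : ℕ → ℕ), 1 ≤ m ∧ (∃ r < m, i r = j) ∧ (∃ r < m, i r = k) ∧
          (∑ r ∈ Finset.range m, dist (x (i r)) (y (i ((r + 1) % m)))) - ε <
            ∑ r ∈ Finset.range m, dist (x (i r)) (y (i r))) ∧
      (∀ p : M, ∃ s ∈ Set.range x ∪ Set.range y, ∃ t ∈ Set.range x ∪ Set.range y,
        dist s p + dist t p < dist s t + ε ∧ dist t s - ε < f t - f s) := by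
  intro ε hε
  have hδ : (0:ℝ) < ε/4 := by linarith
  -- uniqueness consequence on deviations
  have master0 : ∀ u : ℕ → ℝ, (∀ n m, u n - u m ≤ cc x y f n m) →
      (∀ n, u n ≤ dist (x n) z - f (x n)) → (∀ n, u n ≤ dist (y n) z - f (y n)) →
      (∀ n, -(dist (x n) z + f (x n)) ≤ u n) → (∀ n, -(dist (y n) z + f (y n)) ≤ u n) →
      ∀ n, u n = 0 := by
    intro u h1 h2x h2y h3x h3y
    obtain ⟨g, hLip, hz, hxv, hyv, -⟩ := master z x y f hfn u h1 h2x h2y h3x h3y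
    have hgf : g = f := by
      apply H g hLip hz
      intro n
      rw [hxv n, hyv n]
      have := hfn n
      linarith
    intro n
    have := hxv n
    rw [hgf] at this
    linarith
  have hch := key_chains z x y f hf hf0 hfn master0 hδ
  -- chains between any two indices with small cost
  have P : ∀ j k : ℕ, ∃ (L : ℕ) (i : ℕ → ℕ),
      i 0 = j ∧ i L = k ∧ 1 ≤ L ∧ csum x y f i L < ε/2 := by
    intro j k
    obtain ⟨L1, i1, h10, h1v⟩ := hch.1 j
    obtain ⟨L2, i2, h2L, h2v⟩ := hch.2 k
    classical
    set i3 : ℕ → ℕ := fun t => if t ≤ L1 then i1 t else i2 (t - (L1+1)) with hi3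
    refine ⟨L1+1+L2, i3, by simp [hi3, h10], ?_, by omega, ?_⟩
    · simp only [hi3]
      rcases Nat.eq_zero_or_pos L2 with rfl | h
      · simp [h2L]
      · rw [if_neg (by omega)]
        rw [show L1+1+L2 - (L1+1) = L2 from by omega, h2L]
    · have hsum : csum x y f i3 (L1+1+L2)
          = csum x y f i1 L1 + cc x y f (i1 L1) (i2 0) + csum x y f i2 L2 := by
        unfold csum
        rw [my_sum_range_add (fun t => cc x y f (i3 t) (i3 (t+1))) (L1+1) L2]
        rw [Finset.sum_range_succ]
        have e1 : ∀ t ∈ Finset.range L1,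
            cc x y f (i3 t) (i3 (t+1)) = cc x y f (i1 t) (i1 (t+1)) := by
          intro t ht
          simp only [Finset.mem_range] at ht
          simp only [hi3, if_pos (by omega : t ≤ L1), if_pos (by omega : t+1 ≤ L1)]
        have e2 : cc x y f (i3 L1) (i3 (L1+1)) = cc x y f (i1 L1) (i2 0) := by
          simp only [hi3, if_pos (le_refl L1), if_neg (by omega : ¬ L1+1 ≤ L1)]
          rw [show L1+1 - (L1+1) = 0 from by omega]
        have e3 : ∀ t ∈ Finset.range L2,
            cc x y f (i3 (L1+1+t)) (i3 (L1+1+t+1)) = cc x y f (i2 t) (i2 (t+1)) := by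
          intro t ht
          simp only [hi3, if_neg (by omega : ¬ L1+1+t ≤ L1),
            if_neg (by omega : ¬ L1+1+t+1 ≤ L1)]
          rw [show L1+1+t - (L1+1) = t from by omega,
            show L1+1+t+1 - (L1+1) = t+1 from by omega]
        rw [Finset.sum_congr rfl e1, Finset.sum_congr rfl e3, e2]
      have hb := bridge z x y f hfn (i1 L1) (i2 0)
      have hs1 := csum_nonneg (x:=x) (y:=y) hf i1 L1
      have hs2 := csum_nonneg (x:=x) (y:=y) hf i2 L2
      rw [hsum]
      linarith
  constructor
  · -- condition (i)
    intro j k hjk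
    obtain ⟨LA, iA, hA0, hAL, hA1, hAs⟩ := P j k
    obtain ⟨LB, iB, hB0, hBL, hB1, hBs⟩ := P k j
    classical
    set m := LA + LB with hmdef
    set i : ℕ → ℕ := fun r => if r < LA then iA r else iB (r - LA) with hidef
    have hm : 0 < m := by omega
    refine ⟨m, i, hm, ⟨0, by omega, by
        simp only [hidef]
        rw [if_pos (by omega : 0 < LA)]
        exact hA0⟩,
      ⟨LA, by omega, by
        simp only [hidef]
        rw [if_neg (lt_irrefl LA), show LA - LA = 0 from by omega]
        exact hB0⟩, ?_⟩
    have hident := cyc_identity x y f hfn m hm i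
    have hsplit : ∑ r ∈ Finset.range m, cc x y f (i r) (i ((r+1)%m))
        = csum x y f iA LA + csum x y f iB LB := by
      unfold csum
      rw [hmdef, my_sum_range_add (fun r => cc x y f (i r) (i ((r+1)%(LA+LB)))) LA LB]
      congr 1
      · apply Finset.sum_congr rfl
        intro r hr
        simp only [Finset.mem_range] at hr
        have h1 : (r+1)%(LA+LB) = r+1 := Nat.mod_eq_of_lt (by omega)
        rw [h1]
        simp only [hidef, if_pos hr]
        rcases Nat.lt_or_ge (r+1) LA with h2 | h2
        · rw [if_pos h2]
        · have : r + 1 = LA := by omega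
          rw [if_neg (by omega)]
          rw [this]
          congr 1
          rw [show LA - LA = 0 by omega, hB0, ← hAL]
      · apply Finset.sum_congr rfl
        intro t ht
        simp only [Finset.mem_range] at ht
        simp only [hidef, if_neg (by omega : ¬ LA + t < LA)]
        rw [show LA + t - LA = t by omega]
        rcases Nat.lt_or_ge (LA+t+1) (LA+LB) with h2 | h2
        · rw [Nat.mod_eq_of_lt h2, if_neg (by omega), show LA + t + 1 - LA = t+1 by omega]
        · have h3 : LA + t + 1 = LA + LB := by omega
          rw [h3, Nat.mod_self, if_pos (by omega), hA0, show t+1 = LB by omega, ← hBL]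
    rw [hsplit] at hident
    linarith
  · -- condition (ii)
    intro p
    classical
    -- extremal witnesses
    obtain ⟨L1, i1, -, h1v⟩ := hch.1 0
    obtain ⟨L2, i2, -, h2v⟩ := hch.2 0
    have hs1 := csum_nonneg (x:=x) (y:=y) hf i1 L1
    have hs2 := csum_nonneg (x:=x) (y:=y) hf i2 L2
    have haa : aa z x y f (i1 L1) < ε/4 := by linarith
    have hbb : bb z x y f (i2 0) < ε/4 := by linarith
    obtain ⟨sst, hsstm, hsst⟩ : ∃ s ∈ Set.range x ∪ Set.range y,
        dist s z - f s < ε/4 := by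
      unfold aa at haa
      rcases min_lt_iff.1 haa with h | h
      · exact ⟨x (i1 L1), Or.inl ⟨i1 L1, rfl⟩, h⟩
      · exact ⟨y (i1 L1), Or.inr ⟨i1 L1, rfl⟩, h⟩
    obtain ⟨tst, htstm, htst⟩ : ∃ t ∈ Set.range x ∪ Set.range y,
        dist t z + f t < ε/4 := by
      unfold bb at hbb
      rcases min_lt_iff.1 hbb with h | h
      · exact ⟨x (i2 0), Or.inl ⟨i2 0, rfl⟩, h⟩
      · exact ⟨y (i2 0), Or.inr ⟨i2 0, rfl⟩, h⟩
    -- McShane formulas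
    have hup : f p = min (dist z p)
        (⨅ n, min (f (x n) + dist (x n) p) (f (y n) + dist (y n) p)) := by
      obtain ⟨g, hLip, hz, hxv, hyv, hform⟩ :=
        master z x y f hfn (fun _ => 0)
          (fun n m => by simpa using cc_nonneg (x:=x) (y:=y) hf n m)
          (fun n => by
            show (0:ℝ) ≤ dist (x n) z - f (x n)
            have := lip_sub hf (x n) z; rw [hf0] at this; linarith)
          (fun n => by
            show (0:ℝ) ≤ dist (y n) z - f (y n)
            have := lip_sub hf (y n) z; rw [hf0] at this; linarith)
          (fun n => by
            show -(dist (x n) z + f (x n)) ≤ (0:ℝ)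
            have := lip_sub hf z (x n); rw [hf0, dist_comm] at this; linarith)
          (fun n => by
            show -(dist (y n) z + f (y n)) ≤ (0:ℝ)
            have := lip_sub hf z (y n); rw [hf0, dist_comm] at this; linarith)
      have hgf : g = f := by
        apply H g hLip hz
        intro n
        rw [hxv n, hyv n]
        have := hfn n
        linarith
      have := hform p
      rw [hgf] at this
      simpa using this
    have hlow : -(f p) = min (dist z p)
        (⨅ n, min (-f (y n) + dist (y n) p) (-f (x n) + dist (x n) p)) := by
      have hfn' : ∀ n, (fun q => -f q) (y n) - (fun q => -f q) (x n) = dist (y n) (x n) := by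
        intro n
        simp only
        rw [dist_comm]
        have := hfn n
        linarith
      obtain ⟨g, hLip, hz, hxv, hyv, hform⟩ :=
        master z y x (fun q => -f q) hfn' (fun _ => 0)
          (fun n m => by simpa using cc_nonneg (x:=y) (y:=x) (lip_neg hf) n m)
          (fun n => by
            show (0:ℝ) ≤ dist (y n) z - -(f (y n))
            have := lip_sub hf z (y n); rw [hf0, dist_comm] at this; linarith)
          (fun n => by
            show (0:ℝ) ≤ dist (x n) z - -(f (x n))
            have := lip_sub hf z (x n); rw [hf0, dist_comm] at this; linarith)
          (fun n => by
            show -(dist (y n) z + -(f (y n))) ≤ (0:ℝ)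
            have := lip_sub hf (y n) z; rw [hf0] at this; linarith)
          (fun n => by
            show -(dist (x n) z + -(f (x n))) ≤ (0:ℝ)
            have := lip_sub hf (x n) z; rw [hf0] at this; linarith)
      have hgneg : (fun q => -(g q)) = f := by
        apply H _ (lip_neg hLip)
        · simp [hz]
        · intro n
          have h1 := hxv n
          have h2 := hyv n
          rw [h1, h2]
          have := hfn n
          simp only [add_zero, neg_neg]
          linarith
      have hgp : g p = -(f p) := by
        have := congrFun hgneg p
        linarith
      have := hform p
      rw [hgp] at this
      simpa using this
    -- dichotomies
    have hud : dist z p = f p ∨ ∃ s ∈ Set.range x ∪ Set.range y,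
        f s + dist s p < f p + ε/4 := by
      rcases le_total (dist z p)
          (⨅ n, min (f (x n) + dist (x n) p) (f (y n) + dist (y n) p)) with h | h
      · left
        rw [hup, min_eq_left h]
      · right
        have hI : (⨅ n, min (f (x n) + dist (x n) p) (f (y n) + dist (y n) p))
            < f p + ε/4 := by
          rw [hup, min_eq_right h] at *
          linarith
        obtain ⟨n, hn⟩ := exists_lt_of_ciInf_lt hI
        rcases min_lt_iff.1 hn with h' | h'
        · exact ⟨x n, Or.inl ⟨n, rfl⟩, h'⟩
        · exact ⟨y n, Or.inr ⟨n, rfl⟩, h'⟩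
    have hld : dist z p = -(f p) ∨ ∃ t ∈ Set.range x ∪ Set.range y,
        -f t + dist t p < -(f p) + ε/4 := by
      rcases le_total (dist z p)
          (⨅ n, min (-f (y n) + dist (y n) p) (-f (x n) + dist (x n) p)) with h | h
      · left
        rw [hlow, min_eq_left h]
      · right
        have hI : (⨅ n, min (-f (y n) + dist (y n) p) (-f (x n) + dist (x n) p))
            < -(f p) + ε/4 := by
          rw [hlow, min_eq_right h] at *
          linarith
        obtain ⟨n, hn⟩ := exists_lt_of_ciInf_lt hI
        rcases min_lt_iff.1 hn with h' | h'
        · exact ⟨y n, Or.inr ⟨n, rfl⟩, h'⟩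
        · exact ⟨x n, Or.inl ⟨n, rfl⟩, h'⟩
    -- finisher
    have final : ∀ s ∈ Set.range x ∪ Set.range y, ∀ t ∈ Set.range x ∪ Set.range y,
        f s + dist s p + dist t p - f t < ε →
        dist s p + dist t p < dist s t + ε ∧ dist t s - ε < f t - f s := by
      intro s _ t _ hA
      have h1 : f t - f s ≤ dist t s := lip_sub hf t s
      have h2 : dist t s = dist s t := dist_comm t s
      have h3 : dist t s ≤ dist t p + dist p s := dist_triangle t p s
      have h4 : dist p s = dist s p := dist_comm p s
      constructor <;> linarith
    have trp : dist tst p ≤ dist tst z + dist z p := dist_triangle _ _ _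
    have srp : dist sst p ≤ dist sst z + dist z p := dist_triangle _ _ _
    rcases hud with hzu | ⟨s₀, hs₀m, hs₀⟩ <;> rcases hld with hzl | ⟨t₀, ht₀m, ht₀⟩
    · exact ⟨tst, htstm, sst, hsstm,
        final tst htstm sst hsstm (by linarith)⟩
    · exact ⟨tst, htstm, t₀, ht₀m,
        final tst htstm t₀ ht₀m (by linarith)⟩
    · exact ⟨s₀, hs₀m, sst, hsstm,
        final s₀ hs₀m sst hsstm (by linarith)⟩
    · exact ⟨s₀, hs₀m, t₀, ht₀m,
        final s₀ hs₀m t₀ ht₀m (by linarith)⟩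

/-- Theorem 3.2 of the paper in dual form: uniqueness of the norming 1-Lipschitz function
(equivalently, Gâteaux differentiability of the free-space norm at the convex series of
molecules) is characterised by the two geometric conditions (i) and (ii). -/
theorem stmt_7 {M : Type*} [MetricSpace M] (z : M) (x y : ℕ → M)
    (hxy : ∀ n : ℕ, x n ≠ y n)
    (f : M → ℝ) (hf : LipschitzWith 1 f) (hf0 : f z = 0)
    (hfn : ∀ n : ℕ, f (x n) - f (y n) = dist (x n) (y n)) :
    (∀ g : M → ℝ, LipschitzWith 1 g → g z = 0 →
        (∀ n : ℕ, g (x n) - g (y n) = dist (x n) (y n)) → g = f) ↔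
    (∀ ε : ℝ, 0 < ε →
      (∀ j k : ℕ, j ≠ k →
        ∃ (m : ℕ) (i : ℕ → ℕ), 1 ≤ m ∧ (∃ r < m, i r = j) ∧ (∃ r < m, i r = k) ∧
          (∑ r ∈ Finset.range m, dist (x (i r)) (y (i ((r + 1) % m)))) - ε <
            ∑ r ∈ Finset.range m, dist (x (i r)) (y (i r))) ∧
      (∀ p : M, ∃ s ∈ Set.range x ∪ Set.range y, ∃ t ∈ Set.range x ∪ Set.range y,
        dist s p + dist t p < dist s t + ε ∧ dist t s - ε < f t - f s)) := by
  constructor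
  · exact forward_dir z x y f hf hf0 hfn
  · exact backward_dir z x y f hf hf0 hfn
end

section
/- Let M be a metric space with diameter at most D > 0, let (x_i, y_i)_{i=1}^n be pairs of distinct points of M, and let ε > 0. Let f, g : M → ℝ be 1-Lipschitz with f(y_1) = g(y_1) = 0, suppose f(x_i) − f(y_i) = d(x_i, y_i) and g(x_i) − g(y_i) > (1 − ε)·d(x_i, y_i) for every i ∈ {1,…,n}, and suppose that for every k ∈ {2,…,n} there is a finite sequence of pairwise distinct indices i_1, …, i_m ∈ {1,…,n} with i_1 = 1, containing k, such that d(x_{i_1},y_{i_1}) + ⋯ + d(x_{i_m},y_{i_m}) = d(x_{i_1},y_{i_2}) + d(x_{i_2},y_{i_3}) + ⋯ + d(x_{i_m},y_{i_1}). Then |f(u) − g(u)| ≤ n²·D·ε for every u ∈ {x_1, y_1, …, x_n, y_n}. -/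
/-!
Write `h = f - g`. Along the closed walk `y₁ → x₁ → y_{i₂} → x_{i₂} → ⋯ → x_{i_m} → y₁` given by an
equality cycle through `k`, the function `h` can only go up on the steps `y_i → x_i`, by less than
`ε d(x_i, y_i)` since `g` nearly norms that pair, and it can only go down on the steps
`x_i → y_j`: summing `f(x_i) - f(y_i) = d(x_i, y_i)` around the cycle and comparing with the
cycle equality forces `f(x_i) - f(y_j) = d(x_i, y_j)` on every such step, while `g` is
1-Lipschitz. A closed walk never leaves the band of width its total ascent around its starting
value, here `h(y₁) = 0`, and that ascent is at most `ε m D ≤ ε n² D`.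
-/

open Finset

section ClosedZigzag

/-! The closed walk `v 0 → w 0 → v 1 → w 1 → ⋯ → w (m - 1) → v m = v 0` of real numbers, going up
on each step `v j → w j` and down on each step `w j → v (j + 1)`. -/

variable {v w : ℕ → ℝ} {m r : ℕ}

theorem sub_le_sum_range_ascent (hdown : ∀ j < r, v (j + 1) ≤ w j) :
    v r - v 0 ≤ ∑ j ∈ range r, (w j - v j) := by
  rw [← sum_range_sub v r]
  exact sum_le_sum fun j hj => by linarith [hdown j (mem_range.1 hj)]

theorem neg_sum_range_descent_le_sub (hup : ∀ j < r, v j ≤ w j) :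
    -∑ j ∈ range r, (w j - v (j + 1)) ≤ v r - v 0 := by
  rw [← sum_range_sub v r, ← sum_neg_distrib]
  exact sum_le_sum fun j hj => by linarith [hup j (mem_range.1 hj)]

theorem sum_range_descent_eq_ascent (hclosed : v m = v 0) :
    ∑ j ∈ range m, (w j - v (j + 1)) = ∑ j ∈ range m, (w j - v j) := by
  rw [← sub_eq_zero, ← sum_sub_distrib]
  simp only [sub_sub_sub_cancel_left, sum_range_sub', hclosed, sub_self]

theorem sum_range_ascent_le (hup : ∀ j < m, v j ≤ w j) (hr : r ≤ m) :
    ∑ j ∈ range r, (w j - v j) ≤ ∑ j ∈ range m, (w j - v j) :=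
  sum_le_sum_of_subset_of_nonneg (range_subset_range.2 hr) fun j hj _ =>
    sub_nonneg.2 (hup j (mem_range.1 hj))

theorem abs_sub_le_sum_range_ascent_left (hclosed : v m = v 0) (hup : ∀ j < m, v j ≤ w j)
    (hdown : ∀ j < m, v (j + 1) ≤ w j) (hr : r ≤ m) :
    |v r - v 0| ≤ ∑ j ∈ range m, (w j - v j) := by
  rw [abs_le]
  constructor
  · calc -∑ j ∈ range m, (w j - v j) = -∑ j ∈ range m, (w j - v (j + 1)) := by
          rw [sum_range_descent_eq_ascent hclosed]
      _ ≤ -∑ j ∈ range r, (w j - v (j + 1)) :=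
          neg_le_neg <| sum_le_sum_of_subset_of_nonneg (range_subset_range.2 hr) fun j hj _ =>
            sub_nonneg.2 (hdown j (mem_range.1 hj))
      _ ≤ v r - v 0 := neg_sum_range_descent_le_sub fun j hj => hup j (hj.trans_le hr)
  · exact (sub_le_sum_range_ascent fun j hj => hdown j (hj.trans_le hr)).trans
      (sum_range_ascent_le hup hr)

theorem abs_sub_le_sum_range_ascent_right (hclosed : v m = v 0) (hup : ∀ j < m, v j ≤ w j)
    (hdown : ∀ j < m, v (j + 1) ≤ w j) (hr : r < m) :
    |w r - v 0| ≤ ∑ j ∈ range m, (w j - v j) := by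
  rw [abs_le]
  constructor
  · have := (abs_le.1 (abs_sub_le_sum_range_ascent_left hclosed hup hdown hr)).1
    linarith [hdown r hr]
  · calc w r - v 0 = (w r - v r) + (v r - v 0) := by ring
      _ ≤ (w r - v r) + ∑ j ∈ range r, (w j - v j) :=
          add_le_add_right (sub_le_sum_range_ascent fun j hj => hdown j (hj.trans hr)) _
      _ = ∑ j ∈ range (r + 1), (w j - v j) := by rw [sum_range_succ, add_comm]
      _ ≤ ∑ j ∈ range m, (w j - v j) := sum_range_ascent_le hup hr

end ClosedZigzag

section NormingWalk

variable {M : Type*} [PseudoMetricSpace M] {a b : ℕ → M} {m : ℕ} {f g : M → ℝ}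

theorem LipschitzWith.sub_le_dist (hf : LipschitzWith 1 f) (p q : M) : f p - f q ≤ dist p q :=
  sub_le_iff_le_add'.2 <| by simpa using hf.le_add_mul p q

theorem LipschitzWith.sub_eq_dist_succ_of_sum_dist_eq (hf : LipschitzWith 1 f)
    (hclosed : b m = b 0) (hnorm : ∀ r < m, f (a r) - f (b r) = dist (a r) (b r))
    (hcyc : ∑ r ∈ range m, dist (a r) (b r) = ∑ r ∈ range m, dist (a r) (b (r + 1)))
    {r : ℕ} (hr : r < m) :
    f (a r) - f (b (r + 1)) = dist (a r) (b (r + 1)) := by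
  have hsum : ∑ j ∈ range m, (f (a j) - f (b (j + 1))) = ∑ j ∈ range m, dist (a j) (b (j + 1)) :=
    calc ∑ j ∈ range m, (f (a j) - f (b (j + 1))) = ∑ j ∈ range m, (f (a j) - f (b j)) :=
          sum_range_descent_eq_ascent (v := fun j => f (b j)) (w := fun j => f (a j))
            (congrArg f hclosed)
      _ = ∑ j ∈ range m, dist (a j) (b j) := sum_congr rfl fun j hj => hnorm j (mem_range.1 hj)
      _ = _ := hcyc
  exact (sum_eq_sum_iff_of_le fun j _ => hf.sub_le_dist _ _).1 hsum r (mem_range.2 hr)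

theorem abs_sub_le_of_norming_walk {ε : ℝ} (hf : LipschitzWith 1 f) (hg : LipschitzWith 1 g)
    (hclosed : b m = b 0) (hbase : f (b 0) = g (b 0))
    (hfnorm : ∀ r < m, f (a r) - f (b r) = dist (a r) (b r))
    (hgnorm : ∀ r < m, (1 - ε) * dist (a r) (b r) < g (a r) - g (b r))
    (hcyc : ∑ r ∈ range m, dist (a r) (b r) = ∑ r ∈ range m, dist (a r) (b (r + 1)))
    {r : ℕ} (hr : r < m) :
    |f (a r) - g (a r)| ≤ ε * ∑ j ∈ range m, dist (a j) (b j) ∧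
      |f (b r) - g (b r)| ≤ ε * ∑ j ∈ range m, dist (a j) (b j) := by
  set v : ℕ → ℝ := fun j => f (b j) - g (b j)
  set w : ℕ → ℝ := fun j => f (a j) - g (a j)
  have hup : ∀ j < m, v j ≤ w j := fun j hj => by
    linarith [hg.sub_le_dist (a j) (b j), hfnorm j hj]
  have hdown : ∀ j < m, v (j + 1) ≤ w j := fun j hj => by
    linarith [hg.sub_le_dist (a j) (b (j + 1)),
      hf.sub_eq_dist_succ_of_sum_dist_eq hclosed hfnorm hcyc hj]
  have hvclosed : v m = v 0 := by simp only [v, hclosed]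
  have hv0 : v 0 = 0 := sub_eq_zero.2 hbase
  have hascent : ∑ j ∈ range m, (w j - v j) ≤ ε * ∑ j ∈ range m, dist (a j) (b j) := by
    rw [mul_sum]
    exact sum_le_sum fun j hj => by linarith [hgnorm j (mem_range.1 hj), hfnorm j (mem_range.1 hj)]
  constructor
  · simpa [hv0] using (abs_sub_le_sum_range_ascent_right hvclosed hup hdown hr).trans hascent
  · simpa [hv0] using (abs_sub_le_sum_range_ascent_left hvclosed hup hdown hr.le).trans hascent

theorem abs_sub_le_of_norming_cycle {ε : ℝ} (hf : LipschitzWith 1 f) (hg : LipschitzWith 1 g)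
    (hbase : f (b 0) = g (b 0)) (hfnorm : ∀ r < m, f (a r) - f (b r) = dist (a r) (b r))
    (hgnorm : ∀ r < m, (1 - ε) * dist (a r) (b r) < g (a r) - g (b r))
    (hcyc : ∑ r ∈ range m, dist (a r) (b r) = ∑ r ∈ range m, dist (a r) (b ((r + 1) % m)))
    {r : ℕ} (hr : r < m) :
    |f (a r) - g (a r)| ≤ ε * ∑ j ∈ range m, dist (a j) (b j) ∧
      |f (b r) - g (b r)| ≤ ε * ∑ j ∈ range m, dist (a j) (b j) := by
  set b' : ℕ → M := fun j => b (j % m)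
  have hb' : ∀ j < m, b' j = b j := fun j hj => by simp only [b', Nat.mod_eq_of_lt hj]
  have hsum : ∑ j ∈ range m, dist (a j) (b' j) = ∑ j ∈ range m, dist (a j) (b j) :=
    sum_congr rfl fun j hj => by rw [hb' j (mem_range.1 hj)]
  have hwalk := abs_sub_le_of_norming_walk (b := b') hf hg
    (by simp only [b', Nat.mod_self, Nat.zero_mod]) (by simpa only [b', Nat.zero_mod] using hbase)
    (fun j hj => hb' j hj ▸ hfnorm j hj) (fun j hj => hb' j hj ▸ hgnorm j hj)
    (hsum.trans hcyc) hr
  rwa [hsum, hb' r hr] at hwalk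

end NormingWalk

theorem le_of_injOn_range_of_mem_Icc {m n : ℕ} {i : ℕ → ℕ}
    (hrange : ∀ r < m, 1 ≤ i r ∧ i r ≤ n) (hinj : ∀ r < m, ∀ s < m, i r = i s → r = s) :
    m ≤ n := by
  simpa using card_le_card_of_injOn i (s := range m) (t := Icc 1 n)
    (fun r hr => mem_Icc.2 (hrange r (mem_range.1 hr)))
    (fun r hr s hs => hinj r (mem_range.1 hr) s (mem_range.1 hs))

theorem stmt_9_general {M : Type*} [MetricSpace M] (D : ℝ) (hD : 0 < D)
    (hdiam : ∀ p q : M, dist p q ≤ D)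
    (n : ℕ) (x y : ℕ → M)
    (ε : ℝ) (hε : 0 < ε)
    (f g : M → ℝ) (hf : LipschitzWith 1 f) (hg : LipschitzWith 1 g)
    (hfy1 : f (y 1) = 0) (hgy1 : g (y 1) = 0)
    (hfi : ∀ i, 1 ≤ i → i ≤ n → f (x i) - f (y i) = dist (x i) (y i))
    (hgi : ∀ i, 1 ≤ i → i ≤ n → (1 - ε) * dist (x i) (y i) < g (x i) - g (y i))
    (hcyc : ∀ k, 2 ≤ k → k ≤ n →
      ∃ (m : ℕ) (i : ℕ → ℕ), 1 ≤ m ∧ i 0 = 1 ∧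
        (∀ r < m, 1 ≤ i r ∧ i r ≤ n) ∧
        (∀ r < m, ∀ s < m, i r = i s → r = s) ∧
        (∃ r < m, i r = k) ∧
        ∑ r ∈ Finset.range m, dist (x (i r)) (y (i r)) =
          ∑ r ∈ Finset.range m, dist (x (i r)) (y (i ((r + 1) % m)))) :
    ∀ u : M, (∃ i, 1 ≤ i ∧ i ≤ n ∧ (u = x i ∨ u = y i)) →
      |f u - g u| ≤ (n : ℝ) ^ 2 * D * ε := by
  rintro u ⟨k, hk1, hkn, hu⟩
  obtain ⟨m, i, -, hi0, hrange, hinj, ⟨r, hr, rfl⟩, hsum⟩ : ∃ (m : ℕ) (i : ℕ → ℕ), 1 ≤ m ∧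
      i 0 = 1 ∧ (∀ r < m, 1 ≤ i r ∧ i r ≤ n) ∧ (∀ r < m, ∀ s < m, i r = i s → r = s) ∧
      (∃ r < m, i r = k) ∧ ∑ r ∈ range m, dist (x (i r)) (y (i r)) =
        ∑ r ∈ range m, dist (x (i r)) (y (i ((r + 1) % m))) := by
    rcases (show k = 1 ∨ 2 ≤ k by omega) with rfl | hk2
    · exact ⟨1, fun _ => 1, le_rfl, rfl, fun _ _ => ⟨le_rfl, hkn⟩, fun _ _ _ _ _ => by omega,
        ⟨0, one_pos, rfl⟩, rfl⟩
    · exact hcyc k hk2 hkn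
  have hcycle := abs_sub_le_of_norming_cycle (a := fun r => x (i r)) (b := fun r => y (i r)) hf hg
    (by simp only [hi0, hfy1, hgy1]) (fun r hr => hfi _ (hrange r hr).1 (hrange r hr).2)
    (fun r hr => hgi _ (hrange r hr).1 (hrange r hr).2) hsum hr
  have hmn : (m : ℝ) ≤ (n : ℝ) ^ 2 := by
    exact_mod_cast (le_of_injOn_range_of_mem_Icc hrange hinj).trans (Nat.le_self_pow two_ne_zero n)
  have hdist : ∑ j ∈ range m, dist (x (i j)) (y (i j)) ≤ m * D := by
    simpa using sum_le_card_nsmul (range m) _ D fun j _ => hdiam _ _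
  have hbound : ε * ∑ j ∈ range m, dist (x (i j)) (y (i j)) ≤ (n : ℝ) ^ 2 * D * ε := by
    nlinarith [mul_le_mul_of_nonneg_left hdist hε.le, mul_le_mul_of_nonneg_right hmn hD.le]
  rcases hu with rfl | rfl
  · exact hcycle.1.trans hbound
  · exact hcycle.2.trans hbound

/-- The key quantitative estimate from the proof of Theorem 3.4 of the paper: near-norming
1-Lipschitz functions agree with the exactly norming one on all the points `x i`, `y i`,
up to an error `n² D ε`, provided the equality-cycle condition holds. -/
theorem stmt_9 {M : Type*} [MetricSpace M] (D : ℝ) (hD : 0 < D)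
    (hdiam : ∀ p q : M, dist p q ≤ D)
    (n : ℕ) (x y : ℕ → M)
    (hxy : ∀ i, 1 ≤ i → i ≤ n → x i ≠ y i)
    (ε : ℝ) (hε : 0 < ε)
    (f g : M → ℝ) (hf : LipschitzWith 1 f) (hg : LipschitzWith 1 g)
    (hfy1 : f (y 1) = 0) (hgy1 : g (y 1) = 0)
    (hfi : ∀ i, 1 ≤ i → i ≤ n → f (x i) - f (y i) = dist (x i) (y i))
    (hgi : ∀ i, 1 ≤ i → i ≤ n → (1 - ε) * dist (x i) (y i) < g (x i) - g (y i))
    (hcyc : ∀ k, 2 ≤ k → k ≤ n →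
      ∃ (m : ℕ) (i : ℕ → ℕ), 1 ≤ m ∧ i 0 = 1 ∧
        (∀ r < m, 1 ≤ i r ∧ i r ≤ n) ∧
        (∀ r < m, ∀ s < m, i r = i s → r = s) ∧
        (∃ r < m, i r = k) ∧
        ∑ r ∈ Finset.range m, dist (x (i r)) (y (i r)) =
          ∑ r ∈ Finset.range m, dist (x (i r)) (y (i ((r + 1) % m)))) :
    ∀ u : M, (∃ i, 1 ≤ i ∧ i ≤ n ∧ (u = x i ∨ u = y i)) →
      |f u - g u| ≤ (n : ℝ) ^ 2 * D * ε :=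
  stmt_9_general D hD hdiam n x y ε hε f g hf hg hfy1 hgy1 hfi hgi hcyc
end

section
/- Let M be a uniformly discrete, bounded metric space with a distinguished point 0, let (x_k, y_k)_{k∈ℕ} be pairs of distinct points of M, let λ_k > 0 with Σ_{k=1}^∞ λ_k = 1, and let f : M → ℝ be 1-Lipschitz with f(0) = 0 and f(x_k) − f(y_k) = d(x_k, y_k) for every k. Suppose that for every ε > 0 there is δ > 0 such that every 1-Lipschitz g : M → ℝ with g(0) = 0 and Σ_{k=1}^∞ λ_k (g(x_k) − g(y_k))/d(x_k, y_k) > 1 − δ satisfies sup_{x∈M} |f(x) − g(x)| < ε. Then for every ε > 0 there exists n ∈ ℕ such that for every x ∈ M there are points s, t ∈ {x_1, y_1, …, x_n, y_n} with d(s,x) + d(t,x) < d(s,t) + ε and f(s) − f(t) > d(s,t) − ε. -/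
/-!
Fix `c > 0` and suppose that every `yⱼ` with `j < n` satisfies `f yⱼ ≥ f p + c - d(yⱼ, p)`.
Raising `f` at `p` by the cone `u ↦ f p + c - d(u, p)` then leaves `f` unchanged at these `yⱼ`
and does not decrease it at the `xⱼ`, so the first `n` molecules stay normed, while every other
molecule loses at most `c / θ`. Once the tail of `∑ λₖ` is small, the raised function (normalised
at `z`) lies in the slice `⟨g, μ⟩ > 1 - δ`; but its increments from `y₀` to `p` differ from those of
`f` by `c`, so it is `c / 2`-far from `f` somewhere, contradicting strong exposure. Hence some
`yⱼ` and, applying this to `-f` with the molecules reversed, some `xₖ` lie almost on a geodesic of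
`f` through `p`; the segment `[xₖ, yⱼ]` does the job.
-/

open Finset Filter Topology

theorem le_tsum_mul_of_head_tail {lam q : ℕ → ℝ} {n : ℕ} {b : ℝ} (hlam : ∀ k, 0 ≤ lam k)
    (hsum : HasSum lam 1) (hq : ∀ k, |q k| ≤ 1) (hhead : ∀ k < n, 1 ≤ q k)
    (htail : ∀ k, 1 - b ≤ q k) :
    1 - (1 - ∑ k ∈ range n, lam k) * b ≤ ∑' k, lam k * q k := by
  have hlq : Summable fun k => lam k * q k :=
    hsum.summable.of_norm_bounded fun k => by
      simpa [abs_mul, abs_of_nonneg (hlam k)] using mul_le_of_le_one_right (hlam k) (hq k)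
  have hrest : ∑' k, lam (k + n) = 1 - ∑ k ∈ range n, lam k := by
    linarith [hsum.summable.sum_add_tsum_nat_add n, hsum.tsum_eq]
  calc 1 - (1 - ∑ k ∈ range n, lam k) * b
      = ∑ k ∈ range n, lam k * 1 + ∑' k, lam (k + n) * (1 - b) := by
        rw [tsum_mul_right, hrest]; simp only [mul_one]; ring
    _ ≤ ∑ k ∈ range n, lam k * q k + ∑' k, lam (k + n) * q (k + n) := by
        refine add_le_add (sum_le_sum fun k hk => ?_) (Summable.tsum_le_tsum (fun k => ?_) ?_ ?_)
        · exact mul_le_mul_of_nonneg_left (hhead k (mem_range.mp hk)) (hlam k)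
        · exact mul_le_mul_of_nonneg_left (htail _) (hlam _)
        · exact ((summable_nat_add_iff n).mpr hsum.summable).mul_right _
        · exact (summable_nat_add_iff n).mpr hlq
    _ = ∑' k, lam k * q k := hlq.sum_add_tsum_nat_add n

theorem exists_pos_one_sub_sum_mul_lt {lam : ℕ → ℝ} (hsum : HasSum lam 1) (b : ℝ) {δ : ℝ}
    (hδ : 0 < δ) : ∃ n, 0 < n ∧ (1 - ∑ k ∈ range n, lam k) * b < δ := by
  have hlim : Tendsto (fun n => (1 - ∑ k ∈ range n, lam k) * b) atTop (𝓝 0) := by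
    simpa using ((tendsto_const_nhds (x := (1 : ℝ))).sub hsum.tendsto_sum_nat).mul_const b
  exact ((hlim.eventually (gt_mem_nhds hδ)).and (eventually_gt_atTop 0)).exists.imp
    fun n hn => ⟨hn.2, hn.1⟩

section Bump

variable {M : Type*} [PseudoMetricSpace M]

def bumpAt (f : M → ℝ) (p : M) (c : ℝ) (u : M) : ℝ :=
  max (f u) (f p + c - dist u p)

variable {f : M → ℝ} {p : M} {c : ℝ}

theorem LipschitzWith.bumpAt (hf : LipschitzWith 1 f) (p : M) (c : ℝ) :
    LipschitzWith 1 (bumpAt f p c) := by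
  show LipschitzWith 1 fun u => max (f u) (f p + c - dist u p)
  simpa using hf.max ((LipschitzWith.const (f p + c)).sub (LipschitzWith.dist_left p))

theorem le_bumpAt (u : M) : f u ≤ bumpAt f p c u := le_max_left _ _

theorem bumpAt_le (hf : LipschitzWith 1 f) (hc : 0 ≤ c) (u : M) : bumpAt f p c u ≤ f u + c :=
  max_le (by linarith) <| by
    have := hf.le_add_mul p u
    rw [NNReal.coe_one, one_mul, dist_comm] at this
    linarith

theorem bumpAt_self (hc : 0 ≤ c) : bumpAt f p c p = f p + c := by
  simp [bumpAt, hc]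

theorem bumpAt_of_le {u : M} (h : f p + c - dist u p ≤ f u) : bumpAt f p c u = f u :=
  max_eq_left h

end Bump

section Pairing

variable {M : Type*} [PseudoMetricSpace M]

/-- The pairing `⟨g, ∑ λₖ (δ_{xₖ} - δ_{yₖ}) / d(xₖ, yₖ)⟩` of `Lip₀(M)` with `ℱ(M)`. -/
noncomputable def molecularPairing (lam : ℕ → ℝ) (x y : ℕ → M) (g : M → ℝ) : ℝ :=
  ∑' k, lam k * ((g (x k) - g (y k)) / dist (x k) (y k))

theorem molecularPairing_swap_neg (lam : ℕ → ℝ) (x y : ℕ → M) (g : M → ℝ) :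
    molecularPairing lam y x (-g) = molecularPairing lam x y g := by
  unfold molecularPairing
  congr! 3 with k
  rw [dist_comm, Pi.neg_apply, Pi.neg_apply, neg_sub_neg]

theorem abs_sub_div_dist_le_one {g : M → ℝ} (hg : LipschitzWith 1 g) (u v : M) :
    |(g u - g v) / dist u v| ≤ 1 := by
  rw [abs_div, abs_of_nonneg dist_nonneg]
  exact div_le_one_of_le₀ (by simpa [← Real.dist_eq] using hg.dist_le_mul u v) dist_nonneg

theorem le_molecularPairing {lam : ℕ → ℝ} {x y : ℕ → M} {g : M → ℝ} {θ c : ℝ} {n : ℕ}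
    (hθ : 0 < θ) (hdist : ∀ k, θ ≤ dist (x k) (y k)) (hlam : ∀ k, 0 ≤ lam k)
    (hsum : HasSum lam 1) (hg : LipschitzWith 1 g) (hc : 0 ≤ c)
    (hhead : ∀ k < n, dist (x k) (y k) ≤ g (x k) - g (y k))
    (htail : ∀ k, dist (x k) (y k) - c ≤ g (x k) - g (y k)) :
    1 - (1 - ∑ k ∈ range n, lam k) * (c / θ) ≤ molecularPairing lam x y g := by
  have hpos : ∀ k, 0 < dist (x k) (y k) := fun k => hθ.trans_le (hdist k)
  refine le_tsum_mul_of_head_tail hlam hsum (fun k => abs_sub_div_dist_le_one hg _ _)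
    (fun k hk => (one_le_div (hpos k)).mpr (hhead k hk)) fun k => ?_
  calc 1 - c / θ ≤ 1 - c / dist (x k) (y k) := by gcongr; exact hdist k
    _ = (dist (x k) (y k) - c) / dist (x k) (y k) := by field_simp [(hpos k).ne']
    _ ≤ (g (x k) - g (y k)) / dist (x k) (y k) := div_le_div_of_nonneg_right (htail k) (hpos k).le

end Pairing

section Exposed

variable {M : Type*} [PseudoMetricSpace M] {z : M} {lam : ℕ → ℝ} {x y : ℕ → M} {f : M → ℝ}
  {θ c δ : ℝ} {n : ℕ}

theorem exists_end_near_of_slice (hθ : 0 < θ) (hdist : ∀ k, θ ≤ dist (x k) (y k))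
    (hlam : ∀ k, 0 ≤ lam k) (hsum : HasSum lam 1) (hf : LipschitzWith 1 f)
    (hfk : ∀ k, f (x k) - f (y k) = dist (x k) (y k)) (hc : 0 < c) (hn : 0 < n)
    (htail : (1 - ∑ k ∈ range n, lam k) * (c / θ) < δ)
    (hslice : ∀ g : M → ℝ, LipschitzWith 1 g → g z = 0 →
      1 - δ < molecularPairing lam x y g → ∀ q, |f q - g q| < c / 2) (p : M) :
    ∃ j < n, dist (y j) p + f (y j) - f p < c := by
  by_contra! hfar
  set B := bumpAt f p c
  set g : M → ℝ := fun u => B u - B z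
  have hg : LipschitzWith 1 g := by simpa using (hf.bumpAt p c).sub (LipschitzWith.const (B z))
  have hdiff : ∀ k, g (x k) - g (y k) = B (x k) - B (y k) := fun k => sub_sub_sub_cancel_right _ _ _
  have hhead : ∀ j < n, B (y j) = f (y j) := fun j hj => bumpAt_of_le (by linarith [hfar j hj])
  have hpair : 1 - (1 - ∑ k ∈ range n, lam k) * (c / θ) ≤ molecularPairing lam x y g := by
    refine le_molecularPairing hθ hdist hlam hsum hg hc.le (fun k hk => ?_) fun k => ?_
    · rw [hdiff, hhead k hk, ← hfk k]
      linarith [le_bumpAt (f := f) (p := p) (c := c) (x k)]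
    · rw [hdiff, ← hfk k]
      linarith [le_bumpAt (f := f) (p := p) (c := c) (x k), bumpAt_le (p := p) hf hc.le (y k)]
  replace hpair : 1 - δ < molecularPairing lam x y g := by linarith
  have hp := hslice g hg (sub_self _) hpair p
  have hy := hslice g hg (sub_self _) hpair (y 0)
  -- `f - g` is `B z - c` at `p` but `B z` at `y₀`
  simp only [g, B, bumpAt_self hc.le, hhead 0 hn, abs_lt] at hp hy
  linarith [hp.1, hy.2]

theorem exists_start_near_of_slice (hθ : 0 < θ) (hdist : ∀ k, θ ≤ dist (x k) (y k))
    (hlam : ∀ k, 0 ≤ lam k) (hsum : HasSum lam 1) (hf : LipschitzWith 1 f)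
    (hfk : ∀ k, f (x k) - f (y k) = dist (x k) (y k)) (hc : 0 < c) (hn : 0 < n)
    (htail : (1 - ∑ k ∈ range n, lam k) * (c / θ) < δ)
    (hslice : ∀ g : M → ℝ, LipschitzWith 1 g → g z = 0 →
      1 - δ < molecularPairing lam x y g → ∀ q, |f q - g q| < c / 2) (p : M) :
    ∃ k < n, dist (x k) p + f p - f (x k) < c := by
  have hslice_neg : ∀ g : M → ℝ, LipschitzWith 1 g → g z = 0 →
      1 - δ < molecularPairing lam y x g → ∀ q, |(-f) q - g q| < c / 2 := by
    intro g hg hgz hpair q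
    have := hslice (-g) hg.neg (by simp [hgz]) (by rwa [molecularPairing_swap_neg]) q
    rw [Pi.neg_apply, ← abs_neg]
    convert this using 2
    simp only [Pi.neg_apply]
    ring
  obtain ⟨k, hk, hnear⟩ := exists_end_near_of_slice (x := y) (y := x) hθ
    (fun k => dist_comm (x k) (y k) ▸ hdist k) hlam hsum hf.neg
    (fun k => by rw [dist_comm, ← hfk k, Pi.neg_apply, Pi.neg_apply, neg_sub_neg]) hc hn htail
    hslice_neg p
  exact ⟨k, hk, by simpa [sub_eq_add_neg, add_assoc, add_comm (f p)] using hnear⟩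

end Exposed

theorem stmt_10_general {M : Type*} [MetricSpace M]
    (hud : ∃ θ : ℝ, 0 < θ ∧ ∀ p q : M, p ≠ q → θ ≤ dist p q)
    (z : M) (x y : ℕ → M) (hxy : ∀ k : ℕ, x k ≠ y k)
    (lam : ℕ → ℝ) (hlam : ∀ k, 0 < lam k)
    (hsum : Summable lam) (hsum1 : ∑' k, lam k = 1)
    (f : M → ℝ) (hf : LipschitzWith 1 f)
    (hfk : ∀ k : ℕ, f (x k) - f (y k) = dist (x k) (y k))
    (hfrechet : ∀ ε : ℝ, 0 < ε → ∃ δ : ℝ, 0 < δ ∧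
      ∀ g : M → ℝ, LipschitzWith 1 g → g z = 0 →
        1 - δ < ∑' k, lam k * ((g (x k) - g (y k)) / dist (x k) (y k)) →
        ∀ p : M, |f p - g p| < ε) :
    ∀ ε : ℝ, 0 < ε → ∃ n : ℕ, ∀ p : M,
      ∃ s t : M, (∃ k < n, s = x k ∨ s = y k) ∧ (∃ k < n, t = x k ∨ t = y k) ∧
        dist s p + dist t p < dist s t + ε ∧ dist s t - ε < f s - f t := by
  intro ε hε
  obtain ⟨θ, hθ, hsep⟩ := hud
  have hdist : ∀ k, θ ≤ dist (x k) (y k) := fun k => hsep _ _ (hxy k)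
  have hlam0 : ∀ k, 0 ≤ lam k := fun k => (hlam k).le
  have hlam1 : HasSum lam 1 := hsum1 ▸ hsum.hasSum
  obtain ⟨δ, hδ, hslice⟩ := hfrechet (ε / 2 / 2) (by positivity)
  obtain ⟨n, hn, htail⟩ := exists_pos_one_sub_sum_mul_lt hlam1 (ε / 2 / θ) hδ
  refine ⟨n, fun p => ?_⟩
  obtain ⟨j, hj, hyj⟩ := exists_end_near_of_slice hθ hdist hlam0 hlam1 hf hfk (half_pos hε) hn
    htail hslice p
  obtain ⟨k, hk, hxk⟩ := exists_start_near_of_slice hθ hdist hlam0 hlam1 hf hfk (half_pos hε) hn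
    htail hslice p
  refine ⟨x k, y j, ⟨k, hk, .inl rfl⟩, ⟨j, hj, .inr rfl⟩, ?_, ?_⟩
  · have := hf.le_add_mul (x k) (y j)
    rw [NNReal.coe_one, one_mul] at this
    linarith
  · linarith [dist_triangle_right (x k) (y j) p]

/-- Proposition 3.6 of the paper in dual form: if the norm of the free space is Fréchet
differentiable at a convex series of molecules, then for every `ε > 0` the space `M` is
covered by the `ε`-enlargements of finitely many almost-norming segments. -/
theorem stmt_10 {M : Type*} [MetricSpace M]
    (hud : ∃ θ : ℝ, 0 < θ ∧ ∀ p q : M, p ≠ q → θ ≤ dist p q)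
    (hbd : ∃ D : ℝ, ∀ p q : M, dist p q ≤ D)
    (z : M) (x y : ℕ → M) (hxy : ∀ k : ℕ, x k ≠ y k)
    (lam : ℕ → ℝ) (hlam : ∀ k, 0 < lam k)
    (hsum : Summable lam) (hsum1 : ∑' k, lam k = 1)
    (f : M → ℝ) (hf : LipschitzWith 1 f) (hf0 : f z = 0)
    (hfk : ∀ k : ℕ, f (x k) - f (y k) = dist (x k) (y k))
    (hfrechet : ∀ ε : ℝ, 0 < ε → ∃ δ : ℝ, 0 < δ ∧
      ∀ g : M → ℝ, LipschitzWith 1 g → g z = 0 →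
        1 - δ < ∑' k, lam k * ((g (x k) - g (y k)) / dist (x k) (y k)) →
        ∀ p : M, |f p - g p| < ε) :
    ∀ ε : ℝ, 0 < ε → ∃ n : ℕ, ∀ p : M,
      ∃ s t : M, (∃ k < n, s = x k ∨ s = y k) ∧ (∃ k < n, t = x k ∨ t = y k) ∧
        dist s p + dist t p < dist s t + ε ∧ dist s t - ε < f s - f t :=
  stmt_10_general hud z x y hxy lam hlam hsum hsum1 f hf hfk hfrechet
end

section
/- Let m denote Lebesgue measure on [0,1], let C ⊆ [0,1] be a closed set with empty interior and m(C) > 0, let D = [0,1] ∖ C, and let f = χ_C − χ_D ∈ L¹([0,1]). Then there do not exist sequences (x_n), (y_n) in [0,1] with x_n < y_n for all n and real numbers (c_n) with Σ_{n=1}^∞ |c_n| = 1 such that f = Σ_{n=1}^∞ c_n · χ_{[x_n, y_n]}/(y_n − x_n), with the series converging in L¹([0,1]). -/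
/-!
Let `gₙ = χ_[xₙ,yₙ] / (yₙ - xₙ)` and `⟨h, u⟩ = ∫_[0,1] h u`. For measurable `h` with `|h| ≤ 1`
the pairing `⟨h, ·⟩` is `L¹`-continuous, so `∑ cₙ ⟨h, gₙ⟩ = ⟨h, f⟩`. Taking `h = f` gives
`∑ cₙ (2bₙ - 1) = ⟨f, f⟩ = 1 = ∑ |cₙ|` with `bₙ = m(C ∩ [xₙ,yₙ]) / (yₙ - xₙ)`, and `bₙ < 1` because
`[xₙ,yₙ] \ C` contains a nonempty open set. Since `|2bₙ - 1| ≤ 1`, equality forces `cₙ ≤ 0`, and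
`bₙ = 0` whenever `cₙ ≠ 0`. Taking `h = χ_C` then gives `m(C) = ⟨χ_C, f⟩ = ∑ cₙ bₙ = 0`.
-/

open MeasureTheory Filter Topology Finset

local notation "𝟙[" s "]" => Set.indicator s (fun _ => (1 : ℝ))

section Pairing

variable {α ι : Type*} [MeasurableSpace α] {μ : Measure α}

theorem tendsto_integral_mul_of_tendsto_integral_abs_sub {l : Filter ι} {f h : α → ℝ}
    {F : ι → α → ℝ} (hf : Integrable f μ) (hF : ∀ i, Integrable (F i) μ)
    (hh : AEStronglyMeasurable h μ) (hh1 : ∀ t, |h t| ≤ 1)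
    (hlim : Tendsto (fun i => ∫ t, |f t - F i t| ∂μ) l (𝓝 0)) :
    Tendsto (fun i => ∫ t, h t * F i t ∂μ) l (𝓝 (∫ t, h t * f t ∂μ)) := by
  have hmul : ∀ u : α → ℝ, Integrable u μ → Integrable (fun t => h t * u t) μ := fun u hu =>
    hu.bdd_mul hh (c := 1) (Eventually.of_forall fun t => by simpa using hh1 t)
  have hdist : ∀ i, dist (∫ t, h t * F i t ∂μ) (∫ t, h t * f t ∂μ) ≤ ∫ t, |f t - F i t| ∂μ := by
    intro i
    rw [Real.dist_eq, ← integral_sub (hmul _ (hF i)) (hmul _ hf)]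
    refine abs_integral_le_integral_abs.trans (integral_mono ?_ (hf.sub (hF i)).abs fun t => ?_)
    · exact ((hmul _ (hF i)).sub (hmul _ hf)).abs
    · rw [← mul_sub, abs_mul, abs_sub_comm]
      exact mul_le_of_le_one_left (abs_nonneg _) (hh1 t)
  exact tendsto_iff_dist_tendsto_zero.2 (squeeze_zero (fun _ => dist_nonneg) hdist hlim)

theorem tendsto_sum_mul_integral_of_tendsto_integral_abs_sub {f h : α → ℝ} {g : ℕ → α → ℝ}
    {c : ℕ → ℝ} (hf : Integrable f μ) (hg : ∀ n, Integrable (g n) μ)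
    (hh : AEStronglyMeasurable h μ) (hh1 : ∀ t, |h t| ≤ 1)
    (hlim : Tendsto (fun N => ∫ t, |f t - ∑ n ∈ range N, c n * g n t| ∂μ) atTop (𝓝 0)) :
    Tendsto (fun N => ∑ n ∈ range N, c n * ∫ t, h t * g n t ∂μ) atTop
      (𝓝 (∫ t, h t * f t ∂μ)) := by
  have hmul : ∀ n, Integrable (fun t => h t * g n t) μ := fun n =>
    (hg n).bdd_mul hh (c := 1) (Eventually.of_forall fun t => by simpa using hh1 t)
  have hswap : ∀ N, ∑ n ∈ range N, c n * ∫ t, h t * g n t ∂μ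
      = ∫ t, h t * ∑ n ∈ range N, c n * g n t ∂μ := by
    intro N
    simp_rw [mul_sum, mul_left_comm (h _)]
    rw [integral_finsetSum _ fun n _ => (hmul n).const_mul (c n)]
    simp_rw [integral_const_mul]
  simp_rw [hswap]
  exact tendsto_integral_mul_of_tendsto_integral_abs_sub hf
    (fun N => integrable_finsetSum _ fun n _ => (hg n).const_mul (c n)) hh hh1 hlim

end Pairing

theorem mul_eq_abs_of_tendsto_sum_mul {c a : ℕ → ℝ} (hc : Summable fun n => |c n|)
    (ha : ∀ n, |a n| ≤ 1)
    (hlim : Tendsto (fun N => ∑ n ∈ range N, c n * a n) atTop (𝓝 (∑' n, |c n|))) (n : ℕ) :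
    c n * a n = |c n| := by
  have habs : ∀ n, |c n * a n| ≤ |c n| := fun n => by
    rw [abs_mul]; exact mul_le_of_le_one_right (abs_nonneg _) (ha n)
  have hca : Summable fun n => c n * a n := .of_norm_bounded hc habs
  refine (le_abs_self _ |>.trans (habs n)).eq_of_not_lt fun hlt => ?_
  have := hca.tsum_lt_tsum (fun n => le_abs_self _ |>.trans (habs n)) hlt hc
  rw [tendsto_nhds_unique hca.hasSum.tendsto_sum_nat hlim] at this
  exact this.false

theorem mul_eq_zero_of_tendsto_sum_mul_two_mul_sub_one {c b : ℕ → ℝ}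
    (hc : Summable fun n => |c n|) (hb : ∀ n, b n ∈ Set.Ico 0 1)
    (hlim : Tendsto (fun N => ∑ n ∈ range N, c n * (2 * b n - 1)) atTop (𝓝 (∑' n, |c n|)))
    (n : ℕ) : c n * b n = 0 := by
  obtain ⟨hb0, hb1⟩ := hb n
  have h := mul_eq_abs_of_tendsto_sum_mul hc
    (fun n => abs_le.2 ⟨by linarith [(hb n).1], by linarith [(hb n).2]⟩) hlim n
  rcases le_or_gt 0 (c n) with hc | hc
  · rw [abs_of_nonneg hc] at h; nlinarith
  · rw [abs_of_neg hc] at h; nlinarith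

section Indicator

variable {α : Type*} {s I J : Set α}

theorem abs_indicator_sub_indicator_sdiff_le_one (t : α) : |𝟙[s] t - 𝟙[I \ s] t| ≤ 1 := by
  by_cases hs : t ∈ s <;> by_cases hI : t ∈ I <;> simp [hs, hI]

theorem indicator_mul_indicator_div (L : ℝ) (t : α) :
    𝟙[s] t * (𝟙[J] t / L) = (s ∩ J).indicator (fun _ => L⁻¹) t := by
  by_cases hs : t ∈ s <;> by_cases hJ : t ∈ J <;> simp [hs, hJ]

variable [MeasurableSpace α] {μ : Measure α}

theorem setIntegral_indicator_sub_indicator_sdiff_mul_self (hI : MeasurableSet I) :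
    ∫ t in I, (𝟙[s] t - 𝟙[I \ s] t) * (𝟙[s] t - 𝟙[I \ s] t) ∂μ = μ.real I := by
  rw [setIntegral_congr_fun hI fun t ht => show _ = (1 : ℝ) by
    by_cases hs : t ∈ s <;> simp [hs, ht]]
  simp

theorem setIntegral_indicator_mul_indicator_sub_indicator_sdiff (hs : MeasurableSet s)
    (hsI : s ⊆ I) : ∫ t in I, 𝟙[s] t * (𝟙[s] t - 𝟙[I \ s] t) ∂μ = μ.real s := by
  have hpt : ∀ t, 𝟙[s] t * (𝟙[s] t - 𝟙[I \ s] t) = 𝟙[s] t := fun t => by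
    by_cases ht : t ∈ s <;> simp [ht]
  simp_rw [hpt]
  rw [integral_indicator_const _ hs, measureReal_restrict_apply hs, Set.inter_eq_left.2 hsI]
  simp

theorem setIntegral_indicator_mul_indicator_div (hs : MeasurableSet s) (hJ : MeasurableSet J)
    (hJI : J ⊆ I) (L : ℝ) : ∫ t in I, 𝟙[s] t * (𝟙[J] t / L) ∂μ = μ.real (s ∩ J) / L := by
  simp_rw [indicator_mul_indicator_div, integral_indicator_const _ (hs.inter hJ),
    measureReal_restrict_apply (hs.inter hJ),
    Set.inter_eq_left.2 (Set.inter_subset_right.trans hJI), smul_eq_mul, div_eq_mul_inv]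

theorem setIntegral_indicator_sub_indicator_sdiff_mul_indicator_div (hs : MeasurableSet s)
    (hI : MeasurableSet I) (hJ : MeasurableSet J) (hJI : J ⊆ I) (hJμ : μ J ≠ ⊤) (L : ℝ) :
    ∫ t in I, (𝟙[s] t - 𝟙[I \ s] t) * (𝟙[J] t / L) ∂μ = (2 * μ.real (s ∩ J) - μ.real J) / L := by
  have hint : ∀ u, MeasurableSet u → Integrable (fun t => 𝟙[u] t * (𝟙[J] t / L)) (μ.restrict I) :=
    fun u hu => by
      simp_rw [indicator_mul_indicator_div]
      exact (integrable_indicator_iff (hu.inter hJ)).2 (integrableOn_const (ne_top_of_le_ne_top hJμ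
        ((Measure.restrict_apply_le _ _).trans (measure_mono Set.inter_subset_right))))
  have hsdiff : (I \ s) ∩ J = J \ s := by
    ext t; constructor
    · rintro ⟨⟨-, hts⟩, htJ⟩; exact ⟨htJ, hts⟩
    · rintro ⟨htJ, hts⟩; exact ⟨⟨hJI htJ, hts⟩, htJ⟩
  have hsplit := measureReal_inter_add_sdiff hs hJμ
  simp_rw [sub_mul]
  rw [integral_sub (hint s hs) (hint _ (hI.diff hs)),
    setIntegral_indicator_mul_indicator_div hs hJ hJI,
    setIntegral_indicator_mul_indicator_div (hI.diff hs) hJ hJI, hsdiff, ← hsplit, Set.inter_comm]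
  ring

theorem tendsto_sum_mul_setIntegral_indicator_div (hs : MeasurableSet s) (hI : MeasurableSet I)
    (hIμ : μ I ≠ ⊤) {J : ℕ → Set α} (hJ : ∀ n, MeasurableSet (J n)) {c L : ℕ → ℝ} {h : α → ℝ}
    (hh : AEStronglyMeasurable h (μ.restrict I)) (hh1 : ∀ t, |h t| ≤ 1)
    (hlim : Tendsto (fun N => ∫ t in I,
      |(𝟙[s] t - 𝟙[I \ s] t) - ∑ n ∈ range N, c n * (𝟙[J n] t / L n)| ∂μ) atTop (𝓝 0)) :
    Tendsto (fun N => ∑ n ∈ range N, c n * ∫ t in I, h t * (𝟙[J n] t / L n) ∂μ) atTop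
      (𝓝 (∫ t in I, h t * (𝟙[s] t - 𝟙[I \ s] t) ∂μ)) := by
  have : IsFiniteMeasure (μ.restrict I) := isFiniteMeasure_restrict.2 hIμ
  refine tendsto_sum_mul_integral_of_tendsto_integral_abs_sub ?_ (fun n => ?_) hh hh1 hlim
  · exact .of_bound (by fun_prop (disch := measurability)) 1
      (Eventually.of_forall abs_indicator_sub_indicator_sdiff_le_one)
  · exact ((integrable_indicator_iff (hJ n)).2 (integrable_const _).integrableOn).div_const _

end Indicator

theorem volume_Icc_sdiff_pos {C : Set ℝ} (hCc : IsClosed C) (hCi : interior C = ∅) {x y : ℝ}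
    (hxy : x < y) : 0 < volume (Set.Icc x y \ C) := by
  have hne : (Set.Ioo x y \ C).Nonempty := by
    rw [Set.sdiff_nonempty]
    intro hsub
    have := interior_mono hsub
    rw [hCi, interior_Ioo, Set.subset_empty_iff] at this
    exact (Set.nonempty_Ioo.2 hxy).ne_empty this
  exact ((isOpen_Ioo.sdiff hCc).measure_pos volume hne).trans_le
    (measure_mono (Set.sdiff_subset_sdiff_left Set.Ioo_subset_Icc_self))

theorem volume_real_inter_Icc_div_mem_Ico {C : Set ℝ} (hCc : IsClosed C) (hCi : interior C = ∅)
    {x y : ℝ} (hxy : x < y) : volume.real (C ∩ Set.Icc x y) / (y - x) ∈ Set.Ico 0 1 := by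
  have hsplit := measureReal_inter_add_sdiff (μ := volume) (s := Set.Icc x y) hCc.measurableSet
    measure_Icc_lt_top.ne
  have hpos : 0 < volume.real (Set.Icc x y \ C) := ENNReal.toReal_pos
    (volume_Icc_sdiff_pos hCc hCi hxy).ne'
    (measure_ne_top_of_subset Set.sdiff_subset measure_Icc_lt_top.ne)
  rw [Real.volume_real_Icc_of_le hxy.le, Set.inter_comm] at hsplit
  exact ⟨div_nonneg measureReal_nonneg (sub_pos.2 hxy).le,
    (div_lt_one (sub_pos.2 hxy)).2 (by linarith)⟩

/-- Step 2 of Example 3.5 of the paper: for a fat Cantor set `C ⊆ [0,1]`, the function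
`f = χ_C − χ_D` is not the sum of an `L¹`-convergent series `Σ cₙ χ_{[xₙ,yₙ]}/(yₙ−xₙ)`
with `Σ |cₙ| = 1`. -/
theorem stmt_12 (C : Set ℝ) (hCc : IsClosed C) (hCi : interior C = ∅)
    (hC1 : C ⊆ Set.Icc 0 1) (hCm : 0 < volume C) :
    ¬ ∃ (x y : ℕ → ℝ) (c : ℕ → ℝ),
      (∀ n : ℕ, x n ∈ Set.Icc (0 : ℝ) 1 ∧ y n ∈ Set.Icc (0 : ℝ) 1 ∧ x n < y n) ∧
      Summable (fun n => |c n|) ∧ (∑' n, |c n|) = 1 ∧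
      Tendsto (fun N : ℕ => ∫ t in Set.Icc (0 : ℝ) 1,
          |(C.indicator (fun _ => (1 : ℝ)) t
              - (Set.Icc (0 : ℝ) 1 \ C).indicator (fun _ => (1 : ℝ)) t)
            - ∑ n ∈ Finset.range N,
                c n * (Set.Icc (x n) (y n)).indicator (fun _ => (1 : ℝ)) t / (y n - x n)|)
        atTop (nhds 0) := by
  rintro ⟨x, y, c, hxy, hsum, htsum, hconv⟩
  set I := Set.Icc (0 : ℝ) 1
  set f : ℝ → ℝ := fun t => 𝟙[C] t - 𝟙[I \ C] t
  set g : ℕ → ℝ → ℝ := fun n t => 𝟙[Set.Icc (x n) (y n)] t / (y n - x n)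
  set b : ℕ → ℝ := fun n => volume.real (C ∩ Set.Icc (x n) (y n)) / (y n - x n)
  have hC : MeasurableSet C := hCc.measurableSet
  have hJI : ∀ n, Set.Icc (x n) (y n) ⊆ I := fun n => Set.Icc_subset_Icc (hxy n).1.1 (hxy n).2.1.2
  have hfg : ∀ n, ∫ t in I, f t * g n t = 2 * b n - 1 := fun n => by
    rw [setIntegral_indicator_sub_indicator_sdiff_mul_indicator_div hC measurableSet_Icc
      measurableSet_Icc (hJI n) measure_Icc_lt_top.ne, Real.volume_real_Icc_of_le (hxy n).2.2.le,
      sub_div, mul_div_assoc, div_self (sub_pos.2 (hxy n).2.2).ne']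
  have hpair : ∀ h : ℝ → ℝ, Measurable h → (∀ t, |h t| ≤ 1) →
      Tendsto (fun N => ∑ n ∈ range N, c n * ∫ t in I, h t * g n t) atTop
        (𝓝 (∫ t in I, h t * f t)) := fun h hh hh1 =>
    tendsto_sum_mul_setIntegral_indicator_div hC measurableSet_Icc measure_Icc_lt_top.ne
      (fun _ => measurableSet_Icc) hh.aestronglyMeasurable hh1
      (by simpa only [mul_div_assoc] using hconv)
  have hcb : ∀ n, c n * b n = 0 := by
    refine mul_eq_zero_of_tendsto_sum_mul_two_mul_sub_one hsum
      (fun n => volume_real_inter_Icc_div_mem_Ico hCc hCi (hxy n).2.2) ?_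
    have hff : ∫ t in I, f t * f t = 1 :=
      (setIntegral_indicator_sub_indicator_sdiff_mul_self measurableSet_Icc).trans (by simp)
    simpa only [hfg, hff, htsum] using hpair f (by fun_prop (disch := measurability))
      abs_indicator_sub_indicator_sdiff_le_one
  have hCg : ∀ n, ∫ t in I, 𝟙[C] t * g n t = b n := fun n =>
    setIntegral_indicator_mul_indicator_div hC measurableSet_Icc (hJI n) _
  have hCf : ∫ t in I, 𝟙[C] t * f t = volume.real C :=
    setIntegral_indicator_mul_indicator_sub_indicator_sdiff hC hC1
  have hC0 := hpair 𝟙[C] (measurable_const.indicator hC) fun t => by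
    by_cases ht : t ∈ C <;> simp [ht]
  simp only [hCg, hcb, sum_const_zero, hCf] at hC0
  exact (ENNReal.toReal_pos hCm.ne' (measure_ne_top_of_subset hC1 measure_Icc_lt_top.ne)).ne
    (tendsto_nhds_unique tendsto_const_nhds hC0)
end

section
/- Let (e_n)_{n∈ℕ} denote the standard unit vectors in the space of bounded real sequences with the supremum norm. Let x_1 = 2e_1, let x_n = e_1 + (1 + 2^{−n})e_n for n ≥ 2, and let M = {0} ∪ {x_n : n ∈ ℕ} with the induced metric, so that d(x_1, 0) = 2 and d(x_n, 0) = 1 + 2^{−n} for n ≥ 2. Define f : M → ℝ by f(p) = d(p, 0). Then for every n ≥ 3 and every 1-Lipschitz function g : M → ℝ with g(0) = 0 and Σ_{k=1}^∞ 2^{−k}·g(x_k)/d(x_k, 0) > 1 − 2^{−2n}, one has sup_{p∈M} |f(p) − g(p)| ≤ 2^{−(n−2)}. -/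
/-! Write `δ = 2⁻ⁿ`. The weights `2^{-k}` sum to `1` and `g(x_k)/d(x_k, 0) ≤ 1`, so every term
of the nonnegative series `Σ 2^{-k} (1 - g(x_k)/d(x_k, 0)) < δ²` is below `δ²`; as `d(x_k, 0) ≤ 2`,
this gives `d(x_k, 0) - g(x_k) < 2^{k+1} δ²`, which is at most `2δ` for `k ≤ n`. For `k > n`
the point `x_k` is within `1 + 2^{-k}` of `x₁`, where `g` is almost `2`, and the 1-Lipschitz
condition transfers this to `d(x_k, 0) - g(x_k) < 2 · 2^{-k} + 4δ² < 2δ`. -/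

lemma hasSum_one_div_two_pow_succ : HasSum (fun k : ℕ => (1 : ℝ) / 2 ^ (k + 1)) 1 := by
  convert hasSum_geometric_two' 1 using 2 with k
  rw [pow_succ, div_div, mul_comm]

lemma mul_one_sub_lt_of_lt_tsum_mul {ι : Type*} {w a : ι → ℝ} {ε : ℝ} (hw : HasSum w 1)
    (hw0 : ∀ k, 0 ≤ w k) (ha : ∀ k, |a k| ≤ 1) (h : 1 - ε < ∑' k, w k * a k) (j : ι) :
    w j * (1 - a j) < ε := by
  have hwa : Summable fun k => w k * a k :=
    Summable.of_norm_bounded hw.summable fun k => by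
      rw [norm_mul, Real.norm_of_nonneg (hw0 k)]
      exact mul_le_of_le_one_right (hw0 k) (ha k)
  have hsum : HasSum (fun k => w k * (1 - a k)) (1 - ∑' k, w k * a k) := by
    simpa only [mul_sub, mul_one] using hw.sub hwa.hasSum
  calc w j * (1 - a j) ≤ 1 - ∑' k, w k * a k :=
        le_hasSum hsum j fun k _ => mul_nonneg (hw0 k) (sub_nonneg.2 (le_of_abs_le (ha k)))
    _ < ε := by linarith

section Lipschitz

variable {X : Type*} [PseudoMetricSpace X] {g : X → ℝ} {z : X}

lemma LipschitzWith.abs_le_dist_of_eq_zero (hg : LipschitzWith 1 g) (hz : g z = 0) (p : X) :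
    |g p| ≤ dist p z := by
  simpa [Real.dist_eq, hz] using hg.dist_le_mul p z

lemma LipschitzWith.dist_sub_lt_of_lt_tsum (hg : LipschitzWith 1 g) (hz : g z = 0)
    {x : ℕ → X} (hx : ∀ k, 0 < dist (x (k + 1)) z) {ε : ℝ}
    (h : 1 - ε < ∑' k : ℕ, (1 / 2 ^ (k + 1)) * (g (x (k + 1)) / dist (x (k + 1)) z)) (k : ℕ) :
    dist (x (k + 1)) z - g (x (k + 1)) < 2 ^ (k + 1) * dist (x (k + 1)) z * ε := by
  have hterm := mul_one_sub_lt_of_lt_tsum_mul hasSum_one_div_two_pow_succ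
    (fun _ => by positivity) (fun k => by
      rw [abs_div, abs_of_pos (hx k), div_le_one (hx k)]
      exact hg.abs_le_dist_of_eq_zero hz _) h k
  have hpos : (0 : ℝ) < 2 ^ (k + 1) * dist (x (k + 1)) z := by positivity [hx k]
  calc dist (x (k + 1)) z - g (x (k + 1))
      = 2 ^ (k + 1) * dist (x (k + 1)) z *
          (1 / 2 ^ (k + 1) * (1 - g (x (k + 1)) / dist (x (k + 1)) z)) := by
        field_simp [(hx k).ne']
    _ < 2 ^ (k + 1) * dist (x (k + 1)) z * ε := mul_lt_mul_of_pos_left hterm hpos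

end Lipschitz

theorem stmt_13_general {M : Type*} [MetricSpace M] (z : M) (x : ℕ → M)
    (hx1 : dist (x 1) z = 2)
    (hxn : ∀ n : ℕ, 2 ≤ n → dist (x n) z = 1 + 1 / 2 ^ n)
    (hx1n : ∀ n : ℕ, 2 ≤ n → dist (x 1) (x n) = 1 + 1 / 2 ^ n)
    (hM : ∀ p : M, p = z ∨ ∃ n : ℕ, 1 ≤ n ∧ p = x n) :
    ∀ n : ℕ, 3 ≤ n → ∀ g : M → ℝ, LipschitzWith 1 g → g z = 0 →
      1 - 1 / 2 ^ (2 * n) <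
        ∑' k : ℕ, (1 / 2 ^ (k + 1)) * (g (x (k + 1)) / dist (x (k + 1)) z) →
      ∀ p : M, |dist p z - g p| ≤ 1 / 2 ^ (n - 2) := by
  intro n hn g hg hgz hsum p
  set δ : ℝ := 1 / 2 ^ n with hδ
  have hδ_pos : 0 < δ := by positivity
  have hδ_le : δ ≤ 1 / 2 ^ 3 := one_div_pow_le_one_div_pow_of_le one_le_two hn
  have htarget : (1 : ℝ) / 2 ^ (n - 2) = 4 * δ := by
    obtain ⟨j, rfl⟩ : ∃ j, n = j + 2 := ⟨n - 2, by omega⟩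
    rw [hδ, Nat.add_sub_cancel, pow_add]
    ring
  have hdist : ∀ k : ℕ, 1 ≤ dist (x (k + 1)) z ∧ dist (x (k + 1)) z ≤ 2 := by
    rintro (_ | k)
    · simp [hx1]
    · rw [hxn _ (by omega)]
      have : (1 : ℝ) / 2 ^ (k + 2) ≤ 1 := div_le_one_of_le₀ (one_le_pow₀ one_le_two) (by positivity)
      constructor <;> linarith [show (0 : ℝ) < 1 / 2 ^ (k + 2) by positivity]
  have hclose : ∀ k : ℕ, dist (x (k + 1)) z - g (x (k + 1)) ≤ 2 ^ (k + 1) * 2 * δ ^ 2 := by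
    intro k
    have h := hg.dist_sub_lt_of_lt_tsum hgz (fun k => one_pos.trans_le (hdist k).1) hsum k
    have : 1 / 2 ^ (2 * n) = δ ^ 2 := by rw [hδ]; ring
    rw [this] at h
    nlinarith [(hdist k).2, show (0 : ℝ) < 2 ^ (k + 1) * δ ^ 2 by positivity]
  rcases hM p with rfl | ⟨m, hm, rfl⟩
  · simp only [dist_self, hgz, sub_zero, abs_zero]
    positivity
  obtain ⟨k, rfl⟩ := Nat.exists_eq_add_of_le' hm
  rw [abs_of_nonneg (sub_nonneg.2 (le_of_abs_le (hg.abs_le_dist_of_eq_zero hgz _))), htarget]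
  rcases le_or_gt (k + 1) n with hkn | hkn
  · have : 2 ^ (k + 1) * δ ≤ 1 := by
      rw [hδ, mul_one_div, div_le_one (by positivity)]
      exact pow_le_pow_right₀ one_le_two hkn
    nlinarith [hclose k]
  · have hx1k : |g (x 1) - g (x (k + 1))| ≤ 1 + 1 / 2 ^ (k + 1) := by
      simpa [Real.dist_eq, hx1n _ (show 2 ≤ k + 1 by omega)] using hg.dist_le_mul (x 1) (x (k + 1))
    have hsmall : (1 : ℝ) / 2 ^ (k + 1) ≤ δ / 2 := by
      rw [hδ, div_div, ← pow_succ]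
      exact one_div_pow_le_one_div_pow_of_le one_le_two hkn
    have h1 := hclose 0
    rw [zero_add, hx1] at h1
    rw [hxn _ (by omega)]
    nlinarith [le_of_abs_le hx1k]

/-- The quantitative estimate of Example 3.8 of the paper, for the metric space
`M = {0} ∪ {xₙ : n ≥ 1} ⊆ c₀` with `x₁ = 2e₁` and `xₙ = e₁ + (1 + 2⁻ⁿ)eₙ` for `n ≥ 2`
(described here by its distances), showing that `μ = Σ 2⁻ⁿ (δ_{xₙ} − δ_0)/d(xₙ,0)` is a
point of Fréchet differentiability with derivative `f = d(·,0)`. -/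
theorem stmt_13 {M : Type*} [MetricSpace M] (z : M) (x : ℕ → M)
    (hx1 : dist (x 1) z = 2)
    (hxn : ∀ n : ℕ, 2 ≤ n → dist (x n) z = 1 + 1 / 2 ^ n)
    (hx1n : ∀ n : ℕ, 2 ≤ n → dist (x 1) (x n) = 1 + 1 / 2 ^ n)
    (hxmn : ∀ m n : ℕ, 2 ≤ m → 2 ≤ n → m ≠ n →
      dist (x m) (x n) = 1 + 1 / 2 ^ min m n)
    (hM : ∀ p : M, p = z ∨ ∃ n : ℕ, 1 ≤ n ∧ p = x n) :
    ∀ n : ℕ, 3 ≤ n → ∀ g : M → ℝ, LipschitzWith 1 g → g z = 0 →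
      1 - 1 / 2 ^ (2 * n) <
        ∑' k : ℕ, (1 / 2 ^ (k + 1)) * (g (x (k + 1)) / dist (x (k + 1)) z) →
      ∀ p : M, |dist p z - g p| ≤ 1 / 2 ^ (n - 2) :=
  stmt_13_general z x hx1 hxn hx1n hM
end

section
/- Let M be a uniformly discrete, bounded metric space with a distinguished point 0, let (x_i, y_i)_{i=1}^n be pairs of distinct points of M, let λ_i > 0 with Σ_{i=1}^n λ_i = 1, and let f : M → ℝ be 1-Lipschitz with f(0) = 0 and f(x_i) − f(y_i) = d(x_i, y_i) for all i. Assume: (α) for every pair of distinct j, k ∈ {1,…,n} there is a finite sequence of pairwise distinct indices i_1, …, i_m ∈ {1,…,n} containing both j and k such that d(x_{i_1},y_{i_1}) + ⋯ + d(x_{i_m},y_{i_m}) = d(x_{i_1},y_{i_2}) + ⋯ + d(x_{i_m},y_{i_1}); and (β) for every x ∈ M there are distinct points s, t ∈ {x_1, y_1, …, x_n, y_n} with f(t) − f(s) = d(t,s) and d(s,x) + d(t,x) = d(s,t). Let X be a real normed space, x ∈ X with ‖x‖ = 1, and x* a continuous linear functional on X with ‖x*‖ = 1 and x*(x) = 1,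 such that for every ε > 0 there is δ > 0 such that every continuous linear functional v* with ‖v*‖ ≤ 1 and v*(x) ≥ 1 − δ satisfies ‖v* − x*‖ ≤ ε. Then for every ε > 0 there is δ > 0 such that every map g from M to the dual X* with g(0) = 0, ‖g(p) − g(q)‖ ≤ d(p,q) for all p, q ∈ M, and Σ_{i=1}^n λ_i (g(x_i) − g(y_i))(x)/d(x_i, y_i) > 1 − δ satisfies sup_{p∈M} ‖g(p) − f(p)·x*‖ ≤ ε. -/
open Filter Topology Finset

/-!
Argue along a sequence of maps `g_k` with `Σ λᵢ (g_k xᵢ - g_k yᵢ)(v) / d(xᵢ, yᵢ) → 1` and show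
`H_k = g_k - f ⊗ xs → 0` uniformly. The slack `d(a, b) - (g_k a - g_k b)(v)` is nonnegative, so it
tends to `0` on every pair `(xᵢ, yᵢ)`. Around a tight cycle of (α) the cross slacks add up to the
edge slacks, so they tend to `0` too, while the slack of `f` on the cross pairs vanishes. On a pair
whose slack tends to `0`, uniform discreteness makes the slack small relative to `d(a, b)`, and then
Šmulyan's condition forces `(g_k a - g_k b) / d(a, b)` close to `xs`. So the increments of `H_k`
vanish along edges and cross pairs, hence, by chaining around cycles, between any two of the finitely
many points `xᵢ, yᵢ`. By (β) every point lies metrically between two such points, which makes `f`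
tight and the slack of `g_k` small there as well; `H_k(0) = 0` then finishes.
-/

section Slack

variable {M : Type*} [PseudoMetricSpace M]

def slack (φ : M → ℝ) (a b : M) : ℝ := dist a b - (φ a - φ b)

lemma slack_eq_zero_iff {φ : M → ℝ} {a b : M} :
    slack φ a b = 0 ↔ φ a - φ b = dist a b := by
  rw [slack, sub_eq_zero, eq_comm]

lemma slack_nonneg {φ : M → ℝ} (hφ : LipschitzWith 1 φ) (a b : M) : 0 ≤ slack φ a b := by
  have := hφ.dist_le_mul a b
  rw [NNReal.coe_one, one_mul, Real.dist_eq] at this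
  rw [slack, sub_nonneg]
  exact (le_abs_self _).trans this

lemma slack_le_of_dist_add_dist_eq {φ : M → ℝ} (hφ : LipschitzWith 1 φ) {p s t : M}
    (h : dist s p + dist t p = dist s t) : slack φ p s ≤ slack φ t s := by
  have := slack_nonneg hφ t p
  simp only [slack] at this ⊢
  rw [dist_comm p s, dist_comm t s]
  linarith

end Slack

lemma Finset.sum_range_rotate {A : Type*} [AddCommMonoid A] (F : ℕ → A) (m : ℕ) :
    ∑ r ∈ range m, F ((r + 1) % m) = ∑ r ∈ range m, F r := by
  cases m with
  | zero => simp
  | succ m =>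
    rw [sum_range_succ, Nat.mod_self, sum_range_succ' F]
    congr 1
    exact sum_congr rfl fun r hr => by rw [Nat.mod_eq_of_lt (by simpa using hr)]

def endpoints {M κ : Type*} (x y : κ → M) : Set M := {a | ∃ j, a = x j ∨ a = y j}

lemma endpoints_finite {M κ : Type*} [Finite κ] (x y : κ → M) : (endpoints x y).Finite :=
  ((Set.finite_range x).union (Set.finite_range y)).subset <| by
    rintro _ ⟨j, rfl | rfl⟩ <;> simp

lemma rel_cycle_base {M κ : Type*} {x y : κ → M} {m : ℕ} {i : ℕ → κ}
    {R : M → M → Prop} (hR : Equivalence R)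
    (hedge : ∀ r < m, R (x (i r)) (y (i r)))
    (hcross : ∀ r < m, R (x (i r)) (y (i ((r + 1) % m)))) :
    ∀ r < m, R (y (i r)) (y (i 0))
  | 0, _ => hR.refl _
  | r + 1, hr => by
    have hstep := hcross r (by omega)
    rw [Nat.mod_eq_of_lt hr] at hstep
    exact hR.trans (hR.trans (hR.symm hstep) (hedge r (by omega)))
      (rel_cycle_base hR hedge hcross r (by omega))

section Cycle

variable {M κ : Type*} [PseudoMetricSpace M]

def IsTightCycle (x y : κ → M) (m : ℕ) (i : ℕ → κ) : Prop :=
  ∑ r ∈ range m, dist (x (i r)) (y (i r)) =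
    ∑ r ∈ range m, dist (x (i r)) (y (i ((r + 1) % m)))

def TightCycleConnected (x y : κ → M) : Prop :=
  ∀ j k : κ, j ≠ k →
    ∃ (m : ℕ) (i : ℕ → κ), (∃ r < m, i r = j) ∧ (∃ r < m, i r = k) ∧ IsTightCycle x y m i

variable {x y : κ → M} {m : ℕ} {i : ℕ → κ}

lemma IsTightCycle.sum_slack_eq (hc : IsTightCycle x y m i) (φ : M → ℝ) :
    ∑ r ∈ range m, slack φ (x (i r)) (y (i ((r + 1) % m))) =
      ∑ r ∈ range m, slack φ (x (i r)) (y (i r)) := by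
  simp only [slack, sum_sub_distrib]
  rw [sum_range_rotate (fun r => φ (y (i r))), hc]

lemma IsTightCycle.slack_le_sum (hc : IsTightCycle x y m i) {φ : M → ℝ}
    (hφ : LipschitzWith 1 φ) {r : ℕ} (hr : r < m) :
    slack φ (x (i r)) (y (i ((r + 1) % m))) ≤ ∑ s ∈ range m, slack φ (x (i s)) (y (i s)) :=
  (single_le_sum (f := fun s => slack φ (x (i s)) (y (i ((s + 1) % m))))
    (fun _ _ => slack_nonneg hφ _ _) (mem_range.2 hr)).trans_eq (hc.sum_slack_eq φ)

lemma rel_of_mem_endpoints {R : M → M → Prop} (hR : Equivalence R)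
    (halpha : TightCycleConnected x y)
    (hedge : ∀ j, R (x j) (y j))
    (hcross : ∀ m i, IsTightCycle x y m i → ∀ r < m, R (x (i r)) (y (i ((r + 1) % m))))
    {a b : M} (ha : a ∈ endpoints x y) (hb : b ∈ endpoints x y) : R a b := by
  have hy : ∀ j k, R (y j) (y k) := by
    intro j k
    obtain rfl | hjk := eq_or_ne j k
    · exact hR.refl _
    obtain ⟨m, i, ⟨rj, hrj, rfl⟩, ⟨rk, hrk, rfl⟩, hc⟩ := halpha j k hjk
    have hbase := rel_cycle_base hR (fun r _ => hedge (i r)) (hcross m i hc)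
    exact hR.trans (hbase rj hrj) (hR.symm (hbase rk hrk))
  have hkey : ∀ c ∈ endpoints x y, ∃ j, R c (y j) := by
    rintro c ⟨j, rfl | rfl⟩
    exacts [⟨j, hedge j⟩, ⟨j, hR.refl _⟩]
  obtain ⟨j, haj⟩ := hkey a ha
  obtain ⟨k, hbk⟩ := hkey b hb
  exact hR.trans haj (hR.trans (hy j k) (hR.symm hbk))

end Cycle

lemma tendsto_apply_of_finite {ι α E : Type*} [TopologicalSpace E] {l : Filter ι}
    {S : Set α} (hS : S.Finite) {F : ι → α → E} {e : E}
    (hF : ∀ a ∈ S, Tendsto (fun k => F k a) l (𝓝 e)) {c : ι → α}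
    (hc : ∀ k, c k ∈ S) :
    Tendsto (fun k => F k (c k)) l (𝓝 e) := fun _ hU =>
  ((eventually_all_finite hS).2 fun a ha => hF a ha hU).mono fun k hk => hk _ (hc k)

lemma equivalence_tendsto_sub {ι M E : Type*} [AddCommGroup E] [TopologicalSpace E]
    [IsTopologicalAddGroup E] (l : Filter ι) (H : ι → M → E) :
    Equivalence fun a b => Tendsto (fun k => H k a - H k b) l (𝓝 0) where
  refl _ := by simpa using tendsto_const_nhds
  symm h := by simpa using h.neg
  trans h₁ h₂ := by simpa using h₁.add h₂

section Sums

variable {M κ : Type*} [MetricSpace M] [Fintype κ] {x y : κ → M} {lam : κ → ℝ}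

lemma one_sub_sum_eq_sum_slack (hxy : ∀ i, x i ≠ y i) (hlam1 : ∑ i, lam i = 1)
    (φ : M → ℝ) :
    1 - ∑ i, lam i * ((φ (x i) - φ (y i)) / dist (x i) (y i)) =
      ∑ i, lam i * slack φ (x i) (y i) / dist (x i) (y i) := by
  rw [← hlam1, ← sum_sub_distrib]
  refine sum_congr rfl fun i _ => ?_
  have := dist_pos.2 (hxy i)
  simp only [slack]
  field_simp

lemma sum_le_one (hxy : ∀ i, x i ≠ y i) (hlam : ∀ i, 0 < lam i) (hlam1 : ∑ i, lam i = 1)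
    {φ : M → ℝ} (hφ : LipschitzWith 1 φ) :
    ∑ i, lam i * ((φ (x i) - φ (y i)) / dist (x i) (y i)) ≤ 1 := by
  rw [← sub_nonneg, one_sub_sum_eq_sum_slack hxy hlam1]
  exact sum_nonneg fun i _ =>
    div_nonneg (mul_nonneg (hlam i).le (slack_nonneg hφ _ _)) dist_nonneg

lemma tendsto_slack_of_tendsto_sum {ι : Type*} {l : Filter ι} (hxy : ∀ i, x i ≠ y i)
    (hlam : ∀ i, 0 < lam i) (hlam1 : ∑ i, lam i = 1) {φ : ι → M → ℝ}
    (hφ : ∀ k, LipschitzWith 1 (φ k))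
    (hS : Tendsto (fun k => ∑ i, lam i * ((φ k (x i) - φ k (y i)) / dist (x i) (y i)))
      l (𝓝 1))
    (i : κ) : Tendsto (fun k => slack (φ k) (x i) (y i)) l (𝓝 0) := by
  have hsum : Tendsto (fun k => ∑ j, lam j * slack (φ k) (x j) (y j) / dist (x j) (y j))
      l (𝓝 0) := by
    simpa [one_sub_sum_eq_sum_slack hxy hlam1] using
      (tendsto_const_nhds (x := (1 : ℝ))).sub hS
  have hterm : Tendsto (fun k => lam i * slack (φ k) (x i) (y i) / dist (x i) (y i))
      l (𝓝 0) :=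
    squeeze_zero
      (fun k => div_nonneg (mul_nonneg (hlam i).le (slack_nonneg (hφ k) _ _)) dist_nonneg)
      (fun k => single_le_sum (fun j _ => div_nonneg
        (mul_nonneg (hlam j).le (slack_nonneg (hφ k) _ _)) dist_nonneg) (mem_univ i))
      hsum
  have hd := dist_pos.2 (hxy i)
  have hl := hlam i
  simpa using (hterm.const_mul (dist (x i) (y i) / lam i)).congr fun k => by field_simp

end Sums

section Dual

variable {X : Type*} [NormedAddCommGroup X] [NormedSpace ℝ X]

/-- Šmulyan's criterion for the norm of `X` to be Fréchet differentiable at `v` with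
derivative `xs`. -/
def SmulyanCondition (v : X) (xs : X →L[ℝ] ℝ) : Prop :=
  ∀ ε : ℝ, 0 < ε → ∃ δ : ℝ, 0 < δ ∧ ∀ vs : X →L[ℝ] ℝ, ‖vs‖ ≤ 1 → 1 - δ ≤ vs v → ‖vs - xs‖ ≤ ε

lemma norm_sub_smul_le_mul {v : X} {xs : X →L[ℝ] ℝ} {ε δ : ℝ}
    (hF : ∀ vs : X →L[ℝ] ℝ, ‖vs‖ ≤ 1 → 1 - δ ≤ vs v → ‖vs - xs‖ ≤ ε)
    {T : X →L[ℝ] ℝ} {r : ℝ} (hT : ‖T‖ ≤ r) (hTv : (1 - δ) * r ≤ T v) :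
    ‖T - r • xs‖ ≤ ε * r := by
  obtain hr | hr := (norm_nonneg T |>.trans hT).eq_or_lt
  · subst hr
    simp [norm_le_zero_iff.1 hT]
  have hvs := hF (r⁻¹ • T) ?_ ?_
  · calc ‖T - r • xs‖ = ‖r • (r⁻¹ • T - xs)‖ := by
          rw [smul_sub, smul_inv_smul₀ hr.ne']
      _ = r * ‖r⁻¹ • T - xs‖ := by rw [norm_smul, Real.norm_of_nonneg hr.le]
      _ ≤ ε * r := by nlinarith
  · rw [norm_smul, Real.norm_of_nonneg (inv_nonneg.2 hr.le)]
    exact inv_mul_le_one_of_le₀ hT hr.le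
  · rw [smul_apply, smul_eq_mul, le_inv_mul_iff₀ hr, mul_comm]
    exact hTv

lemma lipschitzWith_one_apply {M : Type*} [PseudoMetricSpace M] {G : M → X →L[ℝ] ℝ}
    {v : X} (hG : ∀ p q, ‖G p - G q‖ ≤ dist p q) (hv : ‖v‖ ≤ 1) :
    LipschitzWith 1 fun p => G p v :=
  LipschitzWith.of_dist_le_mul fun p q => by
    rw [Real.dist_eq, ← sub_apply, NNReal.coe_one, one_mul]
    exact ((G p - G q).le_opNorm v).trans (by nlinarith [norm_nonneg (G p - G q), hG p q])

end Dual

section Sequences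

variable {M X ι : Type*} [MetricSpace M] [NormedAddCommGroup X] [NormedSpace ℝ X]
  {l : Filter ι} {g : ι → M → X →L[ℝ] ℝ} {v : X} {xs : X →L[ℝ] ℝ} {f : M → ℝ}

lemma tendsto_sub_of_tendsto_slack
    (hud : ∃ θ : ℝ, 0 < θ ∧ ∀ p q : M, p ≠ q → θ ≤ dist p q)
    (hbd : ∃ D : ℝ, ∀ p q : M, dist p q ≤ D)
    (hfrechet : SmulyanCondition v xs)
    (hgL : ∀ k p q, ‖g k p - g k q‖ ≤ dist p q) {a b : ι → M}
    (hf : ∀ k, f (a k) - f (b k) = dist (a k) (b k))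
    (hslack : Tendsto (fun k => slack (fun p => g k p v) (a k) (b k)) l (𝓝 0)) :
    Tendsto (fun k => (g k (a k) - f (a k) • xs) - (g k (b k) - f (b k) • xs)) l (𝓝 0) := by
  obtain ⟨θ, hθ, hθd⟩ := hud
  obtain ⟨D, hD, hDd⟩ : ∃ D, 0 < D ∧ ∀ p q : M, dist p q ≤ D :=
    let ⟨D, hD⟩ := hbd
    ⟨max D 1, by positivity, fun p q => (hD p q).trans (le_max_left _ _)⟩
  refine Metric.tendsto_nhds.2 fun ε hε => ?_
  obtain ⟨δ, hδ, hF⟩ := hfrechet (ε / (2 * D)) (by positivity)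
  filter_upwards [hslack.eventually (gt_mem_nhds (mul_pos hδ hθ))] with k hk
  have hTv : (1 - δ) * dist (a k) (b k) ≤ (g k (a k) - g k (b k)) v := by
    obtain hab | hab := eq_or_ne (a k) (b k)
    · simp [hab]
    -- uniform discreteness turns the absolute bound `δ θ` into the relative one `δ d(a, b)`
    have := mul_le_mul_of_nonneg_left (hθd _ _ hab) hδ.le
    rw [slack] at hk
    rw [sub_apply]
    linarith
  rw [dist_zero_right]
  calc _ = ‖g k (a k) - g k (b k) - dist (a k) (b k) • xs‖ := by
        rw [← hf k]; congr 1; module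
    _ ≤ ε / (2 * D) * dist (a k) (b k) := norm_sub_smul_le_mul hF (hgL k _ _) hTv
    _ ≤ ε / (2 * D) * D := by gcongr; exact hDd _ _
    _ < ε := by field_simp; linarith

lemma tendsto_sub_of_mem_endpoints {κ : Type*} [Fintype κ] {x y : κ → M} {lam : κ → ℝ}
    (hud : ∃ θ : ℝ, 0 < θ ∧ ∀ p q : M, p ≠ q → θ ≤ dist p q)
    (hbd : ∃ D : ℝ, ∀ p q : M, dist p q ≤ D)
    (hxy : ∀ i, x i ≠ y i) (hlam : ∀ i, 0 < lam i) (hlam1 : ∑ i, lam i = 1)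
    (hf : LipschitzWith 1 f) (hfi : ∀ i, f (x i) - f (y i) = dist (x i) (y i))
    (halpha : TightCycleConnected x y)
    (hv : ‖v‖ ≤ 1)
    (hfrechet : SmulyanCondition v xs)
    (hgL : ∀ k p q, ‖g k p - g k q‖ ≤ dist p q)
    (hS : Tendsto (fun k => ∑ i, lam i * ((g k (x i) - g k (y i)) v / dist (x i) (y i)))
      l (𝓝 1))
    {a b : ι → M} (ha : ∀ k, a k ∈ endpoints x y) (hb : ∀ k, b k ∈ endpoints x y) :
    Tendsto (fun k => (g k (a k) - f (a k) • xs) - (g k (b k) - f (b k) • xs)) l (𝓝 0) := by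
  have hφ k := lipschitzWith_one_apply (hgL k) hv
  have hedge :=
    tendsto_slack_of_tendsto_sum hxy hlam hlam1 hφ (by simpa only [sub_apply] using hS)
  let R : M → M → Prop := fun c d =>
    Tendsto (fun k => (g k c - f c • xs) - (g k d - f d • xs)) l (𝓝 0)
  have hcross : ∀ m i, IsTightCycle x y m i → ∀ r < m, R (x (i r)) (y (i ((r + 1) % m))) := by
    intro m i hc r hr
    have hf_cross : slack f (x (i r)) (y (i ((r + 1) % m))) = 0 :=
      le_antisymm ((hc.slack_le_sum hf hr).trans_eq
        (sum_eq_zero fun s _ => slack_eq_zero_iff.2 (hfi (i s)))) (slack_nonneg hf _ _)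
    have hg_cross := squeeze_zero (fun k => slack_nonneg (hφ k) _ _)
      (fun k => hc.slack_le_sum (hφ k) hr)
      (by simpa using tendsto_finsetSum (range m) fun s _ => hedge (i s))
    exact tendsto_sub_of_tendsto_slack hud hbd hfrechet hgL
      (fun _ => slack_eq_zero_iff.1 hf_cross) hg_cross
  have hrel : ∀ c ∈ endpoints x y, ∀ d ∈ endpoints x y, R c d := fun c hc d hd =>
    rel_of_mem_endpoints (equivalence_tendsto_sub l fun k p => g k p - f p • xs) halpha
      (fun j => tendsto_sub_of_tendsto_slack hud hbd hfrechet hgL (fun _ => hfi j) (hedge j))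
      hcross hc hd
  exact tendsto_apply_of_finite (F := fun k (q : M × M) =>
      (g k q.1 - f q.1 • xs) - (g k q.2 - f q.2 • xs))
    ((endpoints_finite x y).prod (endpoints_finite x y)) (fun q hq => hrel q.1 hq.1 q.2 hq.2)
    (c := fun k => (a k, b k)) fun k => ⟨ha k, hb k⟩

lemma tendsto_sub_of_dist_add_dist_eq
    (hud : ∃ θ : ℝ, 0 < θ ∧ ∀ p q : M, p ≠ q → θ ≤ dist p q)
    (hbd : ∃ D : ℝ, ∀ p q : M, dist p q ≤ D)
    (hf : LipschitzWith 1 f) (hv : ‖v‖ ≤ 1) (hxsv : xs v = 1)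
    (hfrechet : SmulyanCondition v xs)
    (hgL : ∀ k p q, ‖g k p - g k q‖ ≤ dist p q) {p s t : ι → M}
    (hft : ∀ k, f (t k) - f (s k) = dist (t k) (s k))
    (hbtw : ∀ k, dist (s k) (p k) + dist (t k) (p k) = dist (s k) (t k))
    (hts : Tendsto (fun k => (g k (t k) - f (t k) • xs) - (g k (s k) - f (s k) • xs))
      l (𝓝 0)) :
    Tendsto (fun k => (g k (p k) - f (p k) • xs) - (g k (s k) - f (s k) • xs)) l (𝓝 0) := by
  have hφ k := lipschitzWith_one_apply (hgL k) hv
  have hslack_ts : Tendsto (fun k => slack (fun q => g k q v) (t k) (s k)) l (𝓝 0) := by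
    have hev := (((ContinuousLinearMap.apply ℝ ℝ v).continuous.tendsto 0).comp hts).neg
    rw [map_zero, neg_zero] at hev
    refine hev.congr fun k => ?_
    simp only [Function.comp_apply, ContinuousLinearMap.apply_apply, sub_apply, smul_apply,
      smul_eq_mul, hxsv, slack, ← hft k]
    ring
  have hfps k : f (p k) - f (s k) = dist (p k) (s k) :=
    slack_eq_zero_iff.1 <| le_antisymm ((slack_le_of_dist_add_dist_eq hf (hbtw k)).trans_eq
      (slack_eq_zero_iff.2 (hft k))) (slack_nonneg hf _ _)
  exact tendsto_sub_of_tendsto_slack hud hbd hfrechet hgL hfps <|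
    squeeze_zero (fun k => slack_nonneg (hφ k) _ _)
      (fun k => slack_le_of_dist_add_dist_eq (hφ k) (hbtw k)) hslack_ts


theorem tendsto_sub_smul_of_tendsto_sum {κ : Type*} [Fintype κ]
    (hud : ∃ θ : ℝ, 0 < θ ∧ ∀ p q : M, p ≠ q → θ ≤ dist p q)
    (hbd : ∃ D : ℝ, ∀ p q : M, dist p q ≤ D)
    (z : M) {x y : κ → M} (hxy : ∀ i, x i ≠ y i)
    {lam : κ → ℝ} (hlam : ∀ i, 0 < lam i) (hlam1 : ∑ i, lam i = 1)
    (hf : LipschitzWith 1 f) (hf0 : f z = 0) (hfi : ∀ i, f (x i) - f (y i) = dist (x i) (y i))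
    (halpha : TightCycleConnected x y)
    (hbeta : ∀ p : M, ∃ s t : M, s ∈ endpoints x y ∧ t ∈ endpoints x y ∧
      f t - f s = dist t s ∧ dist s p + dist t p = dist s t)
    (hv : ‖v‖ ≤ 1) (hxsv : xs v = 1)
    (hfrechet : SmulyanCondition v xs)
    (hg0 : ∀ k, g k z = 0) (hgL : ∀ k p q, ‖g k p - g k q‖ ≤ dist p q)
    (hS : Tendsto (fun k => ∑ i, lam i * ((g k (x i) - g k (y i)) v / dist (x i) (y i)))
      l (𝓝 1))
    (p : ι → M) : Tendsto (fun k => g k (p k) - f (p k) • xs) l (𝓝 0) := by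
  choose s t hs ht hft hbtw using hbeta
  have hkey {a b : ι → M} := tendsto_sub_of_mem_endpoints (a := a) (b := b) hud hbd hxy hlam
    hlam1 hf hfi halpha hv hfrechet hgL hS
  have hnear (q : ι → M) := tendsto_sub_of_dist_add_dist_eq hud hbd hf hv hxsv hfrechet hgL
    (fun k => hft (q k)) (fun k => hbtw (q k)) (hkey (fun k => ht (q k)) fun k => hs (q k))
  refine (((hnear p).add (hkey (fun k => hs (p k)) fun _ => hs z)).sub
    (hnear fun _ => z)).congr' ?_ |>.trans_eq (by simp)
  refine Eventually.of_forall fun k => ?_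
  simp only [hg0, hf0, zero_smul, sub_zero]
  abel

end Sequences

theorem stmt_15_general {M : Type*} [MetricSpace M]
    (hud : ∃ θ : ℝ, 0 < θ ∧ ∀ p q : M, p ≠ q → θ ≤ dist p q)
    (hbd : ∃ D : ℝ, ∀ p q : M, dist p q ≤ D)
    (z : M) (n : ℕ) (x y : Fin n → M) (hxy : ∀ i : Fin n, x i ≠ y i)
    (lam : Fin n → ℝ) (hlam : ∀ i, 0 < lam i) (hlam1 : ∑ i, lam i = 1)
    (f : M → ℝ) (hf : LipschitzWith 1 f) (hf0 : f z = 0)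
    (hfi : ∀ i : Fin n, f (x i) - f (y i) = dist (x i) (y i))
    (halpha : ∀ j k : Fin n, j ≠ k →
      ∃ (m : ℕ) (i : ℕ → Fin n), 1 ≤ m ∧
        (∀ r < m, ∀ s < m, i r = i s → r = s) ∧
        (∃ r < m, i r = j) ∧ (∃ r < m, i r = k) ∧
        ∑ r ∈ Finset.range m, dist (x (i r)) (y (i r)) =
          ∑ r ∈ Finset.range m, dist (x (i r)) (y (i ((r + 1) % m))))
    (hbeta : ∀ p : M, ∃ s t : M, s ≠ t ∧
      (∃ i : Fin n, s = x i ∨ s = y i) ∧ (∃ i : Fin n, t = x i ∨ t = y i) ∧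
      f t - f s = dist t s ∧ dist s p + dist t p = dist s t)
    {X : Type*} [NormedAddCommGroup X] [NormedSpace ℝ X]
    (v : X) (hv : ‖v‖ = 1)
    (xs : X →L[ℝ] ℝ) (hxsv : xs v = 1)
    (hfrechet : ∀ ε : ℝ, 0 < ε → ∃ δ : ℝ, 0 < δ ∧
      ∀ vs : X →L[ℝ] ℝ, ‖vs‖ ≤ 1 → 1 - δ ≤ vs v → ‖vs - xs‖ ≤ ε) :
    ∀ ε : ℝ, 0 < ε → ∃ δ : ℝ, 0 < δ ∧
      ∀ g : M → (X →L[ℝ] ℝ), g z = 0 →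
        (∀ p q : M, ‖g p - g q‖ ≤ dist p q) →
        1 - δ < ∑ i, lam i * ((g (x i) - g (y i)) v / dist (x i) (y i)) →
        ∀ p : M, ‖g p - f p • xs‖ ≤ ε := by
  intro ε hε
  by_contra! hbad
  choose g hg0 hgL hS p hp using fun k : ℕ => hbad (1 / (k + 1)) Nat.one_div_pos_of_nat
  have hS' : Tendsto (fun k => ∑ i, lam i * ((g k (x i) - g k (y i)) v / dist (x i) (y i)))
      atTop (𝓝 1) :=
    tendsto_of_tendsto_of_tendsto_of_le_of_le
      (by simpa using
        (tendsto_const_nhds (x := (1 : ℝ))).sub tendsto_one_div_add_atTop_nhds_zero_nat)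
      tendsto_const_nhds (fun k => (hS k).le) fun k => by
        simpa only [sub_apply] using
          sum_le_one hxy hlam hlam1 (lipschitzWith_one_apply (hgL k) hv.le)
  have hlim := tendsto_sub_smul_of_tendsto_sum hud hbd z hxy hlam hlam1 hf hf0 hfi
    (fun j k hjk => let ⟨m, i, _, _, hj, hk, hc⟩ := halpha j k hjk; ⟨m, i, hj, hk, hc⟩)
    (fun p => let ⟨s, t, _, hs, ht, hft, hbtw⟩ := hbeta p; ⟨s, t, hs, ht, hft, hbtw⟩)
    hv.le hxsv hfrechet hg0 hgL hS' p
  obtain ⟨k, hk⟩ := (hlim.norm.eventually (gt_mem_nhds (by simpa using hε))).exists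
  exact (hp k).not_gt hk

/-- Theorem 4.1(b) of the paper in dual form: if `μ = Σ λᵢ m_{xᵢ,yᵢ}` is a finitely supported
point of Fréchet differentiability of `ℱ(M)` with derivative `f` (conditions (α) and (β)) and
`v` is a point of Fréchet differentiability of `X` with derivative `xs`, then near-norming
functionals for `μ ⊗ v` in `Lip₀(M, X*) = (ℱ(M) ⊗̂_π X)*` are uniformly close to `f ⊗ xs`. -/
theorem stmt_15 {M : Type*} [MetricSpace M]
    (hud : ∃ θ : ℝ, 0 < θ ∧ ∀ p q : M, p ≠ q → θ ≤ dist p q)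
    (hbd : ∃ D : ℝ, ∀ p q : M, dist p q ≤ D)
    (z : M) (n : ℕ) (x y : Fin n → M) (hxy : ∀ i : Fin n, x i ≠ y i)
    (lam : Fin n → ℝ) (hlam : ∀ i, 0 < lam i) (hlam1 : ∑ i, lam i = 1)
    (f : M → ℝ) (hf : LipschitzWith 1 f) (hf0 : f z = 0)
    (hfi : ∀ i : Fin n, f (x i) - f (y i) = dist (x i) (y i))
    (halpha : ∀ j k : Fin n, j ≠ k →
      ∃ (m : ℕ) (i : ℕ → Fin n), 1 ≤ m ∧
        (∀ r < m, ∀ s < m, i r = i s → r = s) ∧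
        (∃ r < m, i r = j) ∧ (∃ r < m, i r = k) ∧
        ∑ r ∈ Finset.range m, dist (x (i r)) (y (i r)) =
          ∑ r ∈ Finset.range m, dist (x (i r)) (y (i ((r + 1) % m))))
    (hbeta : ∀ p : M, ∃ s t : M, s ≠ t ∧
      (∃ i : Fin n, s = x i ∨ s = y i) ∧ (∃ i : Fin n, t = x i ∨ t = y i) ∧
      f t - f s = dist t s ∧ dist s p + dist t p = dist s t)
    {X : Type*} [NormedAddCommGroup X] [NormedSpace ℝ X]
    (v : X) (hv : ‖v‖ = 1)
    (xs : X →L[ℝ] ℝ) (hxs : ‖xs‖ = 1) (hxsv : xs v = 1)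
    (hfrechet : ∀ ε : ℝ, 0 < ε → ∃ δ : ℝ, 0 < δ ∧
      ∀ vs : X →L[ℝ] ℝ, ‖vs‖ ≤ 1 → 1 - δ ≤ vs v → ‖vs - xs‖ ≤ ε) :
    ∀ ε : ℝ, 0 < ε → ∃ δ : ℝ, 0 < δ ∧
      ∀ g : M → (X →L[ℝ] ℝ), g z = 0 →
        (∀ p q : M, ‖g p - g q‖ ≤ dist p q) →
        1 - δ < ∑ i, lam i * ((g (x i) - g (y i)) v / dist (x i) (y i)) →
        ∀ p : M, ‖g p - f p • xs‖ ≤ ε :=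
  stmt_15_general hud hbd z n x y hxy lam hlam hlam1 f hf hf0 hfi halpha hbeta v hv xs hxsv hfrechet
end

section
/- Let X be a real normed space and let (x_n)_{n∈ℕ} be a sequence in the unit sphere of X. The following are equivalent: (i) for every n ∈ ℕ and all real numbers a_1, …, a_n one has ‖Σ_{k=1}^n a_k x_k‖ = Σ_{k=1}^n |a_k| (i.e., (x_n) is isometrically equivalent to the unit vector basis of ℓ₁); (ii) for every sequence σ : ℕ → {−1, 1} there exists a continuous linear functional f on X with ‖f‖ = 1 and f(x_n) = σ(n) for every n ∈ ℕ. -/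
/-- Lemma 2.4 of the paper: a sequence in the unit sphere of a real normed space is
isometrically equivalent to the `ℓ₁` basis iff every sequence of signs is simultaneously
normed by a single norm-one functional. -/
theorem stmt_16 {X : Type*} [NormedAddCommGroup X] [NormedSpace ℝ X]
    (x : ℕ → X) (hx : ∀ n : ℕ, ‖x n‖ = 1) :
    (∀ (n : ℕ) (a : ℕ → ℝ),
        ‖∑ k ∈ Finset.range n, a k • x k‖ = ∑ k ∈ Finset.range n, |a k|) ↔
    (∀ σ : ℕ → ℝ, (∀ n, σ n = 1 ∨ σ n = -1) →
      ∃ f : X →L[ℝ] ℝ, ‖f‖ = 1 ∧ ∀ n : ℕ, f (x n) = σ n) := by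
  constructor
  · intro h σ hσ
    have habs : ∀ n, |σ n| = 1 := by
      intro n; rcases hσ n with h | h <;> simp [h]
    -- key: for finsupp c, ‖linearCombination x c‖ = ∑ |c k|
    have key : ∀ c : ℕ →₀ ℝ,
        ‖Finsupp.linearCombination ℝ x c‖ = ∑ k ∈ c.support, |c k| := by
      intro c
      obtain ⟨n, hn⟩ : ∃ n, c.support ⊆ Finset.range n := by
        rcases c.support.bddAbove with ⟨m, hm⟩
        exact ⟨m + 1, fun k hk => Finset.mem_range.2 (Nat.lt_succ_of_le (hm hk))⟩
      have h1 : Finsupp.linearCombination ℝ x c = ∑ k ∈ Finset.range n, c k • x k := by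
        rw [Finsupp.linearCombination_apply,
          Finsupp.sum_of_support_subset c hn (fun i a => a • x i) (by simp)]
      have h2 : ∑ k ∈ c.support, |c k| = ∑ k ∈ Finset.range n, |c k| := by
        refine Finset.sum_subset hn ?_
        intro k _ hk
        simp [Finsupp.notMem_support_iff.1 hk]
      rw [h1, h2, h n]
    -- linear independence
    have hli : LinearIndependent ℝ x := by
      rw [linearIndependent_iff]
      intro c hc
      have := key c
      rw [hc, norm_zero] at this
      ext k
      by_contra hk
      have hk' : k ∈ c.support := Finsupp.mem_support_iff.2 (by simpa using hk)
      have : |c k| ≤ 0 := by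
        rw [this]
        exact Finset.single_le_sum (fun i _ => abs_nonneg (c i)) hk'
      exact hk (by simpa using abs_nonpos_iff.1 this)
    set p : Subspace ℝ X := Submodule.span ℝ (Set.range x)
    -- functional on span
    let g : p →ₗ[ℝ] ℝ := (Finsupp.linearCombination ℝ σ).comp hli.repr
    have hg_bound : ∀ y : p, ‖g y‖ ≤ 1 * ‖y‖ := by
      intro y
      have hy : Finsupp.linearCombination ℝ x (hli.repr y) = (y : X) :=
        hli.linearCombination_repr y
      have : ‖g y‖ ≤ ∑ k ∈ (hli.repr y).support, |(hli.repr y) k| := by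
        simp only [g, LinearMap.comp_apply, Finsupp.linearCombination_apply, Finsupp.sum]
        refine (norm_sum_le _ _).trans ?_
        apply Finset.sum_le_sum
        intro k _
        rw [Real.norm_eq_abs, smul_eq_mul, abs_mul, habs, mul_one]
      calc ‖g y‖ ≤ ∑ k ∈ (hli.repr y).support, |(hli.repr y) k| := this
        _ = ‖Finsupp.linearCombination ℝ x (hli.repr y)‖ := (key _).symm
        _ = ‖(y : X)‖ := by rw [hy]
        _ = 1 * ‖y‖ := by rw [one_mul]; rfl
    let gc : p →L[ℝ] ℝ := LinearMap.mkContinuous g 1 hg_bound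
    obtain ⟨f, hfe, hfn⟩ := exists_extension_norm_eq p gc
    have hmem : ∀ n, x n ∈ p := fun n => Submodule.subset_span ⟨n, rfl⟩
    have hfx : ∀ n, f (x n) = σ n := by
      intro n
      have := hfe ⟨x n, hmem n⟩
      rw [this]
      show g ⟨x n, hmem n⟩ = σ n
      have hrepr : hli.repr ⟨x n, hmem n⟩ = Finsupp.single n 1 := by
        apply hli.repr_eq
        simp
      simp [g, hrepr]
    refine ⟨f, ?_, hfx⟩
    have hle : ‖f‖ ≤ 1 := by
      rw [hfn]
      exact LinearMap.mkContinuous_norm_le g zero_le_one hg_bound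
    have hge : 1 ≤ ‖f‖ := by
      have := f.le_opNorm (x 0)
      rw [hfx 0, hx 0, mul_one] at this
      calc 1 = |σ 0| := (habs 0).symm
        _ = ‖f (x 0)‖ := by rw [hfx 0]; rfl
        _ ≤ ‖f‖ * ‖x 0‖ := f.le_opNorm _
        _ = ‖f‖ := by rw [hx 0, mul_one]
    linarith
  · intro h n a
    apply le_antisymm
    · calc ‖∑ k ∈ Finset.range n, a k • x k‖ ≤ ∑ k ∈ Finset.range n, ‖a k • x k‖ :=
        norm_sum_le _ _
      _ = ∑ k ∈ Finset.range n, |a k| := by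
        apply Finset.sum_congr rfl
        intro k _
        rw [norm_smul, hx, mul_one, Real.norm_eq_abs]
    · set σ : ℕ → ℝ := fun k => if 0 ≤ a k then 1 else -1 with hσdef
      have hσ : ∀ k, σ k = 1 ∨ σ k = -1 := by
        intro k; by_cases hk : 0 ≤ a k <;> simp [σ, hk]
      obtain ⟨f, hfn, hfx⟩ := h σ hσ
      have : f (∑ k ∈ Finset.range n, a k • x k) = ∑ k ∈ Finset.range n, |a k| := by
        rw [map_sum]
        apply Finset.sum_congr rfl
        intro k _
        rw [map_smul, hfx, smul_eq_mul]
        by_cases hk : 0 ≤ a k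
        · simp [σ, hk, abs_of_nonneg hk]
        · push_neg at hk
          simp [σ, not_le.2 hk, abs_of_neg hk]
      calc ∑ k ∈ Finset.range n, |a k| = f (∑ k ∈ Finset.range n, a k • x k) := this.symm
        _ ≤ ‖f (∑ k ∈ Finset.range n, a k • x k)‖ := le_abs_self _
        _ ≤ ‖f‖ * ‖∑ k ∈ Finset.range n, a k • x k‖ := f.le_opNorm _
        _ = ‖∑ k ∈ Finset.range n, a k • x k‖ := by rw [hfn, one_mul]
end

section
/- Let β : ℕ → ℕ → ℝ satisfy β j j = 0 for all j and have all cyclic sums nonnegative, i.e. β i_1 i_2 + β i_2 i_3 + ⋯ + β i_{m-1} i_m + β i_m i_1 ≥ 0 for every finite sequence i_1, …, i_m in ℕ. For j, k ∈ ℕ define B j k as the infimum of β i_1 i_2 + β i_2 i_3 + ⋯ + β i_{m-1} i_m over all finite sequences i_1, …, i_m of natural numbers with i_1 = j and i_m = k. Then: (a) −β k j ≤ B j k ≤ β j k for all j, k (in particular the infimum is finite and B j j = 0); and (b) B j k ≤ B j l + B l k for all j, k, l ∈ ℕ. -/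
/-- Properties of the path-infimum function `B` from the proof of Lemma 2.2 of the paper:
`−β k j ≤ B j k ≤ β j k`, `B j j = 0`, and the triangle inequality `B j k ≤ B j l + B l k`. -/
theorem stmt_17 (β : ℕ → ℕ → ℝ) (hβ : ∀ j, β j j = 0)
    (hcyc : ∀ m : ℕ, 1 ≤ m → ∀ i : ℕ → ℕ,
      0 ≤ ∑ r ∈ Finset.range m, β (i r) (i ((r + 1) % m)))
    (B : ℕ → ℕ → ℝ)
    (hB : ∀ j k : ℕ, B j k = sInf {s : ℝ | ∃ (m : ℕ) (i : ℕ → ℕ),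
      i 0 = j ∧ i m = k ∧ s = ∑ r ∈ Finset.range m, β (i r) (i (r + 1))}) :
    (∀ j k : ℕ, -β k j ≤ B j k ∧ B j k ≤ β j k) ∧
    (∀ j : ℕ, B j j = 0) ∧
    (∀ j k l : ℕ, B j k ≤ B j l + B l k) := by
  set S : ℕ → ℕ → Set ℝ := fun j k => {s : ℝ | ∃ (m : ℕ) (i : ℕ → ℕ),
      i 0 = j ∧ i m = k ∧ s = ∑ r ∈ Finset.range m, β (i r) (i (r + 1))} with hS
  -- membership of β j k
  have hmem : ∀ j k, β j k ∈ S j k := by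
    intro j k
    refine ⟨1, fun r => if r = 0 then j else k, by simp, by simp, by simp⟩
  -- lower bound
  have hlb : ∀ j k, ∀ s ∈ S j k, -β k j ≤ s := by
    rintro j k s ⟨m, i, h0, hm, rfl⟩
    have := hcyc (m + 1) (by omega) i
    have hsum : ∑ r ∈ Finset.range (m + 1), β (i r) (i ((r + 1) % (m + 1)))
        = (∑ r ∈ Finset.range m, β (i r) (i (r + 1))) + β k j := by
      rw [Finset.sum_range_succ]
      congr 1
      · apply Finset.sum_congr rfl
        intro r hr
        rw [Nat.mod_eq_of_lt (by simpa using Finset.mem_range.mp hr)]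
      · rw [Nat.mod_self, h0, hm]
    rw [hsum] at this
    linarith
  have hbdd : ∀ j k, BddBelow (S j k) := fun j k => ⟨-β k j, hlb j k⟩
  have hne : ∀ j k, (S j k).Nonempty := fun j k => ⟨β j k, hmem j k⟩
  have hBlb : ∀ j k, -β k j ≤ B j k := by
    intro j k; rw [hB]; exact le_csInf (hne j k) (hlb j k)
  have hBub : ∀ j k, B j k ≤ β j k := by
    intro j k; rw [hB]; exact csInf_le (hbdd j k) (hmem j k)
  refine ⟨fun j k => ⟨hBlb j k, hBub j k⟩, ?_, ?_⟩
  · intro j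
    have h1 : B j j ≤ 0 := by
      rw [hB]
      exact csInf_le (hbdd j j) ⟨0, fun _ => j, rfl, rfl, by simp⟩
    have h2 : -β j j ≤ B j j := hBlb j j
    rw [hβ j] at h2
    linarith
  · intro j k l
    -- concatenation: ∀ s1 ∈ S j l, ∀ s2 ∈ S l k, s1 + s2 ∈ S j k
    have hcat : ∀ s1 ∈ S j l, ∀ s2 ∈ S l k, s1 + s2 ∈ S j k := by
      rintro s1 ⟨m1, i1, h10, h1m, rfl⟩ s2 ⟨m2, i2, h20, h2m, rfl⟩
      refine ⟨m1 + m2, fun r => if r < m1 then i1 r else i2 (r - m1), ?_, ?_, ?_⟩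
      · by_cases h : 0 < m1
        · simp [h, h10]
        · have : m1 = 0 := by omega
          simp [this, h20, ← h1m, this, h10]
      · have : ¬ (m1 + m2 < m1) := by omega
        simp [this, h2m]
      · rw [Finset.sum_range_add]
        congr 1
        · apply Finset.sum_congr rfl
          intro r hr
          have hr1 : r < m1 := Finset.mem_range.mp hr
          by_cases h : r + 1 < m1
          · simp [hr1, h]
          · have : r + 1 = m1 := by omega
            simp [hr1, this, h20, h1m]
        · apply Finset.sum_congr rfl
          intro r _
          have h1 : ¬ (m1 + r < m1) := by omega
          have h2 : ¬ (m1 + r + 1 < m1) := by omega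
          simp [h1, h2, Nat.add_sub_cancel_left, show m1 + r + 1 - m1 = r + 1 by omega]
    have key : ∀ s1 ∈ S j l, B j k - s1 ≤ B l k := by
      intro s1 hs1
      rw [hB l k]
      apply le_csInf (hne l k)
      intro s2 hs2
      have : B j k ≤ s1 + s2 := by
        rw [hB j k]; exact csInf_le (hbdd j k) (hcat s1 hs1 s2 hs2)
      linarith
    have : B j k - B l k ≤ B j l := by
      rw [hB j l]
      apply le_csInf (hne j l)
      intro s1 hs1
      have := key s1 hs1
      linarith
    linarith
end
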